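/- arXiv:math/0412310 — 6 statements merged into one kernel-verified Lean document; each statement's English description precedes it below -/
import Mathlib

section
/- If δ ∈ R^0 is an isotropic root, ξ ∈ R is a root, and (ξ,δ) ≠ 0, then ξ + nδ ∈ R for infinitely many integers n, i.e. the set {n ∈ ℤ : ξ + nδ ∈ R} is infinite. -/
theorem lemma_3_3
    {F L : Type*} [Field F] [CharZero F] [LieRing L] [LieAlgebra F L]
    (H : LieSubalgebra F L)
    (habelian : ∀ x y : ↥H, ⁅x, y⁆ = 0)
    -- root spaces with respect to H
    (Lrt : Module.Dual F ↥H → Submodule F L)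
    (hLrt : ∀ ξ (x : L), x ∈ Lrt ξ ↔ ∀ h : ↥H, ⁅(h : L), x⁆ = ξ h • x)
    -- root space decomposition L = ⊕_{ξ} L_ξ
    (hdecomp : ⨆ ξ, Lrt ξ = ⊤) (hindep : iSupIndep Lrt)
    -- the set of roots
    (R : Set (Module.Dual F ↥H))
    (hR : R = {ξ | Lrt ξ ≠ ⊥})
    -- a symmetric invariant bilinear form on L
    (B : LinearMap.BilinForm F L)
    (hBsym : ∀ x y : L, B x y = B y x)
    (hBinv : ∀ x y z : L, B ⁅x, y⁆ z = B x ⁅y, z⁆)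
    -- (A1) H is self-centralizing
    (hA1 : Lrt 0 = H.toSubmodule)
    -- (A2) B is nondegenerate
    (hA2 : B.Nondegenerate)
    -- (A3) every root is represented by some t_ξ ∈ H
    (t : Module.Dual F ↥H → ↥H)
    (hA3 : ∀ ξ ∈ R, ∀ h : ↥H, ξ h = B (t ξ) h)
    -- the induced form, extended bilinearly to the span of R
    (form : LinearMap.BilinForm F (Module.Dual F ↥H))
    (hform : ∀ ξ ∈ R, ∀ η ∈ R, form ξ η = B (t ξ : L) (t η : L))
    -- (A4) ad x is locally nilpotent for x in an anisotropic root space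
    (hA4 : ∀ α ∈ R, form α α ≠ 0 → ∀ x ∈ Lrt α, ∀ y : L,
      ∃ n : ℕ, ((LieAlgebra.ad F L x) ^ n) y = 0)
    -- (A5) R^× is irreducible
    (hA5 : ∀ R1 R2 : Set (Module.Dual F ↥H), {ξ | ξ ∈ R ∧ form ξ ξ ≠ 0} = R1 ∪ R2 →
      (∀ ξ ∈ R1, ∀ η ∈ R2, form ξ η = 0) → R1 = ∅ ∨ R2 = ∅)
    :
    ∀ δ ∈ R, form δ δ = 0 → ∀ ξ ∈ R, form ξ δ ≠ 0 →
      {n : ℤ | ξ + n • δ ∈ R}.Infinite := by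
  intro δ hδ hδδ ξ hξ hξδ
  -- bracket of root vectors lands in the sum root space
  have hbr : ∀ (μ ν : Module.Dual F ↥H) (x y : L), x ∈ Lrt μ → y ∈ Lrt ν →
      ⁅x, y⁆ ∈ Lrt (μ + ν) := by
    intro μ ν x y hx hy
    rw [hLrt]
    intro h
    rw [leibniz_lie, (hLrt μ x).1 hx h, (hLrt ν y).1 hy h, smul_lie, lie_smul,
      LinearMap.add_apply, add_smul]
  -- orthogonality of root spaces
  have horth : ∀ (μ ν : Module.Dual F ↥H) (x y : L), x ∈ Lrt μ → y ∈ Lrt ν →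
      μ + ν ≠ 0 → B x y = 0 := by
    intro μ ν x y hx hy hne0
    obtain ⟨h, hh⟩ : ∃ h : ↥H, (μ + ν) h ≠ 0 := by
      by_contra hc
      push_neg at hc
      exact hne0 (LinearMap.ext hc)
    have h2 : B ⁅x, (h:L)⁆ y = B x ⁅(h:L), y⁆ := hBinv _ _ _
    rw [← lie_skew, (hLrt μ x).1 hx h, (hLrt ν y).1 hy h] at h2
    simp only [map_neg, map_smul, LinearMap.neg_apply, LinearMap.smul_apply, smul_eq_mul] at h2
    have hmul : ((μ + ν) h) * B x y = 0 := by
      rw [LinearMap.add_apply]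
      linear_combination -h2
    exact (mul_eq_zero.mp hmul).resolve_left hh
  -- perpendicularity criterion
  have hperp : ∀ (μ : Module.Dual F ↥H) (x : L), x ∈ Lrt μ →
      (∀ y ∈ Lrt (-μ), B x y = 0) → x = 0 := by
    intro μ x hx hker
    apply hA2.1
    intro y
    have hle : (⨆ ν, Lrt ν) ≤ LinearMap.ker (B x) := by
      apply iSup_le
      intro ν z hz
      rw [LinearMap.mem_ker]
      by_cases hcase : ν = -μ
      · exact hker z (hcase ▸ hz)
      · refine horth μ ν x z hx hz ?_
        intro hc
        exact hcase (by rw [eq_neg_iff_add_eq_zero, add_comm]; exact hc)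
    have hy : y ∈ ⨆ ν, Lrt ν := by rw [hdecomp]; trivial
    exact hle hy
  -- pick e ∈ L_δ nonzero
  have hδR : Lrt δ ≠ ⊥ := by rw [hR] at hδ; exact hδ
  obtain ⟨e, he, hene⟩ := Submodule.exists_mem_ne_zero_of_ne_bot hδR
  -- pick f ∈ L_{-δ} with B e f ≠ 0
  obtain ⟨f, hf, hc0⟩ : ∃ f ∈ Lrt (-δ), B e f ≠ 0 := by
    by_contra hcon
    push_neg at hcon
    exact hene (hperp δ e he hcon)
  -- values of ξ and δ at t δ
  have hξt : ξ (t δ) = form ξ δ := (hA3 ξ hξ (t δ)).trans (hform ξ hξ δ hδ).symm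
  have hδt : δ (t δ) = 0 := ((hA3 δ hδ (t δ)).trans (hform δ hδ δ hδ).symm).trans hδδ
  -- the bracket [e, f] equals B e f • t δ
  have hef : ⁅e, f⁆ = (B e f) • ((t δ : L)) := by
    have hw0 : ⁅e, f⁆ - (B e f) • ((t δ : L)) ∈ Lrt 0 := by
      rw [hA1]
      refine Submodule.sub_mem _ ?_ (Submodule.smul_mem _ _ (t δ).2)
      have hb := hbr δ (-δ) e f he hf
      rw [add_neg_cancel, hA1] at hb
      exact hb
    have hz : ∀ y ∈ Lrt (-(0 : Module.Dual F ↥H)),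
        B (⁅e, f⁆ - (B e f) • ((t δ : L))) y = 0 := by
      intro y hy
      rw [neg_zero, hA1] at hy
      have hfy : ⁅f, y⁆ = δ ⟨y, hy⟩ • f := by
        have h1 := (hLrt (-δ) f).1 hf ⟨y, hy⟩
        rw [← lie_skew, h1]
        simp
      have hBy : B ⁅e, f⁆ y = (B e f) * B (t δ : L) y := by
        rw [hBinv, hfy, map_smul, smul_eq_mul, hA3 δ hδ ⟨y, hy⟩]
        ring
      rw [map_sub, LinearMap.sub_apply, hBy, map_smul, LinearMap.smul_apply, smul_eq_mul]
      ring
    have h0 := hperp 0 _ hw0 hz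
    rwa [sub_eq_zero] at h0
  -- action of t δ on L_{ξ + m δ}
  have hact : ∀ (m : ℤ) (w : L), w ∈ Lrt (ξ + m • δ) → ⁅(t δ : L), w⁆ = (form ξ δ) • w := by
    intro m w hw
    rw [(hLrt _ w).1 hw (t δ)]
    congr 1
    simp [hξt, hδt]
  -- suppose the set is finite
  by_contra hinf
  rw [Set.not_infinite] at hinf
  have h0S : (0:ℤ) ∈ {n : ℤ | ξ + n • δ ∈ R} := by simp [hξ]
  obtain ⟨n₀, hn₀, hmax⟩ := Set.Finite.exists_maximalFor id _ hinf ⟨0, h0S⟩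
  have hvne : Lrt (ξ + n₀ • δ) ≠ ⊥ := by
    rw [Set.mem_setOf_eq, hR] at hn₀; exact hn₀
  obtain ⟨v, hv, hvne0⟩ := Submodule.exists_mem_ne_zero_of_ne_bot hvne
  have htop : Lrt (ξ + (n₀ + 1) • δ) = ⊥ := by
    by_contra hb
    have hmem : (n₀ + 1) ∈ {n : ℤ | ξ + n • δ ∈ R} := by
      rw [Set.mem_setOf_eq, hR]; exact hb
    have := hmax hmem (by simp)
    simp at this
  have hev : ⁅e, v⁆ = 0 := by
    have hb := hbr δ _ e v he hv
    have heq : δ + (ξ + n₀ • δ) = ξ + (n₀ + 1) • δ := by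
      rw [add_smul, one_smul]; abel
    rw [heq, htop] at hb
    simpa using hb
  -- the sequence w k = (ad f)^k v
  set w : ℕ → L := fun k => ((LieAlgebra.ad F L f) ^ k) v with hwdef
  have hw0 : w 0 = v := rfl
  have hwsucc : ∀ k, w (k+1) = ⁅f, w k⁆ := by
    intro k
    show ((LieAlgebra.ad F L f) ^ (k+1)) v = _
    rw [pow_succ', Module.End.mul_apply, LieAlgebra.ad_apply]
  have hwmem : ∀ k : ℕ, w k ∈ Lrt (ξ + (n₀ - (k:ℤ)) • δ) := by
    intro k
    induction k with
    | zero => simpa [hw0] using hv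
    | succ k ih =>
      have hb := hbr (-δ) _ f (w k) hf ih
      have heq : -δ + (ξ + (n₀ - (k:ℤ)) • δ) = ξ + (n₀ - ((k+1 : ℕ):ℤ)) • δ := by
        have h1 : (n₀ - ((k+1 : ℕ) : ℤ)) = (n₀ - (k:ℤ)) - 1 := by push_cast; ring
        rw [h1]
        simp only [sub_smul, one_smul]
        abel
      rw [heq] at hb
      rw [hwsucc]
      exact hb
  have hkey : ∀ k : ℕ, ⁅e, w (k+1)⁆ = (((k:F)+1) * (B e f * form ξ δ)) • w k := by
    intro k
    induction k with
    | zero =>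
      rw [hwsucc, hw0, leibniz_lie, hev, lie_zero, add_zero, hef, smul_lie,
        hact n₀ v hv, smul_smul]
      norm_num
    | succ k ih =>
      rw [hwsucc (k+1), leibniz_lie, hef, smul_lie,
        hact (n₀ - ((k+1:ℕ):ℤ)) _ (hwmem (k+1)), ih, lie_smul, ← hwsucc,
        smul_smul, ← add_smul]
      congr 1
      push_cast
      ring
  have hwne : ∀ k : ℕ, w k ≠ 0 := by
    intro k
    induction k with
    | zero => exact hvne0
    | succ k ih =>
      intro hzero
      have hk := hkey k
      rw [hzero, lie_zero] at hk
      have hsc : (((k:F)+1) * (B e f * form ξ δ)) ≠ 0 :=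
        mul_ne_zero (Nat.cast_add_one_ne_zero k) (mul_ne_zero hc0 hξδ)
      rcases smul_eq_zero.mp hk.symm with h | h
      · exact hsc h
      · exact ih h
  have hmemS : ∀ k : ℕ, (n₀ - (k:ℤ)) ∈ {n : ℤ | ξ + n • δ ∈ R} := by
    intro k
    rw [Set.mem_setOf_eq, hR, Set.mem_setOf_eq]
    intro hb
    exact hwne k (by simpa [hb] using hwmem k)
  have hInf : {n : ℤ | ξ + n • δ ∈ R}.Infinite := by
    apply Set.infinite_of_injective_forall_mem (f := fun k : ℕ => n₀ - (k:ℤ))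
    · intro a b hab
      simp only at hab
      omega
    · exact hmemS
  exact hInf hinf
end

section
/- Every isotropic root is in the radical of the induced form on the roots: for every ξ ∈ R and every δ ∈ R^0, (ξ,δ) = 0. In other words, (R,R^0) = 0. -/
set_option maxHeartbeats 1600000


theorem heisenberg_vanish {F L : Type*} [Field F] [CharZero F] [AddCommGroup L] [Module F L]
    (V W : Module.End F L) (M : Submodule F L) (c : F) (hc : c ≠ 0)
    (hVM : ∀ x ∈ M, V x ∈ M) (hWM : ∀ x ∈ M, W x ∈ M)
    (hcomm : ∀ x ∈ M, V (W x) - W (V x) = c • x) :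
    ∀ j : ℕ, (∀ x ∈ M, (W ^ j) x = 0) → ∀ x ∈ M, x = 0 := by
  have pow_app : ∀ (m : ℕ) (x : L), (W ^ (m + 1)) x = (W ^ m) (W x) := by
    intro m x; rw [pow_succ]; rfl
  have hWpM : ∀ (m : ℕ), ∀ x ∈ M, (W ^ m) x ∈ M := by
    intro m
    induction m with
    | zero => intro x hx; simpa using hx
    | succ m ih =>
      intro x hx
      rw [pow_app]
      exact ih _ (hWM x hx)
  have key : ∀ (m : ℕ), ∀ x ∈ M,
      V ((W ^ (m + 1)) x) = (W ^ (m + 1)) (V x) + (((m : F) + 1) * c) • ((W ^ m) x) := by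
    intro m
    induction m with
    | zero =>
      intro x hx
      have h1' : V (W x) = W (V x) + c • x := by
        rw [← hcomm x hx]; abel
      simp only [zero_add, pow_one, pow_zero, Module.End.one_apply, Nat.cast_zero]
      rw [h1', one_mul]
    | succ m ih =>
      intro x hx
      have hWx : W x ∈ M := hWM x hx
      have h2 := ih (W x) hWx
      have h3 : V (W x) = W (V x) + c • x := by
        rw [← hcomm x hx]; abel
      rw [pow_app (m+1) x, h2, h3, map_add, map_smul, ← pow_app m x, ← pow_app (m+1) (V x)]
      push_cast
      module
  intro j
  induction j with
  | zero =>
    intro hj x hx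
    simpa using hj x hx
  | succ j ih =>
    intro hj x hx
    refine ih ?_ x hx
    intro y hy
    have h1 := key j y hy
    have h2 : (W ^ (j + 1)) y = 0 := hj y hy
    have h3 : (W ^ (j + 1)) (V y) = 0 := hj (V y) (hVM y hy)
    rw [h2, h3, map_zero, zero_add] at h1
    have hcoef : ((j : F) + 1) * c ≠ 0 := mul_ne_zero (Nat.cast_add_one_ne_zero j) hc
    exact (smul_eq_zero.mp h1.symm).resolve_left hcoef


theorem sl2_weight_integral {F L : Type*} [Field F] [CharZero F] [LieRing L] [LieAlgebra F L]
    (e f h : L) (hef : ⁅e, f⁆ = h)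
    (hhe : ⁅h, e⁆ = (2 : F) • e) (hhf : ⁅h, f⁆ = (-2 : F) • f)
    (hE : ∀ y : L, ∃ n : ℕ, ((LieAlgebra.ad F L e) ^ n) y = 0)
    (hF : ∀ y : L, ∃ n : ℕ, ((LieAlgebra.ad F L f) ^ n) y = 0)
    (v : L) (hv : v ≠ 0) (lam : F) (hwt : ⁅h, v⁆ = lam • v) :
    ∃ z : ℤ, lam = (z : F) := by
  classical
  set E : Module.End F L := LieAlgebra.ad F L e with hEdef
  set Fo : Module.End F L := LieAlgebra.ad F L f with hFdef
  have Eapp : ∀ x : L, E x = ⁅e, x⁆ := fun x => rfl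
  have Foapp : ∀ x : L, Fo x = ⁅f, x⁆ := fun x => rfl
  have pow_appE : ∀ (m : ℕ) (x : L), (E ^ (m + 1)) x = E ((E ^ m) x) := by
    intro m x; rw [pow_succ']; rfl
  have pow_appF : ∀ (m : ℕ) (x : L), (Fo ^ (m + 1)) x = Fo ((Fo ^ m) x) := by
    intro m x; rw [pow_succ']; rfl
  -- weight raising
  have raise : ∀ (x : L) (μ : F), ⁅h, x⁆ = μ • x → ⁅h, ⁅e, x⁆⁆ = (μ + 2) • ⁅e, x⁆ := by
    intro x μ hx
    have : ⁅h, ⁅e, x⁆⁆ = ⁅⁅h, e⁆, x⁆ + ⁅e, ⁅h, x⁆⁆ := by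
      rw [leibniz_lie]
    rw [this, hhe, hx, smul_lie, lie_smul, add_smul]
    abel
  have lower : ∀ (x : L) (μ : F), ⁅h, x⁆ = μ • x → ⁅h, ⁅f, x⁆⁆ = (μ - 2) • ⁅f, x⁆ := by
    intro x μ hx
    have : ⁅h, ⁅f, x⁆⁆ = ⁅⁅h, f⁆, x⁆ + ⁅f, ⁅h, x⁆⁆ := by
      rw [leibniz_lie]
    rw [this, hhf, hx, smul_lie, lie_smul, sub_smul]
    have : (-2 : F) • ⁅f, x⁆ = -((2:F) • ⁅f,x⁆) := by
      rw [neg_smul]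
    rw [this]
    abel
  -- weights of E-powers of v
  have wE : ∀ n : ℕ, ⁅h, (E ^ n) v⁆ = (lam + 2 * n) • ((E ^ n) v) := by
    intro n
    induction n with
    | zero => simpa using hwt
    | succ n ih =>
      rw [pow_appE, Eapp]
      have := raise ((E ^ n) v) (lam + 2 * n) ih
      rw [this]
      congr 1
      push_cast
      ring
  -- N : last nonvanishing E-power
  obtain ⟨n₀, hn₀⟩ := hE v
  have hex : ∃ n, (E ^ n) v = 0 := ⟨n₀, hn₀⟩
  set n₁ := Nat.find hex with hn₁def
  have hn₁ : (E ^ n₁) v = 0 := Nat.find_spec hex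
  have hn₁pos : 0 < n₁ := by
    rcases Nat.eq_zero_or_pos n₁ with h0 | h
    · exfalso; apply hv; have := hn₁; rw [h0] at this; simpa using this
    · exact h
  set N := n₁ - 1 with hNdef
  have hNsucc : N + 1 = n₁ := Nat.succ_pred_eq_of_pos hn₁pos
  set w := (E ^ N) v with hwdef
  have hw : w ≠ 0 := Nat.find_min hex (by omega)
  have hew : ⁅e, w⁆ = 0 := by
    have : (E ^ (N + 1)) v = 0 := by rw [hNsucc]; exact hn₁
    rw [pow_appE, Eapp] at this
    exact this
  set lamN : F := lam + 2 * N with hlamNdef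
  have hwtw : ⁅h, w⁆ = lamN • w := wE N
  -- weights of F-powers of w
  have wF : ∀ n : ℕ, ⁅h, (Fo ^ n) w⁆ = (lamN - 2 * n) • ((Fo ^ n) w) := by
    intro n
    induction n with
    | zero => simpa using hwtw
    | succ n ih =>
      rw [pow_appF, Foapp]
      have := lower ((Fo ^ n) w) (lamN - 2 * n) ih
      rw [this]
      congr 1
      push_cast
      ring
  -- key sl2 identity
  have key : ∀ k : ℕ, ⁅e, (Fo ^ (k + 1)) w⁆ = (((k : F) + 1) * (lamN - k)) • ((Fo ^ k) w) := by
    intro k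
    induction k with
    | zero =>
      rw [pow_appF, Foapp]
      simp only [pow_zero, Module.End.one_apply]
      have : ⁅e, ⁅f, w⁆⁆ = ⁅⁅e, f⁆, w⁆ + ⁅f, ⁅e, w⁆⁆ := by rw [leibniz_lie]
      rw [this, hef, hew, lie_zero, add_zero, hwtw]
      norm_num
    | succ k ih =>
      rw [pow_appF (k+1), Foapp]
      have step : ⁅e, ⁅f, (Fo ^ (k+1)) w⁆⁆
          = ⁅⁅e, f⁆, (Fo ^ (k+1)) w⁆ + ⁅f, ⁅e, (Fo ^ (k+1)) w⁆⁆ := by rw [leibniz_lie]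
      rw [step, hef, wF (k+1), ih, lie_smul, ← Foapp, ← pow_appF]
      rw [← add_smul]
      congr 1
      push_cast
      ring
  -- minimal vanishing F-power of w
  obtain ⟨m₀, hm₀⟩ := hF w
  have hexF : ∃ n, (Fo ^ n) w = 0 := ⟨m₀, hm₀⟩
  set m₁ := Nat.find hexF with hm₁def
  have hm₁ : (Fo ^ m₁) w = 0 := Nat.find_spec hexF
  have hm₁pos : 0 < m₁ := by
    rcases Nat.eq_zero_or_pos m₁ with h0 | h
    · exfalso; apply hw; have := hm₁; rw [h0] at this; simpa using this
    · exact h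
  set p := m₁ - 1 with hpdef
  have hpsucc : p + 1 = m₁ := Nat.succ_pred_eq_of_pos hm₁pos
  have hp : (Fo ^ p) w ≠ 0 := Nat.find_min hexF (by omega)
  have h0 : ⁅e, (Fo ^ (p + 1)) w⁆ = 0 := by
    rw [hpsucc, hm₁, lie_zero]
  rw [key p] at h0
  have hscal : ((p : F) + 1) * (lamN - p) = 0 := by
    by_contra hne
    exact hp ((smul_eq_zero.mp h0).resolve_left hne)
  have hlamN : lamN = (p : F) := by
    rcases mul_eq_zero.mp hscal with h | h
    · exact absurd h (Nat.cast_add_one_ne_zero p)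
    · exact sub_eq_zero.mp h
  refine ⟨(p : ℤ) - 2 * (N : ℤ), ?_⟩
  have hfin : lam + 2 * (N : F) = (p : F) := by rw [← hlamNdef]; exact hlamN
  have h2 : ((((p : ℤ) - 2 * (N : ℤ)) : ℤ) : F) = (p : F) - 2 * (N : F) := by
    push_cast; ring
  rw [h2, ← hfin]; ring


theorem proposition_3_4
    {F L : Type*} [Field F] [CharZero F] [LieRing L] [LieAlgebra F L]
    (H : LieSubalgebra F L)
    (habelian : ∀ x y : ↥H, ⁅x, y⁆ = 0)
    -- root spaces with respect to H
    (Lrt : Module.Dual F ↥H → Submodule F L)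
    (hLrt : ∀ ξ (x : L), x ∈ Lrt ξ ↔ ∀ h : ↥H, ⁅(h : L), x⁆ = ξ h • x)
    -- root space decomposition L = ⊕_{ξ} L_ξ
    (hdecomp : ⨆ ξ, Lrt ξ = ⊤) (hindep : iSupIndep Lrt)
    -- the set of roots
    (R : Set (Module.Dual F ↥H))
    (hR : R = {ξ | Lrt ξ ≠ ⊥})
    -- a symmetric invariant bilinear form on L
    (B : LinearMap.BilinForm F L)
    (hBsym : ∀ x y : L, B x y = B y x)
    (hBinv : ∀ x y z : L, B ⁅x, y⁆ z = B x ⁅y, z⁆)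
    -- (A1) H is self-centralizing
    (hA1 : Lrt 0 = H.toSubmodule)
    -- (A2) B is nondegenerate
    (hA2 : B.Nondegenerate)
    -- (A3) every root is represented by some t_ξ ∈ H
    (t : Module.Dual F ↥H → ↥H)
    (hA3 : ∀ ξ ∈ R, ∀ h : ↥H, ξ h = B (t ξ) h)
    -- the induced form, extended bilinearly to the span of R
    (form : LinearMap.BilinForm F (Module.Dual F ↥H))
    (hform : ∀ ξ ∈ R, ∀ η ∈ R, form ξ η = B (t ξ : L) (t η : L))
    -- (A4) ad x is locally nilpotent for x in an anisotropic root space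
    (hA4 : ∀ α ∈ R, form α α ≠ 0 → ∀ x ∈ Lrt α, ∀ y : L,
      ∃ n : ℕ, ((LieAlgebra.ad F L x) ^ n) y = 0)
    -- (A5) R^× is irreducible
    (hA5 : ∀ R1 R2 : Set (Module.Dual F ↥H), {ξ | ξ ∈ R ∧ form ξ ξ ≠ 0} = R1 ∪ R2 →
      (∀ ξ ∈ R1, ∀ η ∈ R2, form ξ η = 0) → R1 = ∅ ∨ R2 = ∅)
    :
    ∀ ξ ∈ R, ∀ δ ∈ R, form δ δ = 0 → form ξ δ = 0 := by
  intro ξ hξ δ hδ hiso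
  by_contra hc0
  -- ######## basic toolkit ########
  have memLrt : ∀ {μ : Module.Dual F ↥H} {x : L}, x ∈ Lrt μ → ∀ h : ↥H,
      ⁅(h : L), x⁆ = μ h • x := fun {μ x} hx h => (hLrt μ x).mp hx h
  have brl : ∀ (μ ν : Module.Dual F ↥H) (x y : L), x ∈ Lrt μ → y ∈ Lrt ν →
      ⁅x, y⁆ ∈ Lrt (μ + ν) := by
    intro μ ν x y hx hy
    rw [hLrt]
    intro h
    rw [leibniz_lie, memLrt hx h, memLrt hy h, smul_lie, lie_smul,
      LinearMap.add_apply, add_smul]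
  have tople : ∀ (S : Submodule F L), (∀ η, Lrt η ≤ S) → ∀ y : L, y ∈ S := by
    intro S hS y
    have h1 : (⊤ : Submodule F L) ≤ S := by rw [← hdecomp]; exact iSup_le hS
    exact h1 Submodule.mem_top
  have fval : ∀ (μ : Module.Dual F ↥H), μ ≠ 0 → ∃ h : ↥H, μ h ≠ 0 := by
    intro μ hμ
    by_contra hco
    push_neg at hco
    exact hμ (by ext h; simp [hco h])
  have hcoeH : ∀ s : ↥H, ((s : L) ∈ H.toSubmodule) := fun s => s.2
  -- B is nondegenerate on H
  have key0 : ∀ x : L, x ∈ H.toSubmodule → (∀ h : ↥H, B x h = 0) → x = 0 := by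
    intro x hxH hx
    refine hA2.1 x ?_
    intro y
    refine tople (LinearMap.ker (B x)) ?_ y
    intro η
    by_cases hη : η = 0
    · subst hη
      rw [hA1]
      intro z hz
      simpa using hx ⟨z, hz⟩
    · obtain ⟨h₀, hh₀⟩ := fval η hη
      intro z hz
      have hbr := memLrt hz h₀
      have h1 : B x ⁅(h₀ : L), z⁆ = 0 := by
        rw [← hBinv x (h₀ : L) z]
        have hxh : ⁅x, (h₀ : L)⁆ = 0 := by
          have h3 := habelian ⟨x, hxH⟩ h₀
          have h2 : (↑(⁅(⟨x, hxH⟩ : ↥H), h₀⁆) : L) = ⁅x, (h₀ : L)⁆ := rfl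
          rw [h3] at h2
          simpa using h2.symm
        rw [hxh]
        simp
      rw [hbr, map_smul] at h1
      have h4 := (mul_eq_zero.mp h1).resolve_left hh₀
      simpa [LinearMap.mem_ker] using h4
  -- orthogonality of root spaces
  have orth : ∀ (μ ν : Module.Dual F ↥H), μ + ν ≠ 0 → ∀ x ∈ Lrt μ, ∀ y ∈ Lrt ν,
      B x y = 0 := by
    intro μ ν hμν x hx y hy
    obtain ⟨h₀, hh₀⟩ := fval _ hμν
    have h1 : B ⁅x, (h₀ : L)⁆ y = B x ⁅(h₀ : L), y⁆ := hBinv x (h₀ : L) y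
    have h2 : ⁅x, (h₀ : L)⁆ = -(μ h₀ • x) := by
      rw [← lie_skew, memLrt hx h₀]
    rw [h2, memLrt hy h₀] at h1
    have h3 : -(μ h₀ * B x y) = ν h₀ * B x y := by
      simpa using h1
    have h4 : (μ + ν) h₀ * B x y = 0 := by
      rw [LinearMap.add_apply, add_mul]
      linear_combination -h3
    exact (mul_eq_zero.mp h4).resolve_left hh₀
  -- dual pairing of opposite root spaces
  have pare : ∀ (μ : Module.Dual F ↥H) (v : L), v ∈ Lrt μ → v ≠ 0 →
      ∃ w ∈ Lrt (-μ), B v w = 1 := by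
    intro μ v hv hv0
    have hex : ∃ y : L, B v y ≠ 0 := by
      by_contra hco
      push_neg at hco
      exact hv0 (hA2.1 v hco)
    obtain ⟨y, hy⟩ := hex
    have hw : ∃ w ∈ Lrt (-μ), B v w ≠ 0 := by
      by_contra hco
      push_neg at hco
      apply hy
      refine tople (LinearMap.ker (B v)) ?_ y
      intro η z hz
      by_cases hη : η = -μ
      · subst hη
        simpa [LinearMap.mem_ker] using hco z hz
      · have h5 : μ + η ≠ 0 := by
          intro hcon
          apply hη
          linear_combination (norm := abel) hcon
        simpa [LinearMap.mem_ker] using orth μ η h5 v hv z hz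
    obtain ⟨w, hwmem, hw0⟩ := hw
    refine ⟨(B v w)⁻¹ • w, Submodule.smul_mem _ _ hwmem, ?_⟩
    rw [map_smul]
    simp [inv_mul_cancel₀ hw0]
  have rootvec : ∀ (μ : Module.Dual F ↥H), μ ∈ R → ∃ v ∈ Lrt μ, v ≠ 0 := by
    intro μ hμ
    rw [hR] at hμ
    exact Submodule.ne_bot_iff _ |>.mp hμ
  have negR : ∀ (μ : Module.Dual F ↥H), μ ∈ R → -μ ∈ R := by
    intro μ hμ
    obtain ⟨v, hv, hv0⟩ := rootvec μ hμ
    obtain ⟨w, hw, hw1⟩ := pare μ v hv hv0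
    rw [hR]
    intro hbot
    rw [hbot, Submodule.mem_bot] at hw
    rw [hw] at hw1
    simp at hw1
  -- coroot formula
  have corf : ∀ (μ : Module.Dual F ↥H), μ ∈ R → ∀ v ∈ Lrt μ, ∀ w ∈ Lrt (-μ),
      ⁅v, w⁆ = B v w • ((t μ : ↥H) : L) := by
    intro μ hμ v hv w hw
    have hmem0 : ⁅v, w⁆ ∈ Lrt 0 := by
      have h6 := brl μ (-μ) v w hv hw
      simpa using h6
    have hmemH : ⁅v, w⁆ ∈ H.toSubmodule := by rw [← hA1]; exact hmem0
    have hs : ⁅v, w⁆ - B v w • ((t μ : ↥H) : L) ∈ H.toSubmodule :=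
      Submodule.sub_mem _ hmemH (Submodule.smul_mem _ _ (hcoeH (t μ)))
    have hzero : ∀ h : ↥H, B (⁅v, w⁆ - B v w • ((t μ : ↥H) : L)) (h : L) = 0 := by
      intro h
      rw [map_sub, LinearMap.sub_apply, map_smul, LinearMap.smul_apply]
      have h1 : B ⁅v, w⁆ (h : L) = μ h * B v w := by
        rw [hBinv v w (h : L)]
        have h2 : ⁅w, (h : L)⁆ = μ h • w := by
          have h3 := memLrt hw h
          rw [← lie_skew, h3, LinearMap.neg_apply, neg_smul, neg_neg]
        rw [h2, map_smul, smul_eq_mul]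
      rw [h1, ← hA3 μ hμ h, smul_eq_mul]
      ring
    have h7 := key0 _ hs hzero
    exact sub_eq_zero.mp h7
  -- ######## scalars ########
  set cB : F := B ((t ξ : ↥H) : L) ((t δ : ↥H) : L) with hcBdef
  have hcB : form ξ δ = cB := hform ξ hξ δ hδ
  have hcB0 : cB ≠ 0 := by rw [← hcB]; exact hc0
  have hδδB : B ((t δ : ↥H) : L) ((t δ : ↥H) : L) = (0 : F) := by
    rw [← hform δ hδ δ hδ]; exact hiso
  set bB : F := B ((t ξ : ↥H) : L) ((t ξ : ↥H) : L) with hbBdef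
  -- ######## integrality ########
  have intlem : ∀ p ∈ R, ∀ q ∈ R, B ((t q : ↥H) : L) ((t q : ↥H) : L) ≠ 0 →
      ∃ z : ℤ, 2 * (B ((t p : ↥H) : L) ((t q : ↥H) : L))
        = (z : F) * (B ((t q : ↥H) : L) ((t q : ↥H) : L)) := by
    intro p hp q hq hg
    set g : F := B ((t q : ↥H) : L) ((t q : ↥H) : L) with hgdef
    obtain ⟨e, hemem, he0⟩ := rootvec q hq
    obtain ⟨f₀, hf₀mem, hef₀⟩ := pare q e hemem he0
    set f : L := (2 / g) • f₀ with hfdef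
    have hfmem : f ∈ Lrt (-q) := Submodule.smul_mem _ _ hf₀mem
    have hBef : B e f = 2 / g := by
      rw [hfdef, map_smul, smul_eq_mul, hef₀, mul_one]
    have hqt : q (t q) = g := hA3 q hq (t q)
    set hel : ↥H := (2 / g) • t q with heldef
    have helcoe : ((hel : ↥H) : L) = (2 / g) • ((t q : ↥H) : L) := rfl
    have hefh : ⁅e, f⁆ = (hel : L) := by
      rw [corf q hq e hemem f hfmem, hBef, helcoe]
    have hvalq : q hel = 2 := by
      rw [heldef, map_smul, smul_eq_mul, hqt]
      field_simp
    have hhe2 : ⁅(hel : L), e⁆ = (2 : F) • e := by rw [memLrt hemem hel, hvalq]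
    have hhf2 : ⁅(hel : L), f⁆ = (-2 : F) • f := by
      rw [memLrt hfmem hel, LinearMap.neg_apply, hvalq]
    have hformq : form q q = g := hform q hq q hq
    have hEnil : ∀ y : L, ∃ n : ℕ, ((LieAlgebra.ad F L e) ^ n) y = 0 :=
      hA4 q hq (by rw [hformq]; exact hg) e hemem
    have hnegq : -q ∈ R := negR q hq
    have htneg : ((t (-q) : ↥H) : L) = -((t q : ↥H) : L) := by
      have hsmem : ((t (-q) : ↥H) : L) + ((t q : ↥H) : L) ∈ H.toSubmodule :=
        Submodule.add_mem _ (hcoeH _) (hcoeH _)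
      have hz : ∀ h : ↥H, B (((t (-q) : ↥H) : L) + ((t q : ↥H) : L)) (h : L) = 0 := by
        intro h
        rw [map_add, LinearMap.add_apply, ← hA3 (-q) hnegq h, ← hA3 q hq h]
        simp
      have h8 := key0 _ hsmem hz
      exact eq_neg_of_add_eq_zero_left h8
    have hformnq : form (-q) (-q) = g := by
      have hBneg : B (-((t q : ↥H) : L)) (-((t q : ↥H) : L)) = g := by
        rw [hgdef]; simp
      rw [hform (-q) hnegq (-q) hnegq, htneg, hBneg]
    have hFnil : ∀ y : L, ∃ n : ℕ, ((LieAlgebra.ad F L f) ^ n) y = 0 :=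
      hA4 (-q) hnegq (by rw [hformnq]; exact hg) f hfmem
    obtain ⟨vv, hvvmem, hvv0⟩ := rootvec p hp
    have hpt : p (t q) = B ((t p : ↥H) : L) ((t q : ↥H) : L) := hA3 p hp (t q)
    have hwt : ⁅(hel : L), vv⁆ = ((2 / g) * (B ((t p : ↥H) : L) ((t q : ↥H) : L))) • vv := by
      rw [memLrt hvvmem hel, heldef, map_smul, smul_eq_mul, hpt]
    obtain ⟨z, hz⟩ := sl2_weight_integral e f (hel : L) hefh hhe2 hhf2 hEnil hFnil vv hvv0 _ hwt
    refine ⟨z, ?_⟩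
    field_simp at hz
    linear_combination hz
  -- ######## the δ-string through ξ ########
  obtain ⟨v, hvmem, hv0⟩ := rootvec δ hδ
  obtain ⟨w, hwmem, hvw⟩ := pare δ v hvmem hv0
  have htvw : ⁅v, w⁆ = ((t δ : ↥H) : L) := by
    rw [corf δ hδ v hvmem w hwmem, hvw, one_smul]
  set V : Module.End F L := LieAlgebra.ad F L v with hVdef
  set W : Module.End F L := LieAlgebra.ad F L w with hWdef
  set M : Submodule F L := ⨆ k : ℤ, Lrt (ξ + k • δ) with hMdef
  have hMle : ∀ k : ℤ, Lrt (ξ + k • δ) ≤ M := by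
    intro k
    rw [hMdef]
    exact le_iSup (fun k : ℤ => Lrt (ξ + k • δ)) k
  have hsup_le : ∀ (S : Submodule F L), (∀ k : ℤ, Lrt (ξ + k • δ) ≤ S) → M ≤ S := by
    intro S hk
    rw [hMdef]
    exact iSup_le hk
  have hVmap : ∀ (k : ℤ) (x : L), x ∈ Lrt (ξ + k • δ) → V x ∈ Lrt (ξ + (k + 1) • δ) := by
    intro k x hx
    have h1 : (⁅v, x⁆ : L) ∈ Lrt (δ + (ξ + k • δ)) := brl δ _ v x hvmem hx
    have h2 : δ + (ξ + k • δ) = ξ + (k + 1) • δ := by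
      rw [add_smul, one_smul]; abel
    rw [← h2]
    exact h1
  have hWmap : ∀ (k : ℤ) (x : L), x ∈ Lrt (ξ + k • δ) → W x ∈ Lrt (ξ + (k - 1) • δ) := by
    intro k x hx
    have h1 : (⁅w, x⁆ : L) ∈ Lrt (-δ + (ξ + k • δ)) := brl (-δ) _ w x hwmem hx
    have h2 : -δ + (ξ + k • δ) = ξ + (k - 1) • δ := by
      rw [sub_smul, one_smul]; abel
    rw [← h2]
    exact h1
  have hVM : ∀ x ∈ M, V x ∈ M := by
    intro x hx
    refine hsup_le (Submodule.comap V M) ?_ hx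
    intro k y hy
    exact Submodule.mem_comap.mpr (hMle (k + 1) (hVmap k y hy))
  have hWM : ∀ x ∈ M, W x ∈ M := by
    intro x hx
    refine hsup_le (Submodule.comap W M) ?_ hx
    intro k y hy
    exact Submodule.mem_comap.mpr (hMle (k - 1) (hWmap k y hy))
  have hcommM : ∀ x ∈ M, V (W x) - W (V x) = cB • x := by
    have hsub : M ≤ LinearMap.ker
        ((LieAlgebra.ad F L ((t δ : ↥H) : L)) - cB • (1 : Module.End F L)) := by
      apply hsup_le
      intro k x hx
      rw [LinearMap.mem_ker, LinearMap.sub_apply, LinearMap.smul_apply, Module.End.one_apply]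
      have h1 : ⁅((t δ : ↥H) : L), x⁆ = cB • x := by
        rw [memLrt hx (t δ)]
        congr 1
        rw [LinearMap.add_apply, LinearMap.smul_apply]
        have e1 : ξ (t δ) = cB := hA3 ξ hξ (t δ)
        have e2 : δ (t δ) = 0 := by rw [hA3 δ hδ (t δ)]; exact hδδB
        rw [e1, e2, smul_zero, add_zero]
      rw [LieAlgebra.ad_apply, h1, sub_self]
    intro x hx
    have h2 := hsub hx
    rw [LinearMap.mem_ker, LinearMap.sub_apply, LinearMap.smul_apply, Module.End.one_apply] at h2
    have h3 : (LieAlgebra.ad F L ((t δ : ↥H) : L)) x = cB • x := sub_eq_zero.mp h2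
    have h4 : V (W x) - W (V x) = (LieAlgebra.ad F L ⁅v, w⁆) x := by
      simp only [hVdef, hWdef, LieAlgebra.ad_apply]
      rw [leibniz_lie]
      abel
    rw [h4, htvw, h3]
  have wpow : ∀ (j : ℕ) (k : ℤ) (x : L), x ∈ Lrt (ξ + k • δ) →
      (W ^ j) x ∈ Lrt (ξ + (k - j) • δ) := by
    intro j
    induction j with
    | zero =>
      intro k x hx
      simpa using hx
    | succ j ih =>
      intro k x hx
      have h1 : (W ^ (j + 1)) x = W ((W ^ j) x) := by rw [pow_succ']; rfl
      rw [h1]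
      have h2 := hWmap (k - j) _ (ih k x hx)
      have h3 : k - ((j : ℕ) + 1 : ℕ) = (k - (j : ℤ)) - 1 := by push_cast; ring
      rw [h3]
      exact h2
  have hrootξ : Lrt ξ ≠ ⊥ := by rw [hR] at hξ; exact hξ
  have unb : ∀ N : ℕ, ∃ k : ℤ, (N : ℤ) < |k| ∧ (ξ + k • δ) ∈ R := by
    intro N
    by_contra hcon
    push_neg at hcon
    have hbots : ∀ k : ℤ, (N : ℤ) < |k| → Lrt (ξ + k • δ) = ⊥ := by
      intro k hk
      have h5 := hcon k hk
      rw [hR] at h5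
      exact not_ne_iff.mp h5
    have hker : ∀ x ∈ M, (W ^ (2 * N + 2)) x = 0 := by
      intro x hx
      have hle : M ≤ LinearMap.ker ((W ^ (2 * N + 2) : Module.End F L)) := by
        apply hsup_le
        intro k y hy
        rw [LinearMap.mem_ker]
        by_cases hk : (N : ℤ) < |k|
        · have hb := hbots k hk
          rw [hb, Submodule.mem_bot] at hy
          rw [hy, map_zero]
        · push_neg at hk
          have himg := wpow (2 * N + 2) k y hy
          have habs : (N : ℤ) < |k - ((2 * N + 2 : ℕ) : ℤ)| := by
            have h1 : k ≤ (N : ℤ) := le_trans (le_abs_self k) hk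
            have h2 : (N : ℤ) < -(k - ((2 * N + 2 : ℕ) : ℤ)) := by push_cast; omega
            exact lt_of_lt_of_le h2 (neg_le_abs _)
          rw [hbots _ habs, Submodule.mem_bot] at himg
          exact himg
      exact hle hx
    have hvanish := heisenberg_vanish V W M cB hcB0 hVM hWM hcommM (2 * N + 2) hker
    apply hrootξ
    rw [eq_bot_iff]
    intro x hx
    have hx' : x ∈ Lrt (ξ + (0 : ℤ) • δ) := by simpa using hx
    simpa using hvanish x (hMle 0 hx')
  -- ######## translation of the representatives ########
  have texp : ∀ k : ℤ, (ξ + k • δ) ∈ R →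
      ((t (ξ + k • δ) : ↥H) : L) = ((t ξ : ↥H) : L) + k • ((t δ : ↥H) : L) := by
    intro k hk
    have hmem : ((t (ξ + k • δ) : ↥H) : L)
        - (((t ξ : ↥H) : L) + k • ((t δ : ↥H) : L)) ∈ H.toSubmodule :=
      Submodule.sub_mem _ (hcoeH _)
        (Submodule.add_mem _ (hcoeH _) (zsmul_mem (hcoeH _) k))
    have hz : ∀ h : ↥H, B (((t (ξ + k • δ) : ↥H) : L)
        - (((t ξ : ↥H) : L) + k • ((t δ : ↥H) : L))) (h : L) = 0 := by
      intro h
      rw [map_sub, LinearMap.sub_apply, map_add, LinearMap.add_apply,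
        map_zsmul, LinearMap.smul_apply]
      rw [← hA3 _ hk h, ← hA3 ξ hξ h, ← hA3 δ hδ h]
      rw [LinearMap.add_apply, LinearMap.smul_apply]
      simp
    exact sub_eq_zero.mp (key0 _ hmem hz)
  have hBval : ∀ (a b : ℤ), (ξ + a • δ) ∈ R → (ξ + b • δ) ∈ R →
      B ((t (ξ + a • δ) : ↥H) : L) ((t (ξ + b • δ) : ↥H) : L)
        = bB + ((a + b : ℤ) : F) * cB := by
    intro a b ha hb
    rw [texp a ha, texp b hb]
    have hsym : B ((t δ : ↥H) : L) ((t ξ : ↥H) : L) = cB := by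
      rw [hcBdef]; exact (hBsym _ _).symm
    simp only [map_add, map_zsmul, LinearMap.add_apply, LinearMap.smul_apply, zsmul_eq_mul]
    rw [hδδB, hsym, ← hbBdef, ← hcBdef]
    push_cast
    ring
  -- the norms along the string
  set u : ℤ → F := fun k => bB + ((2 * k : ℤ) : F) * cB with hudef
  have hunorm : ∀ a : ℤ, (ξ + a • δ) ∈ R →
      B ((t (ξ + a • δ) : ↥H) : L) ((t (ξ + a • δ) : ↥H) : L) = u a := by
    intro a ha
    rw [hBval a a ha ha, hudef]
    push_cast
    ring
  have uinj : ∀ a b : ℤ, u a = u b → a = b := by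
    intro a b hab
    rw [hudef] at hab
    simp only at hab
    have h1 : ((2 * a : ℤ) : F) * cB = ((2 * b : ℤ) : F) * cB := by linear_combination hab
    have h2 : ((2 * a : ℤ) : F) = ((2 * b : ℤ) : F) := mul_right_cancel₀ hcB0 h1
    have h3 : (2 * a : ℤ) = 2 * b := by exact_mod_cast h2
    omega
  -- pairwise relation between anisotropic string roots
  have pw : ∀ a b : ℤ, a ≠ b → (ξ + a • δ) ∈ R → (ξ + b • δ) ∈ R →
      u a ≠ 0 → u b ≠ 0 → u a = -u b := by
    intro a b hab ha hb hua hub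
    obtain ⟨z1, hz1⟩ := intlem _ ha _ hb (by rw [hunorm b hb]; exact hub)
    rw [hBval a b ha hb, hunorm b hb] at hz1
    obtain ⟨z2, hz2⟩ := intlem _ hb _ ha (by rw [hunorm a ha]; exact hua)
    rw [hBval b a hb ha, hunorm a ha] at hz2
    -- u a + u b = z1 * u b  and  u a + u b = z2 * u a
    have e1 : u a + u b = (z1 : F) * u b := by
      simp only [hudef] at hz1 ⊢
      push_cast at hz1 ⊢
      linear_combination hz1
    have e2 : u a + u b = (z2 : F) * u a := by
      simp only [hudef] at hz2 ⊢
      push_cast at hz2 ⊢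
      linear_combination hz2
    have e3 : u a = ((z1 : F) - 1) * u b := by linear_combination e1
    have e4 : u b = ((z2 : F) - 1) * u a := by linear_combination e2
    have e5 : (((z1 - 1) * (z2 - 1) : ℤ) : F) * u a = 1 * u a := by
      push_cast
      calc ((z1 : F) - 1) * ((z2 : F) - 1) * u a
          = ((z1 : F) - 1) * (((z2 : F) - 1) * u a) := by ring
        _ = ((z1 : F) - 1) * u b := by rw [← e4]
        _ = u a := by rw [← e3]
        _ = 1 * u a := by ring
    have e6 : (((z1 - 1) * (z2 - 1) : ℤ) : F) = 1 := mul_right_cancel₀ hua e5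
    have e7 : (z1 - 1) * (z2 - 1) = 1 := by exact_mod_cast e6
    have e8 : z1 - 1 = 1 ∨ z1 - 1 = -1 := Int.isUnit_iff.mp (IsUnit.of_mul_eq_one _ e7)
    rcases e8 with h8 | h8
    · exfalso
      have h10 : ((z1 : F) - 1) = 1 := by
        have h9 : z1 = 2 := by omega
        rw [h9]
        norm_num
      have h9 : u a = u b := by rw [e3, h10, one_mul]
      exact hab (uinj a b h9)
    · have h10 : ((z1 : F) - 1) = -1 := by
        have h9 : z1 = 0 := by omega
        rw [h9]
        norm_num
      rw [e3, h10]
      ring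
  -- ######## choose three anisotropic string roots and conclude ########
  obtain ⟨k1, hk1a, hk1R⟩ := unb 0
  obtain ⟨k2, hk2a, hk2R⟩ := unb k1.natAbs
  obtain ⟨k3, hk3a, hk3R⟩ := unb k2.natAbs
  obtain ⟨k4, hk4a, hk4R⟩ := unb k3.natAbs
  have hlt12 : |k1| < |k2| := by rw [Int.abs_eq_natAbs k1]; exact hk2a
  have hlt23 : |k2| < |k3| := by rw [Int.abs_eq_natAbs k2]; exact hk3a
  have hlt34 : |k3| < |k4| := by rw [Int.abs_eq_natAbs k3]; exact hk4a
  have hlt13 : |k1| < |k3| := lt_trans hlt12 hlt23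
  have hlt14 : |k1| < |k4| := lt_trans hlt13 hlt34
  have hlt24 : |k2| < |k4| := lt_trans hlt23 hlt34
  have habne : ∀ a b : ℤ, |a| < |b| → a ≠ b := by
    intro a b hab hcon
    rw [hcon] at hab
    exact lt_irrefl _ hab
  have hne12 : k1 ≠ k2 := habne _ _ hlt12
  have hne13 : k1 ≠ k3 := habne _ _ hlt13
  have hne14 : k1 ≠ k4 := habne _ _ hlt14
  have hne23 : k2 ≠ k3 := habne _ _ hlt23
  have hne24 : k2 ≠ k4 := habne _ _ hlt24
  have hne34 : k3 ≠ k4 := habne _ _ hlt34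
  have huzero : ∀ a b : ℤ, u a = 0 → u b = 0 → a = b := by
    intro a b ha hb
    exact uinj a b (by rw [ha, hb])
  have final : ∀ a b c : ℤ, a ≠ b → a ≠ c → b ≠ c →
      (ξ + a • δ) ∈ R → (ξ + b • δ) ∈ R → (ξ + c • δ) ∈ R →
      u a ≠ 0 → u b ≠ 0 → u c ≠ 0 → False := by
    intro a b c hab hac hbc ha hb hc hua hub huc
    have p1 := pw a b hab ha hb hua hub
    have p2 := pw a c hac ha hc hua huc
    have h11 : u b = u c := by linear_combination p1 - p2
    exact hbc (uinj b c h11)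
  by_cases h1 : u k1 = 0
  · have h2 : u k2 ≠ 0 := fun hcon => hne12 (huzero k1 k2 h1 hcon)
    have h3 : u k3 ≠ 0 := fun hcon => hne13 (huzero k1 k3 h1 hcon)
    have h4 : u k4 ≠ 0 := fun hcon => hne14 (huzero k1 k4 h1 hcon)
    exact final k2 k3 k4 hne23 hne24 hne34 hk2R hk3R hk4R h2 h3 h4
  · by_cases h2 : u k2 = 0
    · have h3 : u k3 ≠ 0 := fun hcon => hne23 (huzero k2 k3 h2 hcon)
      have h4 : u k4 ≠ 0 := fun hcon => hne24 (huzero k2 k4 h2 hcon)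
      exact final k1 k3 k4 hne13 hne14 hne34 hk1R hk3R hk4R h1 h3 h4
    · by_cases h3 : u k3 = 0
      · have h4 : u k4 ≠ 0 := fun hcon => hne34 (huzero k3 k4 h3 hcon)
        exact final k1 k2 k4 hne12 hne14 hne24 hk1R hk2R hk4R h1 h2 h4
      · exact final k1 k2 k3 hne12 hne13 hne23 hk1R hk2R hk3R h1 h2 h3
end

section
/- If (L,H,B) is a null system, i.e. R^× = ∅ (every root is isotropic), then the induced form vanishes identically on the roots: (ξ,η) = 0 for all ξ, η ∈ R, and hence the form is zero on the ℚ-span V of R. -/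
theorem corollary_3_5
    {F L : Type*} [Field F] [CharZero F] [LieRing L] [LieAlgebra F L]
    (H : LieSubalgebra F L)
    (habelian : ∀ x y : ↥H, ⁅x, y⁆ = 0)
    -- root spaces with respect to H
    (Lrt : Module.Dual F ↥H → Submodule F L)
    (hLrt : ∀ ξ (x : L), x ∈ Lrt ξ ↔ ∀ h : ↥H, ⁅(h : L), x⁆ = ξ h • x)
    -- root space decomposition L = ⊕_{ξ} L_ξ
    (hdecomp : ⨆ ξ, Lrt ξ = ⊤) (hindep : iSupIndep Lrt)
    -- the set of roots
    (R : Set (Module.Dual F ↥H))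
    (hR : R = {ξ | Lrt ξ ≠ ⊥})
    -- a symmetric invariant bilinear form on L
    (B : LinearMap.BilinForm F L)
    (hBsym : ∀ x y : L, B x y = B y x)
    (hBinv : ∀ x y z : L, B ⁅x, y⁆ z = B x ⁅y, z⁆)
    -- (A1) H is self-centralizing
    (hA1 : Lrt 0 = H.toSubmodule)
    -- (A2) B is nondegenerate
    (hA2 : B.Nondegenerate)
    -- (A3) every root is represented by some t_ξ ∈ H
    (t : Module.Dual F ↥H → ↥H)
    (hA3 : ∀ ξ ∈ R, ∀ h : ↥H, ξ h = B (t ξ) h)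
    -- the induced form, extended bilinearly to the span of R
    (form : LinearMap.BilinForm F (Module.Dual F ↥H))
    (hform : ∀ ξ ∈ R, ∀ η ∈ R, form ξ η = B (t ξ : L) (t η : L))
    -- (A4) ad x is locally nilpotent for x in an anisotropic root space
    (hA4 : ∀ α ∈ R, form α α ≠ 0 → ∀ x ∈ Lrt α, ∀ y : L,
      ∃ n : ℕ, ((LieAlgebra.ad F L x) ^ n) y = 0)
    -- null system: every root is isotropic, i.e. R^× = ∅
    (hnull : ∀ ξ ∈ R, form ξ ξ = 0)
    :
    (∀ ξ ∈ R, ∀ η ∈ R, form ξ η = 0) ∧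
    (∀ v : Module.Dual F ↥H,
      (∃ (n : ℕ) (q : Fin n → ℚ) (ζ : Fin n → Module.Dual F ↥H),
        (∀ i, ζ i ∈ R) ∧ v = ∑ i, (q i : F) • ζ i) →
      ∀ w : Module.Dual F ↥H,
        (∃ (m : ℕ) (p : Fin m → ℚ) (ζ : Fin m → Module.Dual F ↥H),
          (∀ i, ζ i ∈ R) ∧ w = ∑ i, (p i : F) • ζ i) →
        form v w = 0) := by
  -- orthogonality of root spaces
  have ortho : ∀ (ξ ζ : Module.Dual F ↥H), ξ + ζ ≠ 0 →
      ∀ x ∈ Lrt ξ, ∀ y ∈ Lrt ζ, B x y = 0 := by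
    intro ξ ζ hne x hx y hy
    obtain ⟨h, hh⟩ : ∃ h : ↥H, (ξ + ζ) h ≠ 0 := by
      by_contra hc
      push_neg at hc
      exact hne (LinearMap.ext hc)
    have e1 : B ⁅(h : L), x⁆ y = ξ h * B x y := by
      rw [(hLrt ξ x).mp hx h]; simp
    have e2 : B x ⁅(h : L), y⁆ = ζ h * B x y := by
      rw [(hLrt ζ y).mp hy h]; simp
    have h3 := hBinv x (h : L) y
    have h5 : ⁅(h : L), x⁆ = -⁅x, (h : L)⁆ := by rw [← lie_skew]
    have e3 : B ⁅(h : L), x⁆ y + B x ⁅(h : L), y⁆ = 0 := by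
      rw [h5, ← h3, map_neg, LinearMap.neg_apply, neg_add_cancel]
    have e4 : ξ h * B x y + ζ h * B x y = 0 := by rw [← e1, ← e2]; exact e3
    have hmul : (ξ h + ζ h) * B x y = 0 := by rw [add_mul]; exact e4
    rcases mul_eq_zero.mp hmul with h0 | h0
    · exact absurd h0 (by simpa using hh)
    · exact h0
  -- bracket of root vectors
  have brkt : ∀ (ξ η : Module.Dual F ↥H) (x z : L), x ∈ Lrt ξ → z ∈ Lrt η →
      ⁅x, z⁆ ∈ Lrt (ξ + η) := by
    intro ξ η x z hx hz
    rw [hLrt]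
    intro h
    rw [leibniz_lie, (hLrt ξ x).mp hx h, (hLrt η z).mp hz h, smul_lie, lie_smul,
      ← add_smul]
    rfl
  -- B is nondegenerate on H
  have hHnd : ∀ h0 : ↥H, (∀ h : ↥H, B (h0 : L) (h : L) = 0) → h0 = 0 := by
    intro h0 hz
    have hall : ∀ w : L, B (h0 : L) w = 0 := by
      have hle : (⊤ : Submodule F L) ≤ LinearMap.ker (B (h0 : L)) := by
        rw [← hdecomp]
        refine iSup_le fun ζ u hu => ?_
        simp only [LinearMap.mem_ker]
        by_cases hζ : ζ = 0
        · subst hζ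
          rw [hA1] at hu
          exact hz ⟨u, hu⟩
        · have hmem : (h0 : L) ∈ Lrt 0 := by rw [hA1]; exact h0.2
          exact ortho 0 ζ (by simpa using hζ) (h0 : L) hmem u hu
      intro w
      exact hle (Submodule.mem_top (x := w))
    exact Subtype.ext (hA2.1 _ hall)
  -- uniqueness of the representing element
  have tuniq : ∀ ζ ∈ R, ∀ h0 : ↥H, (∀ h : ↥H, ζ h = B (h0 : L) (h : L)) → t ζ = h0 := by
    intro ζ hζ h0 hrep
    have key : ∀ h : ↥H, B ((t ζ - h0 : ↥H) : L) (h : L) = 0 := by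
      intro h
      have hc1 : ((t ζ - h0 : ↥H) : L) = (t ζ : L) - (h0 : L) := rfl
      rw [hc1, map_sub, LinearMap.sub_apply, ← hA3 ζ hζ h, ← hrep h, sub_self]
    have := hHnd _ key
    rwa [sub_eq_zero] at this
  have two_ne : (2 : F) ≠ 0 := by norm_num
  -- key: if ξ, η ∈ R with (ξ,η) ≠ 0 then ξ + η is not a root
  have notroot : ∀ ξ ∈ R, ∀ η ∈ R, form ξ η ≠ 0 → (ξ + η) ∉ R := by
    intro ξ hξ η hη hc hs
    have hc1 : ((t ξ + t η : ↥H) : L) = (t ξ : L) + (t η : L) := rfl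
    have hts : t (ξ + η) = t ξ + t η := by
      refine tuniq _ hs _ fun h => ?_
      simp only [hc1, map_add, LinearMap.add_apply]
      rw [← hA3 ξ hξ h, ← hA3 η hη h]
    have hform_s : form (ξ + η) (ξ + η) = 2 * form ξ η := by
      rw [hform _ hs _ hs, hts, hc1]
      simp only [map_add, LinearMap.add_apply]
      have s1 : B (t ξ : L) (t ξ : L) = 0 := by rw [← hform ξ hξ ξ hξ]; exact hnull ξ hξ
      have s2 : B (t η : L) (t η : L) = 0 := by rw [← hform η hη η hη]; exact hnull η hη
      have s3 : B (t η : L) (t ξ : L) = form ξ η := by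
        rw [hBsym]; exact (hform ξ hξ η hη).symm
      have s4 : B (t ξ : L) (t η : L) = form ξ η := (hform ξ hξ η hη).symm
      rw [s1, s2, s3, s4]; ring
    rw [hnull _ hs] at hform_s
    exact hc ((mul_eq_zero.mp hform_s.symm).resolve_left two_ne)
  -- main claim
  have claim1 : ∀ ξ ∈ R, ∀ η ∈ R, form ξ η = 0 := by
    intro ξ hξ η hη
    by_contra hc
    have hξb : Lrt ξ ≠ ⊥ := by rw [hR] at hξ; exact hξ
    obtain ⟨x, hx, hx0⟩ := (Submodule.ne_bot_iff (Lrt ξ)).mp hξb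
    -- find y pairing nontrivially with x
    obtain ⟨ζ, y, hy, hxy⟩ : ∃ ζ, ∃ y ∈ Lrt ζ, B x y ≠ 0 := by
      by_contra hall
      push_neg at hall
      refine hx0 (hA2.1 x fun w => ?_)
      have hle : (⊤ : Submodule F L) ≤ LinearMap.ker (B x) := by
        rw [← hdecomp]
        refine iSup_le fun ζ u hu => ?_
        simp only [LinearMap.mem_ker]
        exact hall ζ u hu
      exact hle (Submodule.mem_top (x := w))
    have hζ : ζ = -ξ := by
      by_contra hne
      refine hxy (ortho ξ ζ (fun h => hne ?_) x hx y hy)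
      have := congrArg (fun f => f - ξ) h
      simpa using this
    subst hζ
    have hy0 : y ≠ 0 := fun h => hxy (by simp [h])
    have hnegξ : (-ξ : Module.Dual F ↥H) ∈ R := by
      rw [hR]
      exact fun hbot => hy0 (by rw [hbot] at hy; simpa using hy)
    have hc1 : ((-t ξ : ↥H) : L) = -(t ξ : L) := rfl
    have htneg : t (-ξ) = - t ξ := by
      refine tuniq _ hnegξ _ fun h => ?_
      simp only [hc1, map_neg, LinearMap.neg_apply]
      rw [← hA3 ξ hξ h]
    have hnr1 : (ξ + η) ∉ R := notroot ξ hξ η hη hc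
    have hnr2 : (-ξ + η) ∉ R := by
      refine notroot (-ξ) hnegξ η hη ?_
      rw [hform _ hnegξ _ hη, htneg, hc1]
      simp only [map_neg, LinearMap.neg_apply]
      rw [← hform ξ hξ η hη]
      simpa using hc
    have hbot1 : Lrt (ξ + η) = ⊥ := by
      by_contra hb
      exact hnr1 (by rw [hR]; exact hb)
    have hbot2 : Lrt (-ξ + η) = ⊥ := by
      by_contra hb
      exact hnr2 (by rw [hR]; exact hb)
    have hηb : Lrt η ≠ ⊥ := by rw [hR] at hη; exact hη
    obtain ⟨z, hz, hz0⟩ := (Submodule.ne_bot_iff (Lrt η)).mp hηb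
    have hxz : ⁅x, z⁆ = 0 := by
      have hm := brkt ξ η x z hx hz
      rw [hbot1] at hm
      simpa using hm
    have hyz : ⁅y, z⁆ = 0 := by
      have hm := brkt (-ξ) η y z hy hz
      rw [hbot2] at hm
      simpa using hm
    have hzero : ⁅⁅x, y⁆, z⁆ = 0 := by
      rw [lie_lie, hxz, hyz]
      simp
    -- ⁅x,y⁆ lies in H and equals B x y • t ξ
    have hxyH : ⁅x, y⁆ ∈ H.toSubmodule := by
      have hm := brkt ξ (-ξ) x y hx hy
      rw [add_neg_cancel, hA1] at hm
      exact hm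
    have hrep : (⟨⁅x, y⁆, hxyH⟩ : ↥H) = B x y • t ξ := by
      have key : ∀ h : ↥H,
          B (((⟨⁅x, y⁆, hxyH⟩ : ↥H) - B x y • t ξ : ↥H) : L) (h : L) = 0 := by
        intro h
        have hc2 : (((⟨⁅x, y⁆, hxyH⟩ : ↥H) - B x y • t ξ : ↥H) : L)
            = ⁅x, y⁆ - B x y • (t ξ : L) := rfl
        rw [hc2, map_sub, LinearMap.sub_apply, map_smul, LinearMap.smul_apply]
        have e1 : B ⁅x, y⁆ (h : L) = B x ⁅y, (h : L)⁆ := hBinv x y (h : L)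
        have e2 : ⁅y, (h : L)⁆ = ξ h • y := by
          have h4 : ⁅y, (h : L)⁆ = -⁅(h : L), y⁆ := by rw [← lie_skew]
          rw [h4, (hLrt (-ξ) y).mp hy h]
          simp
        rw [e1, e2, map_smul, hA3 ξ hξ h, smul_eq_mul, smul_eq_mul]
        ring
      have h5 := hHnd _ key
      rw [sub_eq_zero] at h5
      exact h5
    have hcoe : ⁅x, y⁆ = B x y • (t ξ : L) := by
      have := congrArg (fun v : ↥H => (v : L)) hrep
      simpa using this
    have hval : ⁅⁅x, y⁆, z⁆ = (B x y * η (t ξ)) • z := by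
      rw [hcoe, smul_lie, (hLrt η z).mp hz (t ξ), smul_smul]
    have hηt : η (t ξ) = form ξ η := by
      rw [hA3 η hη (t ξ), hBsym, ← hform ξ hξ η hη]
    rw [hzero, hηt] at hval
    rcases smul_eq_zero.mp hval.symm with h0 | h0
    · rcases mul_eq_zero.mp h0 with h1 | h1
      · exact hxy h1
      · exact hc h1
    · exact hz0 h0
  refine ⟨claim1, ?_⟩
  rintro v ⟨n, q, ζ, hζ, rfl⟩ w ⟨m, p, ζ', hζ', rfl⟩
  have hz : ∀ (i : Fin n) (j : Fin m), form (ζ i) (ζ' j) = 0 :=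
    fun i j => claim1 _ (hζ i) _ (hζ' j)
  simp [map_sum, map_smul, LinearMap.sum_apply, LinearMap.smul_apply, hz]
end

section
/- Let X be a vector space over an arbitrary field equipped with a nondegenerate symmetric bilinear form (·,·) (nondegenerate meaning: if (v,w) = 0 for all w ∈ X then v = 0). Let Y be a finite-dimensional subspace of X. Then there exists a finite-dimensional subspace Ỹ of X containing Y such that the restriction of (·,·) to Ỹ × Ỹ is nondegenerate. -/
private theorem lemma_3_6_aux
    {K X : Type*} [Field K] [AddCommGroup X] [Module K X]
    (B : LinearMap.BilinForm K X)
    (hsym : ∀ v w : X, B v w = B w v)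
    (hnd : ∀ v : X, (∀ w : X, B v w = 0) → v = 0) :
    ∀ n : ℕ, ∀ Y : Submodule K X, FiniteDimensional K ↥Y →
      Module.finrank K ↥(Y ⊓ B.orthogonal Y) = n →
    ∃ Ytilde : Submodule K X, Y ≤ Ytilde ∧ FiniteDimensional K ↥Ytilde ∧
      ∀ v ∈ Ytilde, (∀ w ∈ Ytilde, B v w = 0) → v = 0 := by
  intro n
  induction n using Nat.strong_induction_on with
  | _ n ih =>
    intro Y hFD hrank
    haveI := hFD
    haveI : FiniteDimensional K ↥(Y ⊓ B.orthogonal Y) :=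
      Submodule.finiteDimensional_of_le inf_le_left
    by_cases h0 : Y ⊓ B.orthogonal Y = ⊥
    · refine ⟨Y, le_rfl, hFD, ?_⟩
      intro v hv hv0
      have hmem : v ∈ Y ⊓ B.orthogonal Y :=
        ⟨hv, fun w hw => by rw [hsym]; exact hv0 w hw⟩
      rw [h0, Submodule.mem_bot] at hmem
      exact hmem
    · obtain ⟨v, hv, hvne⟩ := Submodule.exists_mem_ne_zero_of_ne_bot h0
      obtain ⟨hvY, hvOrth⟩ := hv
      have : ¬ ∀ w : X, B v w = 0 := fun h => hvne (hnd v h)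
      push_neg at this
      obtain ⟨w, hw⟩ := this
      set Y' : Submodule K X := Y ⊔ K ∙ w with hY'
      haveI hFD' : FiniteDimensional K ↥Y' := Submodule.finiteDimensional_sup Y (K ∙ w)
      have hwY' : w ∈ Y' := Submodule.mem_sup_right (Submodule.mem_span_singleton_self w)
      have hYle : Y ≤ Y' := le_sup_left
      -- radical of Y' is contained in radical of Y
      have hradle : Y' ⊓ B.orthogonal Y' ≤ Y ⊓ B.orthogonal Y := by
        rintro u ⟨huY', huOrth⟩
        obtain ⟨y, hy, z, hz, rfl⟩ := Submodule.mem_sup.mp huY'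
        obtain ⟨c, rfl⟩ := Submodule.mem_span_singleton.mp hz
        have h1 : B v (y + c • w) = 0 := huOrth v (hYle hvY)
        have h2 : B v y = 0 := by rw [hsym]; exact hvOrth y hy
        rw [map_add, map_smul, h2, zero_add, smul_eq_mul] at h1
        have hc : c = 0 := by
          rcases mul_eq_zero.mp h1 with h | h
          · exact h
          · exact absurd h hw
        subst hc
        rw [zero_smul, add_zero] at huOrth ⊢
        exact ⟨hy, fun x hx => huOrth x (hYle hx)⟩
      have hvnot : v ∉ Y' ⊓ B.orthogonal Y' := by
        rintro ⟨-, hOrth⟩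
        have := hOrth w hwY'
        rw [hsym] at this
        exact hw this
      have hlt : Y' ⊓ B.orthogonal Y' < Y ⊓ B.orthogonal Y :=
        lt_of_le_of_ne hradle (fun heq => hvnot (heq ▸ ⟨hvY, hvOrth⟩))
      have hfr : Module.finrank K ↥(Y' ⊓ B.orthogonal Y') < n :=
        hrank ▸ Submodule.finrank_lt_finrank_of_lt hlt
      obtain ⟨Yt, hle, hFDt, hnd'⟩ :=
        ih _ hfr Y' hFD' rfl
      exact ⟨Yt, le_trans hYle hle, hFDt, hnd'⟩

theorem lemma_3_6
    {K X : Type*} [Field K] [AddCommGroup X] [Module K X]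
    (B : LinearMap.BilinForm K X)
    (hsym : ∀ v w : X, B v w = B w v)
    (hnd : ∀ v : X, (∀ w : X, B v w = 0) → v = 0)
    (Y : Submodule K X) (hY : FiniteDimensional K ↥Y) :
    ∃ Ytilde : Submodule K X, Y ≤ Ytilde ∧ FiniteDimensional K ↥Ytilde ∧
      ∀ v ∈ Ytilde, (∀ w ∈ Ytilde, B v w = 0) → v = 0 :=
  lemma_3_6_aux B hsym hnd _ Y hY rfl
end

section
/- For every finite-dimensional ℚ-subspace W̄ of V̄, the intersection R̄ ∩ W̄ is a finite set; moreover for every nonzero ᾱ ∈ R̄ the reflection σ_ᾱ(v̄) = v̄ − (2(v̄,ᾱ)/(ᾱ,ᾱ))·ᾱ maps R̄ onto R̄. Hence (R̄, V̄) is a locally finite irreducible root system. -/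
set_option linter.unusedSectionVars false

set_option maxHeartbeats 1000000

structure Leala (F L Vbar : Type*) [Field F] [CharZero F] [LieRing L] [LieAlgebra F L]
    [AddCommGroup Vbar] [Module ℚ Vbar] where
  H : LieSubalgebra F L
  Lrt : Module.Dual F ↥H → Submodule F L
  hLrt : ∀ ξ (x : L), x ∈ Lrt ξ ↔ ∀ h : ↥H, ⁅(h : L), x⁆ = ξ h • x
  hdecomp : ⨆ ξ, Lrt ξ = ⊤
  B : LinearMap.BilinForm F L
  hBsym : ∀ x y : L, B x y = B y x
  hBinv : ∀ x y z : L, B ⁅x, y⁆ z = B x ⁅y, z⁆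
  hA1 : Lrt 0 = H.toSubmodule
  hA2 : B.Nondegenerate
  t : Module.Dual F ↥H → ↥H
  hA3 : ∀ ξ, Lrt ξ ≠ ⊥ → ∀ h : ↥H, ξ h = B (t ξ) h
  form : LinearMap.BilinForm F (Module.Dual F ↥H)
  hform : ∀ ξ, Lrt ξ ≠ ⊥ → ∀ η, Lrt η ≠ ⊥ → form ξ η = B (t ξ : L) (t η : L)
  hA4 : ∀ α, Lrt α ≠ ⊥ → form α α ≠ 0 → ∀ x ∈ Lrt α, ∀ y : L,
      ∃ n : ℕ, ((LieAlgebra.ad F L x) ^ n) y = 0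
  hscale : ∀ β, Lrt β ≠ ⊥ → form β β ≠ 0 → ∃ q : ℚ, form β β = (q : F)
  pr : Module.Dual F ↥H → Vbar
  hπadd : ∀ v w, pr (v + w) = pr v + pr w
  hπsmul : ∀ (q : ℚ) v, pr ((q : F) • v) = q • pr v
  hπker : ∀ v, (∃ (n : ℕ) (q : Fin n → ℚ) (ζ : Fin n → Module.Dual F ↥H),
        (∀ i, Lrt (ζ i) ≠ ⊥) ∧ v = ∑ i, (q i : F) • ζ i) →
      (pr v = 0 ↔ ∀ u, Lrt u ≠ ⊥ → form v u = 0)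
  hπsurj : Submodule.span ℚ (pr '' {ξ | Lrt ξ ≠ ⊥}) = ⊤

namespace Leala

variable {F L Vbar : Type*} [Field F] [CharZero F] [LieRing L] [LieAlgebra F L]
  [AddCommGroup Vbar] [Module ℚ Vbar] (S : Leala F L Vbar)

lemma lie_act {ξ : Module.Dual F ↥S.H} {x : L} (hx : x ∈ S.Lrt ξ) (h : ↥S.H) :
    ⁅(h : L), x⁆ = ξ h • x := (S.hLrt ξ x).1 hx h

lemma lie_mem {μ ν : Module.Dual F ↥S.H} {x y : L} (hx : x ∈ S.Lrt μ) (hy : y ∈ S.Lrt ν) :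
    ⁅x, y⁆ ∈ S.Lrt (μ + ν) := by
  rw [S.hLrt]
  intro h
  rw [leibniz_lie, S.lie_act hx h, S.lie_act hy h, smul_lie, lie_smul,
    LinearMap.add_apply, add_smul]

lemma B_orth {μ ν : Module.Dual F ↥S.H} (hμν : μ + ν ≠ 0) {x y : L}
    (hx : x ∈ S.Lrt μ) (hy : y ∈ S.Lrt ν) : S.B x y = 0 := by
  obtain ⟨h, hh⟩ : ∃ h : ↥S.H, (μ + ν) h ≠ 0 := by
    by_contra hc
    push_neg at hc
    exact hμν (by ext h; simpa using hc h)
  have h1 : S.B ⁅(h : L), x⁆ y = μ h * S.B x y := by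
    rw [S.lie_act hx h, map_smul, LinearMap.smul_apply, smul_eq_mul]
  have h2 : -(S.B ⁅(h : L), x⁆ y) = ν h * S.B x y := by
    have h3 := S.hBinv x (h : L) y
    rw [S.lie_act hy h, map_smul, smul_eq_mul, ← lie_skew, map_neg,
      LinearMap.neg_apply] at h3
    exact h3
  have key : ((μ + ν) h) * S.B x y = 0 := by
    rw [LinearMap.add_apply]
    linear_combination -h1 - h2
  rcases mul_eq_zero.1 key with h' | h'
  · exact absurd h' hh
  · exact h'

lemma exists_pair {μ : Module.Dual F ↥S.H} {x : L} (hx : x ∈ S.Lrt μ) (hx0 : x ≠ 0) :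
    ∃ y ∈ S.Lrt (-μ), S.B x y ≠ 0 := by
  obtain ⟨w, hw⟩ : ∃ w, S.B x w ≠ 0 := by
    by_contra hc
    push_neg at hc
    exact hx0 (S.hA2.1 x hc)
  have hK : S.Lrt (-μ) ⊔ LinearMap.ker (S.B x) = ⊤ := by
    rw [eq_top_iff, ← S.hdecomp]
    apply iSup_le
    intro ν
    by_cases hν : ν = -μ
    · subst hν; exact le_sup_left
    · apply le_sup_of_le_right
      intro z hz
      rw [LinearMap.mem_ker]
      apply S.B_orth _ hx hz
      intro hc
      exact hν (eq_neg_of_add_eq_zero_right hc)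
  obtain ⟨y, hy, z, hz, rfl⟩ := Submodule.mem_sup.1 (hK ▸ Submodule.mem_top (x := w))
  refine ⟨y, hy, fun hc => hw ?_⟩
  rw [map_add, hc, LinearMap.mem_ker.1 hz, zero_add]

lemma ne_bot_neg {ξ : Module.Dual F ↥S.H} (hξ : S.Lrt ξ ≠ ⊥) : S.Lrt (-ξ) ≠ ⊥ := by
  obtain ⟨x, hx, hx0⟩ := (Submodule.ne_bot_iff _).1 hξ
  obtain ⟨y, hy, hBy⟩ := S.exists_pair hx hx0
  exact (Submodule.ne_bot_iff _).2 ⟨y, hy, fun h => hBy (by simp [h])⟩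

lemma form_symm {ξ η : Module.Dual F ↥S.H} (hξ : S.Lrt ξ ≠ ⊥) (hη : S.Lrt η ≠ ⊥) :
    S.form ξ η = S.form η ξ := by
  rw [S.hform _ hξ _ hη, S.hform _ hη _ hξ, S.hBsym]

lemma ne_bot_of_mem {θ : Module.Dual F ↥S.H} {z : L} (hz : z ∈ S.Lrt θ) (hz0 : z ≠ 0) :
    S.Lrt θ ≠ ⊥ := (Submodule.ne_bot_iff _).2 ⟨z, hz, hz0⟩

/-- key scalar-action computation: for `x ∈ L_μ`, `y ∈ L_{-μ}`, `z ∈ L_θ`,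
`[[x,y],z] = ((μ,θ) B(x,y)) z`. -/
lemma lie_lie_act {μ θ : Module.Dual F ↥S.H} {x y z : L} (hμ : S.Lrt μ ≠ ⊥)
    (hx : x ∈ S.Lrt μ) (hy : y ∈ S.Lrt (-μ)) (hz : z ∈ S.Lrt θ) :
    ⁅⁅x, y⁆, z⁆ = (S.form μ θ * S.B x y) • z := by
  rcases eq_or_ne z 0 with rfl | hz0
  · simp
  have hθ : S.Lrt θ ≠ ⊥ := S.ne_bot_of_mem hz hz0
  have hxy : ⁅x, y⁆ ∈ S.Lrt 0 := by
    have := S.lie_mem hx hy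
    rwa [add_neg_cancel] at this
  rw [S.hA1] at hxy
  set h₀ : ↥S.H := ⟨⁅x, y⁆, hxy⟩ with hh₀
  have hco : (h₀ : L) = ⁅x, y⁆ := rfl
  calc ⁅⁅x, y⁆, z⁆ = ⁅(h₀ : L), z⁆ := by rw [hco]
    _ = θ h₀ • z := S.lie_act hz h₀
    _ = (S.form μ θ * S.B x y) • z := by
        congr 1
        rw [S.hA3 _ hθ h₀, hco, ← S.hBinv, S.lie_act hx (S.t θ), map_smul,
          LinearMap.smul_apply, smul_eq_mul, S.hA3 _ hμ (S.t θ), ← S.hform _ hμ _ hθ]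

/-- powers of ad in root spaces -/
lemma ad_pow_mem {ν θ : Module.Dual F ↥S.H} {y v : L} (hy : y ∈ S.Lrt ν) (hv : v ∈ S.Lrt θ) :
    ∀ n : ℕ, ((LieAlgebra.ad F L y) ^ n) v ∈ S.Lrt (θ + (n : F) • ν) := by
  intro n
  induction n with
  | zero => simpa using hv
  | succ n ih =>
      have h1 : ((LieAlgebra.ad F L y) ^ (n + 1)) v
          = ⁅y, ((LieAlgebra.ad F L y) ^ n) v⁆ := by
        rw [pow_succ', Module.End.mul_apply, LieAlgebra.ad_apply]
      rw [h1]
      have h2 := S.lie_mem hy ih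
      have h3 : θ + ((n + 1 : ℕ) : F) • ν = ν + (θ + (n : F) • ν) := by
        push_cast
        module
      rw [h3]
      exact h2

/-- the chain identity -/
lemma ad_pow_chain {x y v : L} (hv : ⁅x, v⁆ = 0) (c : ℕ → F)
    (hc : ∀ j, ⁅⁅x, y⁆, ((LieAlgebra.ad F L y) ^ j) v⁆ = c j • ((LieAlgebra.ad F L y) ^ j) v) :
    ∀ n : ℕ, ⁅x, ((LieAlgebra.ad F L y) ^ (n + 1)) v⁆
      = (∑ j ∈ Finset.range (n + 1), c j) • ((LieAlgebra.ad F L y) ^ n) v := by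
  intro n
  induction n with
  | zero =>
      rw [pow_one, LieAlgebra.ad_apply, leibniz_lie, hv, lie_zero, add_zero]
      simpa using hc 0
  | succ n ih =>
      have h1 : ((LieAlgebra.ad F L y) ^ (n + 2)) v
          = ⁅y, ((LieAlgebra.ad F L y) ^ (n + 1)) v⁆ := by
        rw [pow_succ', Module.End.mul_apply, LieAlgebra.ad_apply]
      have h2 : ⁅y, ((LieAlgebra.ad F L y) ^ n) v⁆ = ((LieAlgebra.ad F L y) ^ (n + 1)) v := by
        rw [pow_succ', Module.End.mul_apply, LieAlgebra.ad_apply]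
      have h4 : (∑ j ∈ Finset.range (n + 2), c j)
          = (∑ j ∈ Finset.range (n + 1), c j) + c (n + 1) := Finset.sum_range_succ c (n + 1)
      rw [h1, leibniz_lie, hc (n + 1), ih, lie_smul, h2, h4, add_smul]
      abel

lemma gauss (n : ℕ) : (2 : F) * ∑ j ∈ Finset.range n, (j : F) = (n : F) * ((n : F) - 1) := by
  induction n with
  | zero => simp
  | succ n ih =>
      rw [Finset.sum_range_succ, mul_add, ih]
      push_cast
      ring

lemma sumAux {F : Type*} [Field F] (A q b : F) :
    ∀ n : ℕ, 2 * (∑ j ∈ Finset.range n, (A - (j : F) * q) * b)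
      = (2 * (n : F) * A - (n : F) * ((n : F) - 1) * q) * b := by
  intro n
  induction n with
  | zero => simp
  | succ n ih =>
      rw [Finset.sum_range_succ, mul_add, ih]
      push_cast
      ring

lemma int_cast_cancel {F : Type*} [Field F] [CharZero F] {z z' : ℤ} {q : F} (hq : q ≠ 0)
    (h : (z : F) * q = (z' : F) * q) : z = z' := by
  have := mul_right_cancel₀ hq h
  exact_mod_cast this

lemma form_neg_neg {α : Module.Dual F ↥S.H} : S.form (-α) (-α) = S.form α α := by
  simp

lemma form_neg_left {α ξ : Module.Dual F ↥S.H} : S.form (-α) ξ = -(S.form α ξ) := by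
  simp

/-- Integrality of Cartan numbers together with the root string through ξ. -/
lemma key {α ξ : Module.Dual F ↥S.H} (hα : S.Lrt α ≠ ⊥) (hq : S.form α α ≠ 0)
    (hξ : S.Lrt ξ ≠ ⊥) :
    ∃ (z : ℤ) (m : ℕ), (z : F) * S.form α α = 2 * S.form α ξ ∧
      ∀ j : ℤ, -z - m ≤ j → j ≤ m → S.Lrt (ξ + (j : F) • α) ≠ ⊥ := by
  classical
  obtain ⟨x, hx, hx0⟩ := (Submodule.ne_bot_iff _).1 hα
  obtain ⟨y, hy, hb⟩ := S.exists_pair hx hx0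
  obtain ⟨v, hv, hv0⟩ := (Submodule.ne_bot_iff _).1 hξ
  -- the e-height m of v
  have hnilx : ∃ k : ℕ, ((LieAlgebra.ad F L x) ^ k) v = 0 := S.hA4 α hα hq x hx v
  have hk₀pos : Nat.find hnilx ≠ 0 := by
    intro h
    have h2 := Nat.find_spec hnilx
    rw [h, pow_zero, Module.End.one_apply] at h2
    exact hv0 h2
  obtain ⟨m, hm⟩ : ∃ m, Nat.find hnilx = m + 1 := Nat.exists_eq_succ_of_ne_zero hk₀pos
  set w := ((LieAlgebra.ad F L x) ^ m) v with hwdef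
  have hw0 : w ≠ 0 := Nat.find_min hnilx (by omega)
  have hxw : ⁅x, w⁆ = 0 := by
    have h2 : ((LieAlgebra.ad F L x) ^ (m + 1)) v = 0 := by
      rw [← hm]; exact Nat.find_spec hnilx
    rw [pow_succ', Module.End.mul_apply, LieAlgebra.ad_apply] at h2
    exact h2
  have hwmem : w ∈ S.Lrt (ξ + (m : F) • α) := S.ad_pow_mem hx hv m
  set ψ := ξ + (m : F) • α with hψdef
  -- f-side
  have hnα : S.Lrt (-α) ≠ ⊥ := S.ne_bot_neg hα
  have hq' : S.form (-α) (-α) ≠ 0 := by rw [S.form_neg_neg]; exact hq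
  have hnily : ∃ k : ℕ, ((LieAlgebra.ad F L y) ^ k) w = 0 := S.hA4 (-α) hnα hq' y hy w
  have hn₀pos : Nat.find hnily ≠ 0 := by
    intro h
    have h2 := Nat.find_spec hnily
    rw [h, pow_zero, Module.End.one_apply] at h2
    exact hw0 h2
  obtain ⟨n₁, hn₁⟩ : ∃ n₁, Nat.find hnily = n₁ + 1 := Nat.exists_eq_succ_of_ne_zero hn₀pos
  set n₀ := Nat.find hnily with hn₀def
  -- the chain scalars
  set c : ℕ → F := fun j => S.form α (ψ + (j : F) • (-α)) * S.B x y with hcdef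
  have hc : ∀ j, ⁅⁅x, y⁆, ((LieAlgebra.ad F L y) ^ j) w⁆
      = c j • ((LieAlgebra.ad F L y) ^ j) w := by
    intro j
    exact S.lie_lie_act hα hx hy (S.ad_pow_mem hy hwmem j)
  have hcval : ∀ j : ℕ, c j = (S.form α ψ - (j : F) * S.form α α) * S.B x y := by
    intro j
    rw [hcdef]
    simp only [map_add, map_smul, map_neg, smul_eq_mul]
    ring
  have hsum0 : (∑ j ∈ Finset.range n₀, c j) = 0 := by
    by_contra hs
    have hid := ad_pow_chain hxw c hc n₁
    have hz0 : ((LieAlgebra.ad F L y) ^ (n₁ + 1)) w = 0 := by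
      rw [← hn₁]; exact Nat.find_spec hnily
    rw [hz0, lie_zero, ← hn₁] at hid
    have hne : ((LieAlgebra.ad F L y) ^ n₁) w ≠ 0 := Nat.find_min hnily (by omega)
    rw [eq_comm, smul_eq_zero] at hid
    rcases hid with h | h
    · exact hs h
    · exact hne h
  have hkey : (2 * (n₀ : F) * S.form α ψ - (n₀ : F) * ((n₀ : F) - 1) * S.form α α) * S.B x y
      = 0 := by
    rw [← sumAux (S.form α ψ) (S.form α α) (S.B x y) n₀]
    have h3 : ∑ j ∈ Finset.range n₀, (S.form α ψ - (j : F) * S.form α α) * S.B x y = 0 := by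
      rw [← hsum0]
      exact Finset.sum_congr rfl (fun j _ => (hcval j).symm)
    rw [h3, mul_zero]
  have hE : 2 * (n₀ : F) * S.form α ψ = (n₀ : F) * ((n₀ : F) - 1) * S.form α α :=
    sub_eq_zero.1 ((mul_eq_zero.1 hkey).resolve_right hb)
  have hn₀F : (n₀ : F) ≠ 0 := Nat.cast_ne_zero.2 hn₀pos
  have h2A : 2 * S.form α ψ = ((n₀ : F) - 1) * S.form α α := by
    apply mul_left_cancel₀ hn₀F
    linear_combination hE
  have hψval : S.form α ψ = S.form α ξ + (m : F) * S.form α α := by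
    rw [hψdef]
    simp only [map_add, map_smul, smul_eq_mul]
  refine ⟨(n₁ : ℤ) - 2 * m, m, ?_, ?_⟩
  · have : ((n₀ : F) - 1) = (n₁ : F) := by rw [hn₁]; push_cast; ring
    rw [this, hψval] at h2A
    push_cast
    linear_combination -h2A
  · intro j hj1 hj2
    have hj'nn : (0 : ℤ) ≤ (m : ℤ) - j := by omega
    set j' : ℕ := ((m : ℤ) - j).toNat with hj'def
    have hj' : (j' : ℤ) = (m : ℤ) - j := Int.toNat_of_nonneg hj'nn
    have hj'n : j' < n₀ := by omega
    have hne : ((LieAlgebra.ad F L y) ^ j') w ≠ 0 := Nat.find_min hnily hj'n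
    have hmem : ((LieAlgebra.ad F L y) ^ j') w ∈ S.Lrt (ψ + (j' : F) • (-α)) :=
      S.ad_pow_mem hy hwmem j'
    have hcast : (j' : F) = (m : F) - ((j : ℤ) : F) := by
      have := congrArg (fun z : ℤ => (z : F)) hj'
      push_cast at this
      exact this
    have hfun : ψ + (j' : F) • (-α) = ξ + ((j : ℤ) : F) • α := by
      rw [hψdef, hcast]
      module
    rw [hfun] at hmem
    exact S.ne_bot_of_mem hmem hne

/-- reflections preserve roots -/
lemma refl_root {α ξ : Module.Dual F ↥S.H} (hα : S.Lrt α ≠ ⊥) (hq : S.form α α ≠ 0)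
    (hξ : S.Lrt ξ ≠ ⊥) {z : ℤ} (hz : (z : F) * S.form α α = 2 * S.form α ξ) :
    S.Lrt (ξ - (z : F) • α) ≠ ⊥ := by
  obtain ⟨z₁, m₁, hz₁, hint₁⟩ := S.key hα hq hξ
  have hzz₁ : z = z₁ := int_cast_cancel hq (hz.trans hz₁.symm)
  subst hzz₁
  by_cases hcase : -z ≤ (m₁ : ℤ)
  · have h2 := hint₁ (-z) (by omega) hcase
    have hfun : ξ + ((-z : ℤ) : F) • α = ξ - (z : F) • α := by push_cast; module
    rwa [hfun] at h2
  · have hnα := S.ne_bot_neg hα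
    have hq' : S.form (-α) (-α) ≠ 0 := by rw [S.form_neg_neg]; exact hq
    obtain ⟨z₂, m₂, hz₂, hint₂⟩ := S.key hnα hq' hξ
    have hz₂' : z₂ = -z := by
      apply int_cast_cancel hq'
      rw [hz₂]
      rw [S.form_neg_neg, S.form_neg_left]
      push_cast
      linear_combination hz
    have h2 := hint₂ z (by omega) (by omega)
    have hfun : ξ + ((z : ℤ) : F) • (-α) = ξ - (z : F) • α := by push_cast; module
    rwa [hfun] at h2

lemma exists_rat_norm {ξ : Module.Dual F ↥S.H} (hξ : S.Lrt ξ ≠ ⊥) :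
    ∃ c : ℚ, (c : F) = S.form ξ ξ := by
  by_cases h : S.form ξ ξ = 0
  · exact ⟨0, by simp [h]⟩
  · obtain ⟨q, hq⟩ := S.hscale ξ hξ h
    exact ⟨q, hq.symm⟩

lemma form_expand (μ ν : Module.Dual F ↥S.H) (s r : F) :
    S.form (μ + s • ν) (μ + r • ν)
      = S.form μ μ + r * S.form μ ν + s * S.form ν μ + s * r * S.form ν ν := by
  simp only [map_add, LinearMap.add_apply, map_smul, LinearMap.smul_apply, smul_eq_mul]
  ring

/-- isotropic roots are orthogonal to all roots -/
lemma isotropic_orth {δ u : Module.Dual F ↥S.H} (hδ : S.Lrt δ ≠ ⊥) (hδ0 : S.form δ δ = 0)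
    (hu : S.Lrt u ≠ ⊥) : S.form δ u = 0 := by
  classical
  by_contra ha
  have hsymuδ : S.form u δ = S.form δ u := S.form_symm hu hδ
  -- infinite consecutive ray of roots u + j δ
  have ray : ∀ J : ℕ, ∃ j : ℤ, ((J : ℤ) ≤ j ∨ j ≤ -(J : ℤ)) ∧
      S.Lrt (u + ((j : ℤ) : F) • δ) ≠ ⊥ ∧ S.Lrt (u + ((j + 1 : ℤ) : F) • δ) ≠ ⊥ := by
    by_cases hup : ∀ i : ℕ, S.Lrt (u + (i : F) • δ) ≠ ⊥
    · intro J
      refine ⟨(J : ℤ), Or.inl le_rfl, ?_, ?_⟩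
      · have h2 := hup J
        have hfun : u + (J : F) • δ = u + (((J : ℕ) : ℤ) : F) • δ := by push_cast; module
        rwa [hfun] at h2
      · have h2 := hup (J + 1)
        have hfun : u + ((J + 1 : ℕ) : F) • δ = u + ((((J : ℕ) : ℤ) + 1 : ℤ) : F) • δ := by
          push_cast; module
        rwa [hfun] at h2
    · push_neg at hup
      obtain ⟨i₀, hi₀⟩ := hup
      have hex : ∃ i : ℕ, S.Lrt (u + (i : F) • δ) = ⊥ := ⟨i₀, hi₀⟩
      have hi₁0 : Nat.find hex ≠ 0 := by
        intro h
        have h2 := Nat.find_spec hex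
        rw [h] at h2
        apply hu
        have hfun : u + ((0 : ℕ) : F) • δ = u := by push_cast; module
        rwa [hfun] at h2
      obtain ⟨i₂, hi₂⟩ : ∃ i₂, Nat.find hex = i₂ + 1 := Nat.exists_eq_succ_of_ne_zero hi₁0
      have htop : S.Lrt (u + (i₂ : F) • δ) ≠ ⊥ := Nat.find_min hex (by omega)
      have hzero : S.Lrt (u + ((i₂ + 1 : ℕ) : F) • δ) = ⊥ := by
        rw [← hi₂]; exact Nat.find_spec hex
      obtain ⟨x, hx, hx0⟩ := (Submodule.ne_bot_iff _).1 hδ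
      obtain ⟨y, hy, hb⟩ := S.exists_pair hx hx0
      obtain ⟨w, hw, hw0⟩ := (Submodule.ne_bot_iff _).1 htop
      have hxw : ⁅x, w⁆ = 0 := by
        have h2 := S.lie_mem hx hw
        have hfun : δ + (u + (i₂ : F) • δ) = u + ((i₂ + 1 : ℕ) : F) • δ := by
          push_cast; module
        rw [hfun, hzero] at h2
        simpa using h2
      set c : ℕ → F := fun j => S.form δ ((u + (i₂ : F) • δ) + (j : F) • (-δ)) * S.B x y
        with hcdef
      have hc : ∀ j, ⁅⁅x, y⁆, ((LieAlgebra.ad F L y) ^ j) w⁆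
          = c j • ((LieAlgebra.ad F L y) ^ j) w := fun j =>
        S.lie_lie_act hδ hx hy (S.ad_pow_mem hy hw j)
      have hcval : ∀ j : ℕ, c j = S.form δ u * S.B x y := by
        intro j
        rw [hcdef]
        simp only [map_add, map_smul, map_neg, smul_eq_mul, hδ0]
        ring
      have hpow : ∀ k : ℕ, ((LieAlgebra.ad F L y) ^ k) w ≠ 0 := by
        intro k
        induction k with
        | zero => simpa using hw0
        | succ k ih =>
            intro hzero2
            have hid := ad_pow_chain hxw c hc k
            rw [hzero2, lie_zero] at hid
            have hid2 := hid.symm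
            rw [smul_eq_zero] at hid2
            rcases hid2 with h | h
            · have hsum : (∑ j ∈ Finset.range (k + 1), c j)
                  = ((k : F) + 1) * (S.form δ u * S.B x y) := by
                rw [Finset.sum_congr rfl (fun j _ => hcval j), Finset.sum_const,
                  Finset.card_range, nsmul_eq_mul]
                push_cast
                ring
              rw [hsum] at h
              rcases mul_eq_zero.1 h with h' | h'
              · exact Nat.cast_add_one_ne_zero k h'
              · rcases mul_eq_zero.1 h' with h'' | h''
                · exact ha h''
                · exact hb h''
            · exact ih h
      intro J
      have mem1 := S.ad_pow_mem hy hw (i₂ + J + 1)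
      have mem2 := S.ad_pow_mem hy hw (i₂ + J)
      refine ⟨-(J : ℤ) - 1, Or.inr (by omega), ?_, ?_⟩
      · have hfun : (u + (i₂ : F) • δ) + ((i₂ + J + 1 : ℕ) : F) • (-δ)
            = u + ((-(J : ℤ) - 1 : ℤ) : F) • δ := by push_cast; module
        rw [hfun] at mem1
        exact S.ne_bot_of_mem mem1 (hpow _)
      · have hfun : (u + (i₂ : F) • δ) + ((i₂ + J : ℕ) : F) • (-δ)
            = u + ((-(J : ℤ) - 1 + 1 : ℤ) : F) • δ := by push_cast; module
        rw [hfun] at mem2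
        exact S.ne_bot_of_mem mem2 (hpow _)
  -- now derive the contradiction
  by_cases hN : S.form u u = 0
  · -- u isotropic as well
    obtain ⟨j, hj, hθj, hθj1⟩ := ray 2
    have hj0 : j ≠ 0 := by omega
    have hnorm : S.form (u + ((j : ℤ) : F) • δ) (u + ((j : ℤ) : F) • δ)
        = 2 * ((j : ℤ) : F) * S.form δ u := by
      rw [S.form_expand, hδ0, hN, hsymuδ]; ring
    have hq2 : S.form (u + ((j : ℤ) : F) • δ) (u + ((j : ℤ) : F) • δ) ≠ 0 := by
      rw [hnorm]
      exact mul_ne_zero (mul_ne_zero two_ne_zero (Int.cast_ne_zero.2 hj0)) ha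
    obtain ⟨v, m, hv, _⟩ := S.key hθj hq2 hθj1
    have hpair : S.form (u + ((j : ℤ) : F) • δ) (u + ((j + 1 : ℤ) : F) • δ)
        = ((2 * j + 1 : ℤ) : F) * S.form δ u := by
      rw [S.form_expand, hδ0, hN, hsymuδ]; push_cast; ring
    rw [hnorm, hpair] at hv
    have hZ : ((2 * j * v - (4 * j + 2) : ℤ) : F) * S.form δ u = 0 := by
      push_cast at hv ⊢
      linear_combination hv
    have hint : 2 * j * v - (4 * j + 2) = 0 := by
      rcases mul_eq_zero.1 hZ with h | h
      · exact_mod_cast h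
      · exact absurd h ha
    have h2 : 2 * (j * (v - 2)) = 2 * 1 := by linear_combination hint
    have h1 : j * (v - 2) = 1 := mul_left_cancel₀ two_ne_zero h2
    rcases Int.mul_eq_one_iff_eq_one_or_neg_one.1 h1 with ⟨hj', _⟩ | ⟨hj', _⟩ <;> omega
  · -- u anisotropic
    obtain ⟨qN, hqN⟩ := S.exists_rat_norm hu
    have hqN0 : qN ≠ 0 := by
      intro h
      rw [h] at hqN
      exact hN (by rw [← hqN]; simp)
    obtain ⟨zd, md, hzd, _⟩ := S.key hu hN hδ
    set qA : ℚ := zd * qN with hqAdef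
    have hqA : (qA : F) = 2 * S.form δ u := by
      rw [hqAdef]
      push_cast
      rw [hqN, hzd, hsymuδ]
    have hqA0 : qA ≠ 0 := by
      intro h
      rw [h] at hqA
      simp only [Rat.cast_zero] at hqA
      rcases mul_eq_zero.1 hqA.symm with h2 | h2
      · exact two_ne_zero h2
      · exact ha h2
    have hqApos : 0 < |qA| := abs_pos.2 hqA0
    obtain ⟨J, hJ⟩ := exists_nat_gt ((|qN| + |qA|) / |qA|)
    have hJ' : |qN| + |qA| < (J : ℚ) * |qA| := by
      rw [div_lt_iff₀ hqApos] at hJ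
      linarith
    obtain ⟨j, hj, hθj, hθj1⟩ := ray J
    have hjabs : (J : ℚ) ≤ |(j : ℚ)| := by
      rcases hj with h | h
      · have h2 : (J : ℚ) ≤ (j : ℚ) := by exact_mod_cast h
        exact h2.trans (le_abs_self _)
      · have h2 : (j : ℚ) ≤ -(J : ℚ) := by exact_mod_cast h
        have := neg_le_abs (j : ℚ)
        linarith
    have hbig : |qA| < |qN + (j : ℚ) * qA| := by
      have haux : |(j : ℚ) * qA| - |qN| ≤ |qN + (j : ℚ) * qA| := by
        have h3 := abs_sub_abs_le_abs_sub ((j : ℚ) * qA) (-qN)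
        rw [abs_neg, sub_neg_eq_add, add_comm] at h3
        exact h3
      rw [abs_mul] at haux
      nlinarith [abs_nonneg qA, abs_nonneg qN, abs_nonneg ((j : ℚ))]
    -- the norm of θ_j in F
    have h2norm : S.form (u + ((j : ℤ) : F) • δ) (u + ((j : ℤ) : F) • δ)
        = ((qN + (j : ℚ) * qA : ℚ) : F) := by
      rw [S.form_expand, hδ0, hsymuδ, ← hqN]
      push_cast
      rw [hqA]
      push_cast
      ring
    have hq2 : S.form (u + ((j : ℤ) : F) • δ) (u + ((j : ℤ) : F) • δ) ≠ 0 := by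
      rw [h2norm]
      rw [Rat.cast_ne_zero]
      intro h
      rw [h] at hbig
      simp at hbig
      exact absurd hbig (not_lt.2 (abs_nonneg _))
    obtain ⟨v, m, hv, _⟩ := S.key hθj hq2 hθj1
    have h2pair : 2 * S.form (u + ((j : ℤ) : F) • δ) (u + ((j + 1 : ℤ) : F) • δ)
        = ((2 * qN + (2 * (j : ℚ) + 1) * qA : ℚ) : F) := by
      rw [S.form_expand, hδ0, hsymuδ, ← hqN]
      push_cast
      rw [hqA]
      push_cast
      ring
    rw [h2norm] at hv
    rw [h2pair] at hv
    have hQ : (v : ℚ) * (qN + (j : ℚ) * qA) = 2 * qN + (2 * (j : ℚ) + 1) * qA := by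
      exact_mod_cast hv
    have hv2 : ((v : ℚ) - 2) * (qN + (j : ℚ) * qA) = qA := by linear_combination hQ
    have hvne : (v : ℚ) - 2 ≠ 0 := by
      intro h
      rw [h, zero_mul] at hv2
      exact hqA0 hv2.symm
    have h1le : (1 : ℚ) ≤ |(v : ℚ) - 2| := by
      have h3 : v - 2 ≠ 0 := by
        intro h
        apply hvne
        exact_mod_cast h
      have h4 : (1 : ℤ) ≤ |v - 2| := Int.one_le_abs h3
      exact_mod_cast h4
    have hle : |qN + (j : ℚ) * qA| ≤ |qA| := by
      calc |qN + (j : ℚ) * qA| ≤ |(v : ℚ) - 2| * |qN + (j : ℚ) * qA| :=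
            le_mul_of_one_le_left (abs_nonneg _) h1le
        _ = |qA| := by rw [← abs_mul, hv2]
    linarith

/-- reflection data: root, norm preservation, reflected pairing -/
lemma refl_data {α ξ : Module.Dual F ↥S.H} (hα : S.Lrt α ≠ ⊥) (hqα : S.form α α ≠ 0)
    (hξ : S.Lrt ξ ≠ ⊥) {z : ℤ} (hz : (z : F) * S.form α α = 2 * S.form α ξ) :
    S.Lrt (ξ - (z : F) • α) ≠ ⊥ ∧
    S.form (ξ - (z : F) • α) (ξ - (z : F) • α) = S.form ξ ξ ∧
    ((-z : ℤ) : F) * S.form α α = 2 * S.form α (ξ - (z : F) • α) := by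
  refine ⟨S.refl_root hα hqα hξ hz, ?_, ?_⟩
  · have hsym : S.form ξ α = S.form α ξ := S.form_symm hξ hα
    have hfun : ξ - (z : F) • α = ξ + (-(z : F)) • α := by module
    rw [hfun, S.form_expand, hsym]
    linear_combination (z : F) * hz
  · simp only [map_sub, map_smul, smul_eq_mul]
    push_cast
    linear_combination hz

/-- the c-bound: Cartan numbers are bounded in terms of the norms (Lemma M), positive case -/
lemma cartan_bound_core {α ξ : Module.Dual F ↥S.H} (hα : S.Lrt α ≠ ⊥) {qt : ℚ}
    (hqt : (qt : F) = S.form α α) (hq0 : qt ≠ 0) (hξ : S.Lrt ξ ≠ ⊥) {ct : ℚ}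
    (hct : (ct : F) = S.form ξ ξ) {z : ℤ} (hz : (z : F) * S.form α α = 2 * S.form α ξ)
    (h3 : 3 ≤ z) : ((z : ℚ)) * |qt| ≤ 4 * |ct| + 10 * |qt| := by
  have hq0' : S.form α α ≠ 0 := by
    rw [← hqt]
    exact Rat.cast_ne_zero.2 hq0
  obtain ⟨z₁, m, hz₁, hint⟩ := S.key hα hq0' hξ
  have hzz : z = z₁ := int_cast_cancel hq0' (hz.trans hz₁.symm)
  subst hzz
  have hsym : S.form ξ α = S.form α ξ := S.form_symm hξ hα
  -- the claim for middle points
  have claim : ∀ i : ℤ, 1 ≤ i → i ≤ z - 1 → |z - 2 * i| ≤ 2 →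
      (z = 2 * i ∨ |ct + ((i : ℚ) * (i : ℚ) - (i : ℚ) * (z : ℚ)) * qt| ≤ 2 * |qt|) := by
    intro i h1 h2 habs
    have hroot : S.Lrt (ξ + ((-i : ℤ) : F) • α) ≠ ⊥ := hint (-i) (by omega) (by omega)
    -- the norm of θ i
    have hnorm2 : 2 * S.form (ξ + ((-i : ℤ) : F) • α) (ξ + ((-i : ℤ) : F) • α)
        = 2 * (((ct + ((i : ℚ) * (i : ℚ) - (i : ℚ) * (z : ℚ)) * qt : ℚ)) : F) := by
      rw [S.form_expand, hsym]
      push_cast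
      linear_combination (-2 : F) * hct + (2 * (i : F) * (z : F) - 2 * (i : F) * (i : F)) * hqt
        + 2 * (i : F) * hz
    have hnormF : S.form (ξ + ((-i : ℤ) : F) • α) (ξ + ((-i : ℤ) : F) • α)
        = (((ct + ((i : ℚ) * (i : ℚ) - (i : ℚ) * (z : ℚ)) * qt : ℚ)) : F) :=
      mul_left_cancel₀ two_ne_zero hnorm2
    have hpairF : 2 * S.form (ξ + ((-i : ℤ) : F) • α) α
        = ((((z : ℚ) - 2 * (i : ℚ)) * qt : ℚ) : F) := by
      have hsplit : S.form (ξ + ((-i : ℤ) : F) • α) α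
          = S.form ξ α + ((-i : ℤ) : F) * S.form α α := by
        simp only [map_add, map_smul, LinearMap.add_apply, LinearMap.smul_apply, smul_eq_mul]
      rw [hsplit, hsym]
      push_cast
      linear_combination -hz - ((z : F) - 2 * (i : F)) * hqt
    by_cases hiso : S.form (ξ + ((-i : ℤ) : F) • α) (ξ + ((-i : ℤ) : F) • α) = 0
    · -- isotropic middle root: orthogonal to α
      left
      have h0 : S.form (ξ + ((-i : ℤ) : F) • α) α = 0 := S.isotropic_orth hroot hiso hα
      rw [h0, mul_zero] at hpairF
      have hq2 : ((z : ℚ) - 2 * (i : ℚ)) * qt = 0 := by exact_mod_cast hpairF.symm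
      rcases mul_eq_zero.1 hq2 with h | h
      · have : (z : ℚ) = 2 * (i : ℚ) := by linarith
        exact_mod_cast this
      · exact absurd h hq0
    · obtain ⟨v, m', hv, _⟩ := S.key hroot hiso hα
      rw [hnormF, hpairF] at hv
      have hQ : (v : ℚ) * (ct + ((i : ℚ) * (i : ℚ) - (i : ℚ) * (z : ℚ)) * qt)
          = ((z : ℚ) - 2 * (i : ℚ)) * qt := by exact_mod_cast hv
      by_cases hv0 : v = 0
      · left
        rw [hv0] at hQ
        simp only [Int.cast_zero, zero_mul] at hQ
        rcases mul_eq_zero.1 hQ.symm with h | h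
        · have : (z : ℚ) = 2 * (i : ℚ) := by linarith
          exact_mod_cast this
        · exact absurd h hq0
      · right
        have h1v : (1 : ℚ) ≤ |(v : ℚ)| := by
          have := Int.one_le_abs hv0
          exact_mod_cast this
        have habs2 : |(z : ℚ) - 2 * (i : ℚ)| ≤ 2 := by
          exact_mod_cast habs
        calc |ct + ((i : ℚ) * (i : ℚ) - (i : ℚ) * (z : ℚ)) * qt|
            ≤ |(v : ℚ)| * |ct + ((i : ℚ) * (i : ℚ) - (i : ℚ) * (z : ℚ)) * qt| :=
              le_mul_of_one_le_left (abs_nonneg _) h1v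
          _ = |((z : ℚ) - 2 * (i : ℚ)) * qt| := by rw [← abs_mul, hQ]
          _ = |(z : ℚ) - 2 * (i : ℚ)| * |qt| := abs_mul _ _
          _ ≤ 2 * |qt| := by nlinarith [abs_nonneg qt]
  -- apply the claim at i₀ = z / 2 and i₀ + 1
  set i₀ := z / 2 with hi₀def
  have hdiv : 2 * i₀ ≤ z ∧ z ≤ 2 * i₀ + 1 := by
    constructor <;> omega
  have hd1 : |z - 2 * i₀| ≤ 2 := by
    rcases (by omega : z - 2 * i₀ = 0 ∨ z - 2 * i₀ = 1) with h | h <;> rw [h] <;> decide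
  have hd2 : |z - 2 * (i₀ + 1)| ≤ 2 := by
    rcases (by omega : z - 2 * (i₀ + 1) = -2 ∨ z - 2 * (i₀ + 1) = -1) with h | h <;>
      rw [h] <;> decide
  have hA := claim i₀ (by omega) (by omega) hd1
  have hB := claim (i₀ + 1) (by omega) (by omega) hd2
  have hone : ∃ i : ℤ, 1 ≤ i ∧ i ≤ z - 1 ∧ |z - 2 * i| ≤ 2 ∧
      |ct + ((i : ℚ) * (i : ℚ) - (i : ℚ) * (z : ℚ)) * qt| ≤ 2 * |qt| := by
    rcases hA with h | h
    · rcases hB with h' | h'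
      · omega
      · exact ⟨i₀ + 1, by omega, by omega, hd2, h'⟩
    · exact ⟨i₀, by omega, by omega, hd1, h⟩
  obtain ⟨i, hi1, hi2, hi3, hItri⟩ := hone
  -- finish with rational arithmetic
  have hiq1 : (1 : ℚ) ≤ (i : ℚ) := by exact_mod_cast hi1
  have hiq2 : (i : ℚ) ≤ (z : ℚ) - 1 := by exact_mod_cast (by omega : i ≤ z - 1)
  have hzq3 : (3 : ℚ) ≤ (z : ℚ) := by exact_mod_cast h3
  have h4x : ((z : ℚ) - 2) ^ 2 ≤ 4 * ((i : ℚ) * ((z : ℚ) - (i : ℚ))) := by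
    have hzi : ((z : ℚ) - 2 * (i : ℚ)) ^ 2 ≤ 4 := by
      have h5 : |(z : ℚ) - 2 * (i : ℚ)| ≤ 2 := by
        exact_mod_cast hi3
      nlinarith [abs_nonneg ((z : ℚ) - 2 * (i : ℚ)), le_abs_self ((z : ℚ) - 2 * (i : ℚ)),
        neg_abs_le ((z : ℚ) - 2 * (i : ℚ))]
    nlinarith [hzq3]
  have htri : ((i : ℚ) * ((z : ℚ) - (i : ℚ))) * |qt| ≤ |ct| + 2 * |qt| := by
    have h5 : ((i : ℚ) * (z : ℚ) - (i : ℚ) * (i : ℚ)) * qt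
        = ct - (ct + ((i : ℚ) * (i : ℚ) - (i : ℚ) * (z : ℚ)) * qt) := by ring
    have h6 : |((i : ℚ) * (z : ℚ) - (i : ℚ) * (i : ℚ)) * qt| ≤ |ct| + 2 * |qt| := by
      rw [h5]
      calc |ct - (ct + ((i : ℚ) * (i : ℚ) - (i : ℚ) * (z : ℚ)) * qt)|
          ≤ |ct| + |ct + ((i : ℚ) * (i : ℚ) - (i : ℚ) * (z : ℚ)) * qt| := abs_sub _ _
        _ ≤ |ct| + 2 * |qt| := by linarith
    rw [abs_mul] at h6
    have h7 : |(i : ℚ) * (z : ℚ) - (i : ℚ) * (i : ℚ)| = (i : ℚ) * ((z : ℚ) - (i : ℚ)) := by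
      rw [abs_of_nonneg]
      · ring
      · nlinarith
    rw [h7] at h6
    exact h6
  have e2 : (((z : ℚ) - 2) ^ 2) * |qt| ≤ (4 * ((i : ℚ) * ((z : ℚ) - (i : ℚ)))) * |qt| :=
    mul_le_mul_of_nonneg_right h4x (abs_nonneg qt)
  have e1 : ((z : ℚ) - 2) * |qt| ≤ (((z : ℚ) - 2) ^ 2) * |qt| := by
    nlinarith [mul_nonneg (mul_nonneg (by linarith : (0 : ℚ) ≤ (z : ℚ) - 3)
      (by linarith : (0 : ℚ) ≤ (z : ℚ) - 2)) (abs_nonneg qt)]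
  nlinarith [abs_nonneg qt, abs_nonneg ct]

/-- Lemma M final form -/
lemma cartan_bound {α ξ : Module.Dual F ↥S.H} (hα : S.Lrt α ≠ ⊥) {qt : ℚ}
    (hqt : (qt : F) = S.form α α) (hq0 : qt ≠ 0) (hξ : S.Lrt ξ ≠ ⊥) {ct : ℚ}
    (hct : (ct : F) = S.form ξ ξ) {z : ℤ} (hz : (z : F) * S.form α α = 2 * S.form α ξ) :
    ((|z| : ℤ) : ℚ) * |qt| ≤ 4 * |ct| + 10 * |qt| := by
  by_cases h3 : 3 ≤ z
  · have := S.cartan_bound_core hα hqt hq0 hξ hct hz h3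
    have habs : ((|z| : ℤ) : ℚ) = (z : ℚ) := by
      rw [abs_of_nonneg (by omega : (0 : ℤ) ≤ z)]
    rw [habs]
    exact this
  · by_cases h3' : z ≤ -3
    · have hα' : S.Lrt (-α) ≠ ⊥ := S.ne_bot_neg hα
      have hqt' : (qt : F) = S.form (-α) (-α) := by rw [S.form_neg_neg]; exact hqt
      have hz' : ((-z : ℤ) : F) * S.form (-α) (-α) = 2 * S.form (-α) ξ := by
        rw [S.form_neg_neg, S.form_neg_left]
        push_cast
        linear_combination -hz
      have := S.cartan_bound_core hα' hqt' hq0 hξ hct hz' (by omega)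
      have habs : ((|z| : ℤ) : ℚ) = ((-z : ℤ) : ℚ) := by
        rw [abs_of_nonpos (by omega : z ≤ (0 : ℤ))]
      rw [habs]
      exact this
    · have habs : ((|z| : ℤ) : ℚ) ≤ 2 := by
        have h2 : |z| ≤ 2 := abs_le.2 ⟨by omega, by omega⟩
        exact_mod_cast h2
      nlinarith [abs_nonneg ct, abs_nonneg qt]

/-- orbit of β under σ_α ∘ σ_β together with its Cartan integers -/
def orbitSeq (α β : Module.Dual F ↥S.H) (k l : ℤ) :
    ℕ → Module.Dual F ↥S.H × ℤ × ℤ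
  | 0 => (β, k, 2)
  | n + 1 =>
      let p := orbitSeq α β k l n
      (p.1 - (p.2.2 : F) • β - ((p.2.1 - k * p.2.2 : ℤ) : F) • α,
        k * p.2.2 - p.2.1, (k * l - 1) * p.2.2 - l * p.2.1)

lemma cartan_prod_bound {α β : Module.Dual F ↥S.H} (hα : S.Lrt α ≠ ⊥)
    (hqα : S.form α α ≠ 0) (hβ : S.Lrt β ≠ ⊥) (hqβ : S.form β β ≠ 0)
    {k l : ℤ} (hk : (k : F) * S.form α α = 2 * S.form α β)
    (hl : (l : F) * S.form β β = 2 * S.form β α) : 0 ≤ k * l ∧ k * l ≤ 4 := by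
  by_contra hbad
  rw [not_and_or] at hbad
  push_neg at hbad
  have hbad' : k * l < 0 ∨ 4 < k * l := hbad
  have hk0 : k ≠ 0 := by
    intro h
    rw [h, zero_mul] at hbad'
    rcases hbad' with h' | h' <;> omega
  have hT : 3 ≤ |k * l - 2| := by
    rcases hbad' with h | h
    · rw [abs_of_nonpos (by omega)]; omega
    · rw [abs_of_nonneg (by omega)]; omega
  set sq := S.orbitSeq α β k l with hsqdef
  have hstep : ∀ n, sq (n + 1) =
      ((sq n).1 - ((sq n).2.2 : F) • β - (((sq n).2.1 - k * (sq n).2.2 : ℤ) : F) • α,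
        k * (sq n).2.2 - (sq n).2.1, (k * l - 1) * (sq n).2.2 - l * (sq n).2.1) :=
    fun n => rfl
  have inv : ∀ n, S.Lrt (sq n).1 ≠ ⊥ ∧
      ((sq n).2.1 : F) * S.form α α = 2 * S.form α (sq n).1 ∧
      ((sq n).2.2 : F) * S.form β β = 2 * S.form β (sq n).1 ∧
      S.form (sq n).1 (sq n).1 = S.form β β := by
    intro n
    induction n with
    | zero =>
        refine ⟨hβ, hk, ?_, rfl⟩
        have hd0 : (sq 0).2.2 = 2 := rfl
        have hb0 : (sq 0).1 = β := rfl
        rw [hd0, hb0]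
        push_cast
        ring
    | succ n ih =>
        obtain ⟨hroot, hc, hd, hnorm⟩ := ih
        obtain ⟨hroot', hnorm', hd'⟩ := S.refl_data hβ hqβ hroot hd
        have hc' : (((sq n).2.1 - k * (sq n).2.2 : ℤ) : F) * S.form α α
            = 2 * S.form α ((sq n).1 - ((sq n).2.2 : F) • β) := by
          simp only [map_sub, map_smul, smul_eq_mul]
          push_cast
          linear_combination hc - ((sq n).2.2 : F) * hk
        obtain ⟨hroot'', hnorm'', hc''⟩ := S.refl_data hα hqα hroot' hc'
        rw [hstep n]
        refine ⟨hroot'', ?_, ?_, hnorm''.trans (hnorm'.trans hnorm)⟩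
        · have hcast : ((k * (sq n).2.2 - (sq n).2.1 : ℤ) : F)
              = ((-((sq n).2.1 - k * (sq n).2.2) : ℤ) : F) := by push_cast; ring
          rw [hcast]
          exact hc''
        · simp only [map_sub, map_smul, smul_eq_mul]
          push_cast
          linear_combination hd - (((sq n).2.1 : F) - (k : F) * ((sq n).2.2 : F)) * hl
  have hrec : ∀ n, (sq (n + 2)).2.1 = (k * l - 2) * (sq (n + 1)).2.1 - (sq n).2.1 := by
    intro n
    have e1 := congrArg (fun p : Module.Dual F ↥S.H × ℤ × ℤ => p.2.1) (hstep (n + 1))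
    have e2 := congrArg (fun p : Module.Dual F ↥S.H × ℤ × ℤ => p.2.1) (hstep n)
    have e3 := congrArg (fun p : Module.Dual F ↥S.H × ℤ × ℤ => p.2.2) (hstep n)
    simp only at e1 e2 e3
    rw [e1, e3, e2]
    ring
  have habs3 : ∀ n, 3 * |(sq (n + 1)).2.1| - |(sq n).2.1| ≤ |(sq (n + 2)).2.1| := by
    intro n
    rw [hrec n]
    have h1 := abs_sub_abs_le_abs_sub ((k * l - 2) * (sq (n + 1)).2.1) ((sq n).2.1)
    rw [abs_mul] at h1
    nlinarith [abs_nonneg ((sq (n + 1)).2.1), hT]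
  have hc0 : (sq 0).2.1 = k := rfl
  have hc1 : (sq 1).2.1 = k := by
    have e2 := congrArg (fun p : Module.Dual F ↥S.H × ℤ × ℤ => p.2.1) (hstep 0)
    simp only at e2
    rw [e2, hc0]
    have : (sq 0).2.2 = 2 := rfl
    rw [this]
    ring
  have grow : ∀ n, 2 * |(sq (n + 1)).2.1| ≤ |(sq (n + 2)).2.1| := by
    intro n
    induction n with
    | zero =>
        rw [hrec 0, hc0, hc1]
        have h2 : (k * l - 2) * k - k = k * (k * l - 3) := by ring
        rw [h2, abs_mul]
        have h3 : 2 ≤ |k * l - 3| := by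
          rcases hbad' with h | h
          · rw [abs_of_nonpos (by omega)]; omega
          · rw [abs_of_nonneg (by omega)]; omega
        nlinarith [abs_nonneg k, Int.one_le_abs hk0]
    | succ n ih =>
        have h4 := habs3 (n + 1)
        have h5 := abs_nonneg ((sq (n + 1 + 1)).2.1)
        linarith
  have pow : ∀ n, (2 : ℤ) ^ n ≤ |(sq (n + 1)).2.1| := by
    intro n
    induction n with
    | zero =>
        rw [hc1, pow_zero]
        exact Int.one_le_abs hk0
    | succ n ih =>
        have h4 := grow n
        have h2 : (2 : ℤ) ^ (n + 1) = 2 * 2 ^ n := by ring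
        rw [h2]
        linarith
  obtain ⟨qt, hqt⟩ := S.exists_rat_norm hα
  have hqt0 : qt ≠ 0 := by
    intro h
    rw [h] at hqt
    simp only [Rat.cast_zero] at hqt
    exact hqα hqt.symm
  obtain ⟨ct, hct⟩ := S.exists_rat_norm hβ
  obtain ⟨n, hn⟩ := exists_nat_gt ((4 * |ct| + 10 * |qt|) / |qt|)
  have hqtpos : 0 < |qt| := abs_pos.2 hqt0
  have hn2 : (4 * |ct| + 10 * |qt|) < (2 ^ n : ℚ) * |qt| := by
    have hle : (n : ℚ) < 2 ^ n := by exact_mod_cast (Nat.lt_two_pow_self (n := n))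
    rw [div_lt_iff₀ hqtpos] at hn
    nlinarith
  obtain ⟨hroot, hc, hd, hnorm⟩ := inv (n + 1)
  have hctn : (ct : F) = S.form (sq (n + 1)).1 (sq (n + 1)).1 := by rw [hnorm]; exact hct
  have hbound := S.cartan_bound hα hqt hqt0 hroot hctn hc
  have hp2 : ((2 : ℚ) ^ n) ≤ ((|(sq (n + 1)).2.1| : ℤ) : ℚ) := by exact_mod_cast pow n
  have hp3 : ((2 : ℚ) ^ n) * |qt| ≤ ((|(sq (n + 1)).2.1| : ℤ) : ℚ) * |qt| :=
    mul_le_mul_of_nonneg_right hp2 (abs_nonneg qt)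
  linarith

/-- |Cartan number| ≤ 4 -/
lemma cartan_le_four {α ξ : Module.Dual F ↥S.H} (hα : S.Lrt α ≠ ⊥)
    (hqα : S.form α α ≠ 0) (hξ : S.Lrt ξ ≠ ⊥) {z : ℤ}
    (hz : (z : F) * S.form α α = 2 * S.form α ξ) : |z| ≤ 4 := by
  by_cases hξ0 : S.form ξ ξ = 0
  · have h0 : S.form ξ α = 0 := S.isotropic_orth hξ hξ0 hα
    have h1 : S.form α ξ = 0 := by rw [← S.form_symm hξ hα]; exact h0
    have hz0 : (z : F) * S.form α α = 0 := by rw [hz, h1, mul_zero]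
    have hz1 : (z : F) = 0 := (mul_eq_zero.1 hz0).resolve_right hqα
    have hz2 : z = 0 := by exact_mod_cast hz1
    simp [hz2]
  · obtain ⟨l, m, hl, _⟩ := S.key hξ hξ0 hα
    obtain ⟨h0, h4⟩ := S.cartan_prod_bound hα hqα hξ hξ0 hz hl
    by_cases hz0 : z = 0
    · simp [hz0]
    · have hl0 : l ≠ 0 := by
        intro h
        rw [h] at hl
        simp only [Int.cast_zero, zero_mul] at hl
        have h5 : S.form ξ α = 0 := by
          rcases mul_eq_zero.1 hl.symm with h' | h'
          · exact absurd h' two_ne_zero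
          · exact h'
        have h6 : S.form α ξ = 0 := by rw [← S.form_symm hξ hα]; exact h5
        rw [h6, mul_zero] at hz
        have : (z : F) = 0 := (mul_eq_zero.1 hz).resolve_right hqα
        exact hz0 (by exact_mod_cast this)
      have h1 : 1 ≤ |l| := Int.one_le_abs hl0
      have h2 : |z| * 1 ≤ |z| * |l| := mul_le_mul_of_nonneg_left h1 (abs_nonneg z)
      rw [mul_one, ← abs_mul] at h2
      have h3 : |z| ≤ z * l := by rwa [abs_of_nonneg h0] at h2
      omega

/-- representability as rational combination of roots -/
def RepOf (v : Module.Dual F ↥S.H) : Prop :=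
  ∃ (n : ℕ) (q : Fin n → ℚ) (ζ : Fin n → Module.Dual F ↥S.H),
    (∀ i, S.Lrt (ζ i) ≠ ⊥) ∧ v = ∑ i, (q i : F) • ζ i

lemma pr_zero : S.pr 0 = 0 := by
  have h := S.hπsmul 0 0
  simpa using h

lemma repOf_root {ξ : Module.Dual F ↥S.H} (hξ : S.Lrt ξ ≠ ⊥) : S.RepOf ξ :=
  ⟨1, fun _ => 1, fun _ => ξ, fun _ => hξ, by simp⟩

lemma repOf_zero : S.RepOf 0 :=
  ⟨0, fun i => 0, fun i => 0, fun i => i.elim0, by simp⟩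

lemma repOf_add {v w : Module.Dual F ↥S.H} (hv : S.RepOf v) (hw : S.RepOf w) :
    S.RepOf (v + w) := by
  obtain ⟨n, q, ζ, hζ, rfl⟩ := hv
  obtain ⟨m, r, η, hη, rfl⟩ := hw
  refine ⟨n + m, Fin.append q r, Fin.append ζ η, ?_, ?_⟩
  · intro i
    exact Fin.addCases (fun i => by simpa [Fin.append_left] using hζ i)
      (fun i => by simpa [Fin.append_right] using hη i) i
  · rw [Fin.sum_univ_add]
    congr 1
    · exact Finset.sum_congr rfl fun i _ => by rw [Fin.append_left, Fin.append_left]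
    · exact Finset.sum_congr rfl fun i _ => by rw [Fin.append_right, Fin.append_right]

lemma repOf_smul (c : ℚ) {v : Module.Dual F ↥S.H} (hv : S.RepOf v) :
    S.RepOf ((c : F) • v) := by
  obtain ⟨n, q, ζ, hζ, rfl⟩ := hv
  refine ⟨n, fun i => c * q i, ζ, hζ, ?_⟩
  rw [Finset.smul_sum]
  exact Finset.sum_congr rfl fun i _ => by rw [smul_smul]; norm_cast

lemma repOf_neg {v : Module.Dual F ↥S.H} (hv : S.RepOf v) : S.RepOf (-v) := by
  have h := S.repOf_smul (-1) hv
  have h2 : ((-1 : ℚ) : F) • v = -v := by push_cast; module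
  rwa [h2] at h

lemma repOf_sub {v w : Module.Dual F ↥S.H} (hv : S.RepOf v) (hw : S.RepOf w) :
    S.RepOf (v - w) := by
  rw [sub_eq_add_neg]
  exact S.repOf_add hv (S.repOf_neg hw)

lemma pr_neg (v : Module.Dual F ↥S.H) : S.pr (-v) = -S.pr v := by
  have h := S.hπsmul (-1) v
  have h2 : ((-1 : ℚ) : F) • v = -v := by push_cast; module
  rw [h2] at h
  rw [h]
  simp

lemma pr_sub (v w : Module.Dual F ↥S.H) : S.pr (v - w) = S.pr v - S.pr w := by
  rw [sub_eq_add_neg, S.hπadd, S.pr_neg, ← sub_eq_add_neg]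

lemma pr_int_smul (z : ℤ) (v : Module.Dual F ↥S.H) :
    S.pr ((z : F) • v) = (z : ℚ) • S.pr v := by
  have h := S.hπsmul (z : ℚ) v
  have h2 : (((z : ℚ)) : F) = (z : F) := by push_cast; ring
  rwa [h2] at h

lemma exists_rep (vb : Vbar) : ∃ v, S.RepOf v ∧ S.pr v = vb := by
  have hvb : vb ∈ Submodule.span ℚ (S.pr '' {ξ | S.Lrt ξ ≠ ⊥}) := by
    rw [S.hπsurj]; trivial
  induction hvb using Submodule.span_induction with
  | mem x hx =>
      obtain ⟨u, hu, rfl⟩ := hx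
      exact ⟨u, S.repOf_root hu, rfl⟩
  | zero => exact ⟨0, S.repOf_zero, S.pr_zero⟩
  | add x y _ _ ihx ihy =>
      obtain ⟨v, hv, rfl⟩ := ihx
      obtain ⟨w, hw, rfl⟩ := ihy
      exact ⟨v + w, S.repOf_add hv hw, S.hπadd v w⟩
  | smul c x _ ih =>
      obtain ⟨v, hv, rfl⟩ := ih
      exact ⟨(c : F) • v, S.repOf_smul c hv, S.hπsmul c v⟩

lemma form_symm_rep {v ξ : Module.Dual F ↥S.H} (hv : S.RepOf v) (hξ : S.Lrt ξ ≠ ⊥) :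
    S.form v ξ = S.form ξ v := by
  obtain ⟨n, q, ζ, hζ, rfl⟩ := hv
  simp only [map_sum, map_smul, LinearMap.sum_apply, LinearMap.smul_apply, smul_eq_mul]
  exact Finset.sum_congr rfl fun i _ => by rw [S.form_symm (hζ i) hξ]

lemma pr_eq_zero_orth {v : Module.Dual F ↥S.H} (hv : S.RepOf v) (h0 : S.pr v = 0)
    {u : Module.Dual F ↥S.H} (hu : S.Lrt u ≠ ⊥) : S.form v u = 0 := by
  obtain ⟨n, q, ζ, hζ, he⟩ := hv
  exact ((S.hπker v ⟨n, q, ζ, hζ, he⟩).1 h0) u hu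

noncomputable def ff (ξ : Module.Dual F ↥S.H) (vb : Vbar) : F :=
  S.form ξ (S.exists_rep vb).choose

lemma ff_eq {ξ : Module.Dual F ↥S.H} (hξ : S.Lrt ξ ≠ ⊥) {v : Module.Dual F ↥S.H}
    (hv : S.RepOf v) : S.ff ξ (S.pr v) = S.form ξ v := by
  have hch := (S.exists_rep (S.pr v)).choose_spec
  have hdiff : S.RepOf ((S.exists_rep (S.pr v)).choose - v) := S.repOf_sub hch.1 hv
  have h0 : S.pr ((S.exists_rep (S.pr v)).choose - v) = 0 := by
    rw [S.pr_sub, hch.2, sub_self]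
  have h1 : S.form ((S.exists_rep (S.pr v)).choose - v) ξ = 0 :=
    S.pr_eq_zero_orth hdiff h0 hξ
  have h2 : S.form ξ ((S.exists_rep (S.pr v)).choose - v) = 0 := by
    rw [← S.form_symm_rep hdiff hξ]; exact h1
  rw [map_sub] at h2
  exact sub_eq_zero.1 h2

lemma ff_add {ξ : Module.Dual F ↥S.H} (hξ : S.Lrt ξ ≠ ⊥) (vb wb : Vbar) :
    S.ff ξ (vb + wb) = S.ff ξ vb + S.ff ξ wb := by
  obtain ⟨v, hv, rfl⟩ := S.exists_rep vb
  obtain ⟨w, hw, rfl⟩ := S.exists_rep wb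
  rw [← S.hπadd, S.ff_eq hξ (S.repOf_add hv hw), S.ff_eq hξ hv, S.ff_eq hξ hw, map_add]

lemma ff_smul {ξ : Module.Dual F ↥S.H} (hξ : S.Lrt ξ ≠ ⊥) (c : ℚ) (vb : Vbar) :
    S.ff ξ (c • vb) = (c : F) * S.ff ξ vb := by
  obtain ⟨v, hv, rfl⟩ := S.exists_rep vb
  rw [← S.hπsmul, S.ff_eq hξ (S.repOf_smul c hv), S.ff_eq hξ hv, map_smul, smul_eq_mul]

lemma exists_ff_ne_zero {vb : Vbar} (h : vb ≠ 0) :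
    ∃ u, S.Lrt u ≠ ⊥ ∧ S.form u u ≠ 0 ∧ S.ff u vb ≠ 0 := by
  obtain ⟨v, hv, rfl⟩ := S.exists_rep vb
  have hrep : ∃ (n : ℕ) (q : Fin n → ℚ) (ζ : Fin n → Module.Dual F ↥S.H),
      (∀ i, S.Lrt (ζ i) ≠ ⊥) ∧ v = ∑ i, (q i : F) • ζ i := hv
  have hker := S.hπker v hrep
  have hne : ¬ ∀ u, S.Lrt u ≠ ⊥ → S.form v u = 0 := fun hc => h (hker.2 hc)
  push_neg at hne
  obtain ⟨u, hu, hfu⟩ := hne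
  refine ⟨u, hu, ?_, ?_⟩
  · intro hu0
    apply hfu
    obtain ⟨n, q, ζ, hζ, rfl⟩ := hv
    simp only [map_sum, map_smul, LinearMap.sum_apply, LinearMap.smul_apply, smul_eq_mul]
    apply Finset.sum_eq_zero
    intro i _
    have h3 : S.form u (ζ i) = 0 := S.isotropic_orth hu hu0 (hζ i)
    rw [S.form_symm (hζ i) hu, h3, mul_zero]
  · rw [S.ff_eq hu hv, ← S.form_symm_rep hv hu]
    exact hfu

lemma isotropic_pr_zero {δ : Module.Dual F ↥S.H} (hδ : S.Lrt δ ≠ ⊥)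
    (h0 : S.form δ δ = 0) : S.pr δ = 0 := by
  have hrep : ∃ (n : ℕ) (q : Fin n → ℚ) (ζ : Fin n → Module.Dual F ↥S.H),
      (∀ i, S.Lrt (ζ i) ≠ ⊥) ∧ δ = ∑ i, (q i : F) • ζ i := S.repOf_root hδ
  apply (S.hπker δ hrep).2
  intro u hu
  exact S.isotropic_orth hδ h0 hu

lemma aniso_pr_ne_zero {ξ : Module.Dual F ↥S.H} (hξ : S.Lrt ξ ≠ ⊥)
    (hq : S.form ξ ξ ≠ 0) : S.pr ξ ≠ 0 := by
  intro h
  have hrep : ∃ (n : ℕ) (q : Fin n → ℚ) (ζ : Fin n → Module.Dual F ↥S.H),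
      (∀ i, S.Lrt (ζ i) ≠ ⊥) ∧ ξ = ∑ i, (q i : F) • ζ i := S.repOf_root hξ
  exact hq (((S.hπker ξ hrep).1 h) ξ hξ)

lemma ff_zero {ξ : Module.Dual F ↥S.H} (hξ : S.Lrt ξ ≠ ⊥) : S.ff ξ 0 = 0 := by
  have h := S.ff_smul hξ 0 0
  simpa using h

lemma ff_sub {ξ : Module.Dual F ↥S.H} (hξ : S.Lrt ξ ≠ ⊥) (vb wb : Vbar) :
    S.ff ξ (vb - wb) = S.ff ξ vb - S.ff ξ wb := by
  have hneg : S.ff ξ (-wb) = -S.ff ξ wb := by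
    have h := S.ff_smul hξ (-1) wb
    rw [neg_one_smul] at h
    rw [h]
    push_cast
    ring
  rw [sub_eq_add_neg, S.ff_add hξ, hneg, ← sub_eq_add_neg]

/-- the joint kernel of the pairings against a finite set of roots, inside W -/
def KK (Φ : Finset (Module.Dual F ↥S.H)) (hΦ : ∀ ξ ∈ Φ, S.Lrt ξ ≠ ⊥)
    (W : Submodule ℚ Vbar) : Submodule ℚ ↥W where
  carrier := {v | ∀ ξ ∈ Φ, S.ff ξ (v : Vbar) = 0}
  add_mem' := by
    intro a b ha hb ξ hξ
    rw [Submodule.coe_add, S.ff_add (hΦ ξ hξ), ha ξ hξ, hb ξ hξ, add_zero]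
  zero_mem' := by
    intro ξ hξ
    rw [Submodule.coe_zero, S.ff_zero (hΦ ξ hξ)]
  smul_mem' := by
    intro c a ha ξ hξ
    rw [Submodule.coe_smul, S.ff_smul (hΦ ξ hξ), ha ξ hξ, mul_zero]

lemma mem_KK {Φ : Finset (Module.Dual F ↥S.H)} {hΦ : ∀ ξ ∈ Φ, S.Lrt ξ ≠ ⊥}
    {W : Submodule ℚ Vbar} {v : ↥W} :
    v ∈ S.KK Φ hΦ W ↔ ∀ ξ ∈ Φ, S.ff ξ (v : Vbar) = 0 := Iff.rfl

/-- Conclusion 1 : R̄ ∩ W̄ is finite -/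
lemma conclusion_one (W : Submodule ℚ Vbar) (hW : FiniteDimensional ℚ ↥W) :
    ((S.pr '' {ξ | S.Lrt ξ ≠ ⊥}) ∩ (W : Set Vbar)).Finite := by
  classical
  haveI := hW
  have main : ∀ (N : ℕ) (Φ : Finset (Module.Dual F ↥S.H))
      (hΦ : ∀ ξ ∈ Φ, S.Lrt ξ ≠ ⊥ ∧ S.form ξ ξ ≠ 0),
      Module.finrank ℚ (S.KK Φ (fun ξ h => (hΦ ξ h).1) W) ≤ N →
      ∃ (Ψ : Finset (Module.Dual F ↥S.H))
        (hΨ : ∀ ξ ∈ Ψ, S.Lrt ξ ≠ ⊥ ∧ S.form ξ ξ ≠ 0),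
        S.KK Ψ (fun ξ h => (hΨ ξ h).1) W = ⊥ := by
    intro N
    induction N with
    | zero =>
        intro Φ hΦ hrk
        refine ⟨Φ, hΦ, ?_⟩
        have h0 : Module.finrank ℚ (S.KK Φ (fun ξ h => (hΦ ξ h).1) W) = 0 :=
          le_antisymm hrk (Nat.zero_le _)
        exact Submodule.finrank_eq_zero.1 h0
    | succ N ih =>
        intro Φ hΦ hrk
        by_cases hbot : S.KK Φ (fun ξ h => (hΦ ξ h).1) W = ⊥
        · exact ⟨Φ, hΦ, hbot⟩
        · obtain ⟨v, hv, hv0⟩ := (Submodule.ne_bot_iff _).1 hbot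
          have hvne : (v : Vbar) ≠ 0 := by
            intro h
            exact hv0 (Subtype.coe_injective (by simpa using h))
          obtain ⟨u, hu, huan, hfu⟩ := S.exists_ff_ne_zero hvne
          refine ih (insert u Φ) (fun ξ h => ?_) ?_
          · rcases Finset.mem_insert.1 h with rfl | h'
            · exact ⟨hu, huan⟩
            · exact hΦ ξ h'
          · have hle : S.KK (insert u Φ)
                (fun ξ h => (by
                  rcases Finset.mem_insert.1 h with rfl | h'
                  · exact hu
                  · exact (hΦ ξ h').1)) W
                ≤ S.KK Φ (fun ξ h => (hΦ ξ h).1) W := by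
              intro a ha ξ hξ
              exact ha ξ (Finset.mem_insert_of_mem hξ)
            have hlt : S.KK (insert u Φ)
                (fun ξ h => (by
                  rcases Finset.mem_insert.1 h with rfl | h'
                  · exact hu
                  · exact (hΦ ξ h').1)) W
                < S.KK Φ (fun ξ h => (hΦ ξ h).1) W := by
              refine lt_of_le_of_ne hle ?_
              intro heq
              rw [← heq] at hv
              exact hfu (hv u (Finset.mem_insert_self u Φ))
            have hfr := Submodule.finrank_lt_finrank_of_lt hlt
            omega
  obtain ⟨Ψ, hΨ, hbot⟩ := main
    (Module.finrank ℚ (S.KK ∅ (fun ξ h => absurd h (Finset.notMem_empty ξ)) W)) ∅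
    (fun ξ h => absurd h (Finset.notMem_empty ξ)) le_rfl
  set T : Set Vbar := (S.pr '' {ξ | S.Lrt ξ ≠ ⊥}) ∩ (W : Set Vbar) with hTdef
  have hrepr : ∀ y : T, ∃ ξ, (S.Lrt ξ ≠ ⊥) ∧ S.pr ξ = (y : Vbar) := by
    rintro ⟨y, ⟨ξ, hξ, rfl⟩, hyW⟩
    exact ⟨ξ, hξ, rfl⟩
  choose ρ hρroot hρeq using hrepr
  have hcart : ∀ (y : T) (ψ : {x // x ∈ Ψ}), ∃ z : ℤ,
      ((z : F) * S.form (ψ : Module.Dual F ↥S.H) (ψ : Module.Dual F ↥S.H)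
        = 2 * S.form (ψ : Module.Dual F ↥S.H) (ρ y)) ∧ |z| ≤ 4 := by
    intro y ψ
    have hψ := hΨ ψ ψ.2
    obtain ⟨z, m, hz, _⟩ := S.key hψ.1 hψ.2 (hρroot y)
    exact ⟨z, hz, S.cartan_le_four hψ.1 hψ.2 (hρroot y) hz⟩
  choose g hg1 hg2 using hcart
  haveI : Finite T := by
    apply Finite.of_injective (fun y : T => fun ψ : {x // x ∈ Ψ} =>
      (⟨g y ψ, Finset.mem_Icc.2 (abs_le.1 (hg2 y ψ))⟩ : {z : ℤ // z ∈ Finset.Icc (-4 : ℤ) 4}))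
    intro y y' h
    have hval : ∀ ψ : {x // x ∈ Ψ},
        S.ff (ψ : Module.Dual F ↥S.H) ((y : Vbar)) = S.ff (ψ : Module.Dual F ↥S.H) ((y' : Vbar)) := by
      intro ψ
      have e2 : g y ψ = g y' ψ := Subtype.ext_iff.1 (congrFun h ψ)
      have h1 := hg1 y ψ
      have h2 := hg1 y' ψ
      rw [e2] at h1
      have hform : S.form (ψ : Module.Dual F ↥S.H) (ρ y)
          = S.form (ψ : Module.Dual F ↥S.H) (ρ y') :=
        mul_left_cancel₀ two_ne_zero (h1.symm.trans h2)
      rw [← hρeq y, ← hρeq y',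
        S.ff_eq (hΨ ψ ψ.2).1 (S.repOf_root (hρroot y)),
        S.ff_eq (hΨ ψ ψ.2).1 (S.repOf_root (hρroot y')), hform]
    have hdiffW : (y : Vbar) - (y' : Vbar) ∈ W := W.sub_mem y.2.2 y'.2.2
    have hdK : (⟨(y : Vbar) - (y' : Vbar), hdiffW⟩ : ↥W)
        ∈ S.KK Ψ (fun ξ h => (hΨ ξ h).1) W := by
      intro ξ hξ
      have := hval ⟨ξ, hξ⟩
      rw [S.ff_sub (hΨ ξ hξ).1]
      simpa using sub_eq_zero.2 this
    rw [hbot] at hdK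
    have h3 : ((⟨(y : Vbar) - (y' : Vbar), hdiffW⟩ : ↥W) : ↥W) = 0 := hdK
    have h4 : (y : Vbar) - (y' : Vbar) = 0 := by
      have := congrArg (fun x : ↥W => (x : Vbar)) h3
      simpa using this
    exact Subtype.ext (sub_eq_zero.1 h4)
  exact Set.toFinite T

/-- Conclusion 2 : integrality and reflections -/
lemma conclusion_two {α : Module.Dual F ↥S.H} (hα : S.Lrt α ≠ ⊥) (hq : S.form α α ≠ 0) :
    (∀ ξ, S.Lrt ξ ≠ ⊥ → ∃ n : ℤ, (n : F) * S.form α α = 2 * S.form ξ α) ∧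
    {y : Vbar | ∃ ξ, ∃ _ : S.Lrt ξ ≠ ⊥, ∃ n : ℤ,
      (n : F) * S.form α α = 2 * S.form ξ α ∧ y = S.pr ξ - (n : ℚ) • S.pr α}
      = S.pr '' {ξ | S.Lrt ξ ≠ ⊥} := by
  constructor
  · intro ξ hξ
    obtain ⟨z, m, hz, _⟩ := S.key hα hq hξ
    refine ⟨z, ?_⟩
    rw [S.form_symm hξ hα]
    exact hz
  · ext y
    simp only [Set.mem_setOf_eq, Set.mem_image]
    constructor
    · rintro ⟨ξ, hξ, n, hn, rfl⟩
      refine ⟨ξ - (n : F) • α, ?_, ?_⟩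
      · apply S.refl_root hα hq hξ
        rw [← S.form_symm hξ hα]
        exact hn
      · rw [S.pr_sub, S.pr_int_smul]
    · rintro ⟨η, hη, rfl⟩
      obtain ⟨z, m, hz, _⟩ := S.key hα hq hη
      refine ⟨η - (z : F) • α, S.refl_root hα hq hη hz, -z, ?_, ?_⟩
      · simp only [map_sub, map_smul, LinearMap.sub_apply, LinearMap.smul_apply, smul_eq_mul]
        rw [S.form_symm hη hα]
        push_cast
        linear_combination hz
      · rw [S.pr_sub, S.pr_int_smul]
        push_cast
        module

/-- Conclusion 3 : irreducibility of the projected root system -/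
lemma conclusion_three
    (hA5 : ∀ R1 R2 : Set (Module.Dual F ↥S.H),
      {ξ | S.Lrt ξ ≠ ⊥ ∧ S.form ξ ξ ≠ 0} = R1 ∪ R2 →
      (∀ ξ ∈ R1, ∀ η ∈ R2, S.form ξ η = 0) → R1 = ∅ ∨ R2 = ∅)
    (S1 S2 : Set Vbar)
    (hcover : (S.pr '' {ξ | S.Lrt ξ ≠ ⊥}) \ {0} = S1 ∪ S2)
    (horth : ∀ ξ, S.Lrt ξ ≠ ⊥ → ∀ η, S.Lrt η ≠ ⊥ → S.pr ξ ∈ S1 → S.pr η ∈ S2 →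
      S.form ξ η = 0) : S1 = ∅ ∨ S2 = ∅ := by
  classical
  set R1 : Set (Module.Dual F ↥S.H) :=
    {ξ | (S.Lrt ξ ≠ ⊥ ∧ S.form ξ ξ ≠ 0) ∧ S.pr ξ ∈ S1} with hR1
  set R2 : Set (Module.Dual F ↥S.H) :=
    {ξ | (S.Lrt ξ ≠ ⊥ ∧ S.form ξ ξ ≠ 0) ∧ S.pr ξ ∉ S1} with hR2
  have hmem : ∀ ξ, S.Lrt ξ ≠ ⊥ → S.form ξ ξ ≠ 0 → S.pr ξ ∈ S1 ∪ S2 := by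
    intro ξ hξ hq
    rw [← hcover]
    refine ⟨⟨ξ, hξ, rfl⟩, ?_⟩
    simpa using S.aniso_pr_ne_zero hξ hq
  have hsplit := hA5 R1 R2 ?_ ?_
  · -- derive the conclusion
    rcases hsplit with h1 | h2
    · left
      by_contra hS1
      obtain ⟨y, hy⟩ := Set.nonempty_iff_ne_empty.2 hS1
      have hyT : y ∈ (S.pr '' {ξ | S.Lrt ξ ≠ ⊥}) \ {0} := by
        rw [hcover]
        exact Or.inl hy
      obtain ⟨⟨η, hη, rfl⟩, hy0⟩ := hyT
      have hy0' : S.pr η ≠ 0 := by simpa using hy0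
      have hηan : S.form η η ≠ 0 := by
        intro h0
        exact hy0' (S.isotropic_pr_zero hη h0)
      have : η ∈ R1 := ⟨⟨hη, hηan⟩, hy⟩
      rw [h1] at this
      exact this
    · right
      by_contra hS2
      obtain ⟨y, hy⟩ := Set.nonempty_iff_ne_empty.2 hS2
      have hyT : y ∈ (S.pr '' {ξ | S.Lrt ξ ≠ ⊥}) \ {0} := by
        rw [hcover]
        exact Or.inr hy
      obtain ⟨⟨η, hη, rfl⟩, hy0⟩ := hyT
      have hy0' : S.pr η ≠ 0 := by simpa using hy0
      have hηan : S.form η η ≠ 0 := by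
        intro h0
        exact hy0' (S.isotropic_pr_zero hη h0)
      have hη1 : S.pr η ∈ S1 := by
        by_contra hn
        have : η ∈ R2 := ⟨⟨hη, hηan⟩, hn⟩
        rw [h2] at this
        exact this
      exact hηan (horth η hη η hη hη1 hy)
  · -- cover
    ext ξ
    simp only [Set.mem_setOf_eq, Set.mem_union, hR1, hR2]
    constructor
    · intro ⟨hξ, hq⟩
      by_cases h : S.pr ξ ∈ S1
      · exact Or.inl ⟨⟨hξ, hq⟩, h⟩
      · exact Or.inr ⟨⟨hξ, hq⟩, h⟩
    · intro h
      rcases h with ⟨h, _⟩ | ⟨h, _⟩ <;> exact h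
  · -- orthogonality
    rintro ξ ⟨⟨hξ, hξq⟩, hξ1⟩ η ⟨⟨hη, hηq⟩, hη1⟩
    have hη2 : S.pr η ∈ S2 := (hmem η hη hηq).resolve_left hη1
    exact horth ξ hξ η hη hξ1 hη2

end Leala

theorem proposition_3_7_part1
    {F L : Type*} [Field F] [CharZero F] [LieRing L] [LieAlgebra F L]
    (H : LieSubalgebra F L)
    (habelian : ∀ x y : ↥H, ⁅x, y⁆ = 0)
    -- root spaces with respect to H
    (Lrt : Module.Dual F ↥H → Submodule F L)
    (hLrt : ∀ ξ (x : L), x ∈ Lrt ξ ↔ ∀ h : ↥H, ⁅(h : L), x⁆ = ξ h • x)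
    -- root space decomposition L = ⊕_{ξ} L_ξ
    (hdecomp : ⨆ ξ, Lrt ξ = ⊤) (hindep : iSupIndep Lrt)
    -- the set of roots
    (R : Set (Module.Dual F ↥H))
    (hR : R = {ξ | Lrt ξ ≠ ⊥})
    -- a symmetric invariant bilinear form on L
    (B : LinearMap.BilinForm F L)
    (hBsym : ∀ x y : L, B x y = B y x)
    (hBinv : ∀ x y z : L, B ⁅x, y⁆ z = B x ⁅y, z⁆)
    -- (A1) H is self-centralizing
    (hA1 : Lrt 0 = H.toSubmodule)
    -- (A2) B is nondegenerate
    (hA2 : B.Nondegenerate)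
    -- (A3) every root is represented by some t_ξ ∈ H
    (t : Module.Dual F ↥H → ↥H)
    (hA3 : ∀ ξ ∈ R, ∀ h : ↥H, ξ h = B (t ξ) h)
    -- the induced form, extended bilinearly to the span of R
    (form : LinearMap.BilinForm F (Module.Dual F ↥H))
    (hform : ∀ ξ ∈ R, ∀ η ∈ R, form ξ η = B (t ξ : L) (t η : L))
    -- (A4) ad x is locally nilpotent for x in an anisotropic root space
    (hA4 : ∀ α ∈ R, form α α ≠ 0 → ∀ x ∈ Lrt α, ∀ y : L,
      ∃ n : ℕ, ((LieAlgebra.ad F L x) ^ n) y = 0)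
    -- (A5) R^× is irreducible
    (hA5 : ∀ R1 R2 : Set (Module.Dual F ↥H), {ξ | ξ ∈ R ∧ form ξ ξ ≠ 0} = R1 ∪ R2 →
      (∀ ξ ∈ R1, ∀ η ∈ R2, form ξ η = 0) → R1 = ∅ ∨ R2 = ∅)
    -- the form is scaled: (β,β) is rational for all β ∈ R^×, positive for some α ∈ R^×
    (hscale : ∀ β ∈ R, form β β ≠ 0 → ∃ q : ℚ, form β β = (q : F))
    (hpos : ∃ α ∈ R, ∃ q : ℚ, 0 < q ∧ form α α = (q : F))
    -- V̄ = V/V⁰ : a ℚ-vector space together with the canonical projection π of the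
    -- ℚ-span V of R modulo the radical V⁰ of the induced form
    (Vbar : Type*) [AddCommGroup Vbar] [Module ℚ Vbar]
    (π : Module.Dual F ↥H → Vbar)
    (hπadd : ∀ v w : Module.Dual F ↥H, π (v + w) = π v + π w)
    (hπsmul : ∀ (q : ℚ) (v : Module.Dual F ↥H), π ((q : F) • v) = q • π v)
    (hπker : ∀ v : Module.Dual F ↥H,
      (∃ (n : ℕ) (q : Fin n → ℚ) (ζ : Fin n → Module.Dual F ↥H),
        (∀ i, ζ i ∈ R) ∧ v = ∑ i, (q i : F) • ζ i) →
      (π v = 0 ↔ ∀ u ∈ R, form v u = 0))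
    (hπsurj : Submodule.span ℚ (π '' R) = ⊤) :
    -- R̄ ∩ W̄ is finite for every finite-dimensional ℚ-subspace W̄ of V̄
    (∀ W : Submodule ℚ Vbar, FiniteDimensional ℚ ↥W →
      ((π '' R) ∩ (W : Set Vbar)).Finite) ∧
    -- every reflection σ_ᾱ (ᾱ nonzero in R̄) maps R̄ onto R̄
    (∀ α ∈ R, form α α ≠ 0 →
      (∀ ξ ∈ R, ∃ n : ℤ, (n : F) * form α α = 2 * form ξ α) ∧
      {y : Vbar | ∃ ξ, ∃ _ : ξ ∈ R, ∃ n : ℤ,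
        (n : F) * form α α = 2 * form ξ α ∧ y = π ξ - (n : ℚ) • π α} = π '' R) ∧
    -- R̄ is irreducible
    (∀ S1 S2 : Set Vbar, (π '' R) \ {0} = S1 ∪ S2 →
      (∀ ξ ∈ R, ∀ η ∈ R, π ξ ∈ S1 → π η ∈ S2 → form ξ η = 0) →
      S1 = ∅ ∨ S2 = ∅) := by
  subst hR
  let S : Leala F L Vbar :=
    { H := H, Lrt := Lrt, hLrt := hLrt, hdecomp := hdecomp, B := B, hBsym := hBsym,
      hBinv := hBinv, hA1 := hA1, hA2 := hA2, t := t, hA3 := hA3, form := form,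
      hform := hform, hA4 := hA4, hscale := hscale, pr := π, hπadd := hπadd,
      hπsmul := hπsmul, hπker := hπker, hπsurj := hπsurj }
  refine ⟨fun W hW => S.conclusion_one W hW, fun α hα hq => S.conclusion_two hα hq,
    fun S1 S2 hc ho => S.conclusion_three hA5 S1 S2 hc ho⟩
end

section
/- If H is finite-dimensional over F (i.e. L is an extended affine Lie algebra, EALA), then R̄ is a finite set; consequently V̄ is finite-dimensional and (R̄, V̄) is a finite irreducible root system. -/
set_option maxHeartbeats 1000000 in
/-- Bundled data of a LEALA, mirroring the hypotheses of the main theorem. -/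
structure LEALAData (F L : Type*) [Field F] [CharZero F] [LieRing L] [LieAlgebra F L] where
  H : LieSubalgebra F L
  Lrt : Module.Dual F ↥H → Submodule F L
  hLrt : ∀ ξ (x : L), x ∈ Lrt ξ ↔ ∀ h : ↥H, ⁅(h : L), x⁆ = ξ h • x
  hdecomp : ⨆ ξ, Lrt ξ = ⊤
  R : Set (Module.Dual F ↥H)
  hR : R = {ξ | Lrt ξ ≠ ⊥}
  B : LinearMap.BilinForm F L
  hBsym : ∀ x y : L, B x y = B y x
  hBinv : ∀ x y z : L, B ⁅x, y⁆ z = B x ⁅y, z⁆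
  hA1 : Lrt 0 = H.toSubmodule
  hA2 : B.Nondegenerate
  t : Module.Dual F ↥H → ↥H
  hA3 : ∀ ξ ∈ R, ∀ h : ↥H, ξ h = B (t ξ) h
  form : LinearMap.BilinForm F (Module.Dual F ↥H)
  hform : ∀ ξ ∈ R, ∀ η ∈ R, form ξ η = B (t ξ : L) (t η : L)
  hA4 : ∀ α ∈ R, form α α ≠ 0 → ∀ x ∈ Lrt α, ∀ y : L,
      ∃ n : ℕ, ((LieAlgebra.ad F L x) ^ n) y = 0
  hA5 : ∀ R1 R2 : Set (Module.Dual F ↥H), {ξ | ξ ∈ R ∧ form ξ ξ ≠ 0} = R1 ∪ R2 →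
      (∀ ξ ∈ R1, ∀ η ∈ R2, form ξ η = 0) → R1 = ∅ ∨ R2 = ∅
  hscale : ∀ β ∈ R, form β β ≠ 0 → ∃ q : ℚ, form β β = (q : F)
  hpos : ∃ α ∈ R, ∃ q : ℚ, 0 < q ∧ form α α = (q : F)

namespace LEALAData

variable {F L : Type*} [Field F] [CharZero F] [LieRing L] [LieAlgebra F L]
variable (S : LEALAData F L)

/-- Membership in root spaces is preserved by brackets. -/
theorem bracket_mem {ξ η : Module.Dual F ↥S.H} {x y : L}
    (hx : x ∈ S.Lrt ξ) (hy : y ∈ S.Lrt η) : ⁅x, y⁆ ∈ S.Lrt (ξ + η) := by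
  rw [S.hLrt] at hx hy ⊢
  intro h
  rw [leibniz_lie, hx h, hy h, smul_lie, lie_smul, LinearMap.add_apply, add_smul]

theorem mem_of_root_eq {ξ η : Module.Dual F ↥S.H} (h : ξ = η) {x : L}
    (hx : x ∈ S.Lrt ξ) : x ∈ S.Lrt η := h ▸ hx

theorem root_of_mem {ξ : Module.Dual F ↥S.H} {x : L} (hx : x ∈ S.Lrt ξ) (hx0 : x ≠ 0) :
    ξ ∈ S.R := by
  rw [S.hR]
  intro hbot
  exact hx0 (by simpa [hbot] using hx)

theorem not_root_zero {ξ : Module.Dual F ↥S.H} (h : ξ ∉ S.R) {x : L} (hx : x ∈ S.Lrt ξ) :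
    x = 0 := by
  rw [S.hR] at h
  simp only [Set.mem_setOf_eq, not_not] at h
  simpa [h] using hx

/-- Root spaces for `ξ, η` with `ξ + η ≠ 0` are orthogonal. -/
theorem orth {ξ η : Module.Dual F ↥S.H} (h : ξ + η ≠ 0) {x y : L}
    (hx : x ∈ S.Lrt ξ) (hy : y ∈ S.Lrt η) : S.B x y = 0 := by
  rw [S.hLrt] at hx hy
  obtain ⟨h₀, hh₀⟩ : ∃ h₀ : ↥S.H, (ξ + η) h₀ ≠ 0 := by
    by_contra hc
    push_neg at hc
    exact h (by ext h₀; exact hc h₀)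
  have key : (ξ + η) h₀ * S.B x y = 0 := by
    have e1 : S.B ⁅(h₀ : L), x⁆ y = ξ h₀ * S.B x y := by rw [hx h₀, S.hBsym, LinearMap.map_smul,
      smul_eq_mul, S.hBsym]
    have e2 : S.B ⁅(h₀ : L), x⁆ y = -(η h₀ * S.B x y) := by
      rw [← lie_skew, LinearMap.map_neg, LinearMap.neg_apply, S.hBinv, hy h₀,
        LinearMap.map_smul, smul_eq_mul]
    rw [LinearMap.add_apply, add_mul]
    linear_combination e2 - e1
  exact (mul_eq_zero.1 key).resolve_left hh₀

/-- If `x ∈ L_ξ` pairs trivially with `L_{-ξ}` then `x = 0`. -/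
theorem pair_nondeg {ξ : Module.Dual F ↥S.H} {x : L} (hx : x ∈ S.Lrt ξ)
    (hor : ∀ y ∈ S.Lrt (-ξ), S.B x y = 0) : x = 0 := by
  apply S.hA2.1
  intro y
  suffices hsuf : y ∈ LinearMap.ker (S.B x) by simpa using hsuf
  have hy : y ∈ (⊤ : Submodule F L) := trivial
  rw [← S.hdecomp] at hy
  refine Submodule.iSup_induction _ (motive := fun z => z ∈ LinearMap.ker (S.B x)) hy ?_ ?_ ?_
  · intro η z hz
    rcases eq_or_ne η (-ξ) with rfl | hne
    · exact LinearMap.mem_ker.2 (hor z hz)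
    · refine LinearMap.mem_ker.2 (S.orth ?_ hx hz)
      intro hc
      exact hne (by linear_combination (norm := module) hc)
  · simp
  · intro a b ha hb
    exact Submodule.add_mem _ ha hb

theorem neg_root {ξ : Module.Dual F ↥S.H} (h : ξ ∈ S.R) : -ξ ∈ S.R := by
  rw [S.hR] at h ⊢
  obtain ⟨x, hx, hx0⟩ := Submodule.exists_mem_ne_zero_of_ne_bot h
  intro hbot
  refine hx0 (S.pair_nondeg hx ?_)
  intro y hy
  rw [hbot, Submodule.mem_bot] at hy
  simp [hy]

theorem exists_pair {ξ : Module.Dual F ↥S.H} {x : L} (hx : x ∈ S.Lrt ξ) (hx0 : x ≠ 0) :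
    ∃ y ∈ S.Lrt (-ξ), S.B x y ≠ 0 := by
  by_contra hc
  push_neg at hc
  exact hx0 (S.pair_nondeg hx hc)

theorem eval_t {ξ η : Module.Dual F ↥S.H} (hξ : ξ ∈ S.R) (hη : η ∈ S.R) :
    ξ (S.t η) = S.form ξ η := by
  rw [S.hA3 ξ hξ (S.t η), S.hform ξ hξ η hη]

theorem form_comm {ξ η : Module.Dual F ↥S.H} (hξ : ξ ∈ S.R) (hη : η ∈ S.R) :
    S.form ξ η = S.form η ξ := by
  rw [S.hform ξ hξ η hη, S.hform η hη ξ hξ, S.hBsym]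

theorem t_mem_zero (ξ : Module.Dual F ↥S.H) : ((S.t ξ : L)) ∈ S.Lrt 0 := by
  rw [S.hA1]; exact (S.t ξ).2

/-- An element of `H` (as a subspace of `L`) that pairs trivially with `H` is zero. -/
theorem H_nondeg {z : L} (hz : z ∈ S.Lrt 0) (h : ∀ k : ↥S.H, S.B z k = 0) : z = 0 := by
  refine S.pair_nondeg hz ?_
  intro y hy
  rw [neg_zero, S.hA1] at hy
  exact h ⟨y, hy⟩

/-- `⁅x, y⁆ = B x y • t ξ` for `x ∈ L_ξ`, `y ∈ L_{-ξ}`, `ξ ∈ R`. -/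
theorem cart {ξ : Module.Dual F ↥S.H} (hξ : ξ ∈ S.R) {x y : L}
    (hx : x ∈ S.Lrt ξ) (hy : y ∈ S.Lrt (-ξ)) :
    ⁅x, y⁆ = S.B x y • (S.t ξ : L) := by
  have hmem : ⁅x, y⁆ ∈ S.Lrt 0 := S.mem_of_root_eq (by abel) (S.bracket_mem hx hy)
  have hz : (⁅x, y⁆ - S.B x y • (S.t ξ : L)) ∈ S.Lrt 0 :=
    Submodule.sub_mem _ hmem (Submodule.smul_mem _ _ (S.t_mem_zero ξ))
  have key : ∀ k : ↥S.H, S.B (⁅x, y⁆ - S.B x y • (S.t ξ : L)) k = 0 := by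
    intro k
    have e1 : S.B ⁅x, y⁆ k = S.B x y * ξ k := by
      rw [S.hBinv]
      have : ⁅y, (k : L)⁆ = ξ k • y := by
        rw [← lie_skew]
        rw [S.hLrt] at hy
        rw [hy k]
        simp
      rw [this, LinearMap.map_smul, smul_eq_mul, mul_comm]
    have e2 : S.B (S.B x y • (S.t ξ : L)) k = S.B x y * ξ k := by
      rw [LinearMap.map_smul₂, smul_eq_mul, S.hBsym, ← S.hA3 ξ hξ k]
    rw [LinearMap.map_sub, LinearMap.sub_apply, e1, e2, sub_self]
  have := S.H_nondeg hz key
  linear_combination (norm := module) this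

end LEALAData
section Part2
variable {F L : Type*} [Field F] [CharZero F] [LieRing L] [LieAlgebra F L]
variable (S : LEALAData F L)
namespace LEALAData

theorem mem_of_root_eq' {ξ η : Module.Dual F ↥S.H} (h : ξ = η) (hx : ξ ∈ S.R) : η ∈ S.R :=
  h ▸ hx

theorem form_neg_neg (α : Module.Dual F ↥S.H) : S.form (-α) (-α) = S.form α α := by
  simp

/-- Existence of an sl2-pair for an anisotropic root. -/
theorem sl2 {α : Module.Dual F ↥S.H} (hα : α ∈ S.R) (hq : S.form α α ≠ 0) :
    ∃ e f : L, e ∈ S.Lrt α ∧ f ∈ S.Lrt (-α) ∧ S.B e f = 2 / S.form α α ∧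
      ⁅e, f⁆ = (2 / S.form α α) • (S.t α : L) := by
  have hαbot : S.Lrt α ≠ ⊥ := by rw [S.hR] at hα; exact hα
  obtain ⟨e, he, he0⟩ := Submodule.exists_mem_ne_zero_of_ne_bot hαbot
  obtain ⟨y, hy, hBy⟩ := S.exists_pair he he0
  refine ⟨e, (2 / (S.form α α * S.B e y)) • y, he, Submodule.smul_mem _ _ hy, ?_, ?_⟩
  · rw [LinearMap.map_smul, smul_eq_mul]
    field_simp
  · rw [S.cart hα he (Submodule.smul_mem _ _ hy), LinearMap.map_smul, smul_eq_mul]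
    congr 1
    field_simp

theorem adpow_mem {η ξ : Module.Dual F ↥S.H} {f v : L} (hf : f ∈ S.Lrt η)
    (hv : v ∈ S.Lrt ξ) (k : ℕ) :
    ((LieAlgebra.ad F L f) ^ k) v ∈ S.Lrt (ξ + (k : F) • η) := by
  induction k with
  | zero => exact S.mem_of_root_eq (by push_cast; module) hv
  | succ n ih =>
    have hrw : ((LieAlgebra.ad F L f) ^ (n + 1)) v = ⁅f, ((LieAlgebra.ad F L f) ^ n) v⁆ := by
      rw [pow_succ']
      simp [Module.End.mul_apply]
    rw [hrw]
    refine S.mem_of_root_eq ?_ (S.bracket_mem hf ih)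
    push_cast
    module

/-- The master sl2 lemma: a nonzero primitive vector in a root space has a natural-number
weight, and the f-string below it is nonzero all the way down. -/
theorem primitive {α : Module.Dual F ↥S.H} (hα : α ∈ S.R) (hq : S.form α α ≠ 0)
    {e f : L} (hf : f ∈ S.Lrt (-α))
    (hef : ⁅e, f⁆ = (2 / S.form α α) • (S.t α : L))
    {ξ : Module.Dual F ↥S.H} (hξR : ξ ∈ S.R) {w : L} (hw : w ∈ S.Lrt ξ) (hw0 : w ≠ 0)
    (hew : ⁅e, w⁆ = 0) :
    ∃ Sn : ℕ, 2 * S.form ξ α = (Sn : F) * S.form α α ∧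
      ∀ k ≤ Sn, ((LieAlgebra.ad F L f) ^ k) w ≠ 0 := by
  classical
  set q : F := S.form α α with hqdef
  set lam : F := 2 * S.form ξ α / q with hlam
  set wk : ℕ → L := fun k => ((LieAlgebra.ad F L f) ^ k) w with hwk
  have hwk_succ : ∀ k, wk (k + 1) = ⁅f, wk k⁆ := by
    intro k
    simp only [hwk, pow_succ']
    simp [Module.End.mul_apply]
  have hwk_mem : ∀ k : ℕ, wk k ∈ S.Lrt (ξ + (k : F) • (-α)) := fun k => S.adpow_mem hf hw k
  -- the weight computation
  have htw : ∀ k : ℕ, ⁅(S.t α : L), wk k⁆ = (S.form ξ α - (k : F) * q) • wk k := by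
    intro k
    have := (S.hLrt _ (wk k)).1 (hwk_mem k) (S.t α)
    rw [this]
    congr 1
    have h1 : ξ (S.t α) = S.form ξ α := S.eval_t hξR hα
    have h2 : α (S.t α) = q := S.eval_t hα hα
    simp [h1, h2]
    ring
  have hbrk : ∀ k : ℕ, ⁅e, wk (k + 1)⁆ = ((k + 1 : F) * (lam - (k : F))) • wk k := by
    intro k
    induction k with
    | zero =>
      have hwk0 : ⁅e, wk 0⁆ = 0 := by
        show ⁅e, ((LieAlgebra.ad F L f) ^ 0) w⁆ = 0
        simpa using hew
      rw [hwk_succ 0, leibniz_lie, hef, smul_lie, htw 0, hwk0, lie_zero, add_zero, smul_smul]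
      congr 1
      simp only [Nat.cast_zero, mul_zero, sub_zero, hlam]
      field_simp
      ring
    | succ n ih =>
      rw [hwk_succ (n + 1), leibniz_lie, hef, smul_lie, htw (n + 1), ih, lie_smul,
        ← hwk_succ n, smul_smul, ← add_smul]
      congr 1
      have hqne : q ≠ 0 := hq
      rw [hlam]
      field_simp
      push_cast
      ring
  obtain ⟨n, hn⟩ := S.hA4 (-α) (S.neg_root hα) (by rw [S.form_neg_neg]; exact hq) f hf w
  have hex : ∃ k, wk k = 0 := ⟨n, hn⟩
  set T : ℕ := Nat.find hex with hT
  have hT0 : T ≠ 0 := by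
    intro h0
    have := Nat.find_spec hex
    rw [← hT, h0] at this
    exact hw0 (by simpa [hwk] using this)
  obtain ⟨Sn, hSn⟩ : ∃ Sn, T = Sn + 1 := ⟨T - 1, (Nat.succ_pred_eq_of_pos (Nat.pos_of_ne_zero hT0)).symm⟩
  have hzero : wk (Sn + 1) = 0 := by rw [← hSn]; exact Nat.find_spec hex
  have hnz : ∀ k ≤ Sn, wk k ≠ 0 := by
    intro k hk
    exact Nat.find_min hex (by omega)
  have hkey : ((Sn + 1 : F) * (lam - (Sn : F))) • wk Sn = 0 := by
    rw [← hbrk Sn, hzero, lie_zero]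
  have hscal : ((Sn : F) + 1) * (lam - (Sn : F)) = 0 := by
    rcases smul_eq_zero.1 hkey with h | h
    · exact h
    · exact absurd h (hnz Sn le_rfl)
  have hcast : ((Sn : F) + 1) ≠ 0 := Nat.cast_add_one_ne_zero Sn
  have hlameq : lam = (Sn : F) := by
    rcases mul_eq_zero.1 hscal with h | h
    · exact absurd h hcast
    · exact sub_eq_zero.1 h
  refine ⟨Sn, ?_, hnz⟩
  rw [hlam] at hlameq
  field_simp at hlameq
  linear_combination hlameq

/-- Integrality: `2(β,α)/(α,α) ∈ ℤ`. -/
theorem pairing_int {α β : Module.Dual F ↥S.H} (hα : α ∈ S.R) (hq : S.form α α ≠ 0)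
    (hβ : β ∈ S.R) :
    ∃ m : ℤ, 2 * S.form β α = (m : F) * S.form α α := by
  classical
  obtain ⟨e, f, he, hf, hBef, hef⟩ := S.sl2 hα hq
  have hβbot : S.Lrt β ≠ ⊥ := by rw [S.hR] at hβ; exact hβ
  obtain ⟨v, hv, hv0⟩ := Submodule.exists_mem_ne_zero_of_ne_bot hβbot
  obtain ⟨n, hn⟩ := S.hA4 α hα hq e he v
  have hex : ∃ k, ((LieAlgebra.ad F L e) ^ k) v = 0 := ⟨n, hn⟩
  set T : ℕ := Nat.find hex with hT
  have hT0 : T ≠ 0 := by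
    intro h0
    have := Nat.find_spec hex
    rw [← hT, h0] at this
    exact hv0 (by simpa using this)
  obtain ⟨K, hK⟩ : ∃ K, T = K + 1 := ⟨T - 1, (Nat.succ_pred_eq_of_pos (Nat.pos_of_ne_zero hT0)).symm⟩
  set w : L := ((LieAlgebra.ad F L e) ^ K) v with hwdef
  have hw0 : w ≠ 0 := Nat.find_min hex (by omega)
  have hwmem : w ∈ S.Lrt (β + (K : F) • α) := S.adpow_mem he hv K
  have hξR : (β + (K : F) • α) ∈ S.R := S.root_of_mem hwmem hw0
  have hew : ⁅e, w⁆ = 0 := by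
    have : ((LieAlgebra.ad F L e) ^ (K + 1)) v = 0 := by rw [← hK]; exact Nat.find_spec hex
    rw [pow_succ'] at this
    simpa [Module.End.mul_apply] using this
  obtain ⟨Sn, hSn, -⟩ := S.primitive hα hq hf hef hξR hwmem hw0 hew
  refine ⟨(Sn : ℤ) - 2 * K, ?_⟩
  have hexpand : S.form (β + (K : F) • α) α = S.form β α + (K : F) * S.form α α := by
    simp [LinearMap.map_add, LinearMap.map_smul, smul_eq_mul]
  rw [hexpand] at hSn
  push_cast
  linear_combination hSn

/-- If the pairing integer is negative then `β + α` is a root. -/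
theorem root_add {α β : Module.Dual F ↥S.H} (hα : α ∈ S.R) (hq : S.form α α ≠ 0)
    (hβ : β ∈ S.R) {m : ℤ} (hm : 2 * S.form β α = (m : F) * S.form α α) (hneg : m < 0) :
    β + α ∈ S.R := by
  classical
  obtain ⟨e, f, he, hf, hBef, hef⟩ := S.sl2 hα hq
  have hβbot : S.Lrt β ≠ ⊥ := by rw [S.hR] at hβ; exact hβ
  obtain ⟨v, hv, hv0⟩ := Submodule.exists_mem_ne_zero_of_ne_bot hβbot
  by_cases hev : ⁅e, v⁆ = 0
  · exfalso
    obtain ⟨Sn, hSn, -⟩ := S.primitive hα hq hf hef hβ hv hv0 hev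
    rw [hm] at hSn
    have : (m : F) = ((Sn : ℕ) : F) := by
      field_simp at hSn
      exact_mod_cast hSn
    have hmS : m = (Sn : ℤ) := by exact_mod_cast this
    omega
  · have := S.root_of_mem (S.bracket_mem he hv) hev
    exact S.mem_of_root_eq' (by abel) this

/-- If the pairing integer is positive then `β - α` is a root. -/
theorem root_sub {α β : Module.Dual F ↥S.H} (hα : α ∈ S.R) (hq : S.form α α ≠ 0)
    (hβ : β ∈ S.R) {m : ℤ} (hm : 2 * S.form β α = (m : F) * S.form α α) (hpos : 0 < m) :
    β - α ∈ S.R := by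
  have hq' : S.form (-α) (-α) ≠ 0 := by rw [S.form_neg_neg]; exact hq
  have hm' : 2 * S.form β (-α) = ((-m : ℤ) : F) * S.form (-α) (-α) := by
    rw [S.form_neg_neg]
    push_cast
    have : S.form β (-α) = -S.form β α := by simp
    rw [this]
    linear_combination -hm
  have := S.root_add (S.neg_root hα) hq' hβ hm' (by omega)
  exact S.mem_of_root_eq' (by abel) this

end LEALAData
end Part2
section Part3
variable {F L : Type*} [Field F] [CharZero F] [LieRing L] [LieAlgebra F L]
variable (S : LEALAData F L)
namespace LEALAData

theorem expand_add (a b : Module.Dual F ↥S.H) :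
    S.form (a + b) (a + b) = S.form a a + S.form a b + S.form b a + S.form b b := by
  simp only [map_add, LinearMap.add_apply]
  ring

theorem expand_sub (a b : Module.Dual F ↥S.H) :
    S.form (a - b) (a - b) = S.form a a - S.form a b - S.form b a + S.form b b := by
  simp only [map_sub, LinearMap.sub_apply]
  ring

theorem expand_cross (a b : Module.Dual F ↥S.H) :
    S.form (a + b) (b - a) = S.form a b - S.form a a + S.form b b - S.form b a := by
  simp only [map_add, map_sub, LinearMap.add_apply, LinearMap.sub_apply]
  ring

theorem expand_smul (c : F) (a b : Module.Dual F ↥S.H) :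
    S.form (c • a) (c • b) = c * c * S.form a b := by
  simp only [map_smul, LinearMap.smul_apply, smul_eq_mul]
  ring

/-- Doubling lemma: from a mixed-sign pair of anisotropic roots we get the doubled pair. -/
theorem double {ξ η : Module.Dual F ↥S.H} (hξ : ξ ∈ S.R) (hη : η ∈ S.R)
    {u w r : ℚ} (hu : S.form ξ ξ = (u : F)) (hw : S.form η η = (w : F))
    (hr : S.form ξ η = (r : F)) (hu0 : 0 < u) (hw0 : w < 0) (hr0 : 0 < r) :
    ((2 : F) • ξ) ∈ S.R ∧ ((2 : F) • η) ∈ S.R := by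
  have hune : S.form ξ ξ ≠ 0 := by rw [hu]; exact_mod_cast hu0.ne'
  have hwne : S.form η η ≠ 0 := by rw [hw]; exact_mod_cast hw0.ne
  have hsym : S.form η ξ = (r : F) := by rw [S.form_comm hη hξ, hr]
  -- the two pairing integers
  obtain ⟨a, ha⟩ := S.pairing_int hξ hune hη
  obtain ⟨b, hb⟩ := S.pairing_int hη hwne hξ
  have haq : 2 * r = (a : ℚ) * u := by
    have : ((2 * r : ℚ) : F) = (((a : ℚ) * u : ℚ) : F) := by push_cast; rw [← hsym, ← hu]; exact ha
    exact_mod_cast this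
  have hbq : 2 * r = (b : ℚ) * w := by
    have : ((2 * r : ℚ) : F) = (((b : ℚ) * w : ℚ) : F) := by push_cast; rw [← hr, ← hw]; exact hb
    exact_mod_cast this
  have ha1 : 1 ≤ a := by
    rcases lt_or_ge a 1 with h | h
    · exfalso
      have : (a : ℚ) ≤ 0 := by exact_mod_cast Int.lt_add_one_iff.mp h
      nlinarith
    · exact h
  have hb1 : b ≤ -1 := by
    rcases lt_or_ge (-1 : ℤ) b with h | h
    · exfalso
      have : 0 ≤ (b : ℚ) := by exact_mod_cast h
      nlinarith
    · exact h
  have haQ : (1 : ℚ) ≤ (a : ℚ) := by exact_mod_cast ha1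
  have hbQ : (b : ℚ) ≤ -1 := by exact_mod_cast hb1
  -- step roots
  have hsub : η - ξ ∈ S.R := S.root_sub hξ hune hη ha (by omega)
  have hadd : ξ + η ∈ S.R := S.root_add hη hwne hξ hb (by omega)
  -- norms of step roots
  have hNplus : S.form (ξ + η) (ξ + η) = ((u + 2 * r + w : ℚ) : F) := by
    rw [S.expand_add, hu, hw, hr, hsym]; push_cast; ring
  have hNminus : S.form (η - ξ) (η - ξ) = ((w - 2 * r + u : ℚ) : F) := by
    rw [S.expand_sub, hw, hu, hr, hsym]; push_cast; ring
  have hnp : 0 < u + 2 * r + w := by nlinarith [mul_nonneg (by linarith : (0:ℚ) ≤ -((b:ℚ)+1)) (by linarith : (0:ℚ) ≤ -w)]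
  have hnm : w - 2 * r + u < 0 := by nlinarith [mul_nonneg (by linarith : (0:ℚ) ≤ (a:ℚ) - 1) (by linarith : (0:ℚ) ≤ u)]
  have hNm_ne : S.form (η - ξ) (η - ξ) ≠ 0 := by rw [hNminus]; exact_mod_cast hnm.ne
  have hNp_ne : S.form (ξ + η) (ξ + η) ≠ 0 := by rw [hNplus]; exact_mod_cast hnp.ne'
  -- cross pairing
  have hcross : S.form (ξ + η) (η - ξ) = ((w - u : ℚ) : F) := by
    rw [S.expand_cross, hu, hw, hr, hsym]; push_cast; ring
  have hcross' : S.form (η - ξ) (ξ + η) = ((w - u : ℚ) : F) := by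
    rw [S.form_comm hsub hadd, hcross]
  -- pairing integers for the cross pair
  obtain ⟨m₁, hm₁⟩ := S.pairing_int hsub hNm_ne hadd
  have hm₁q : 2 * (w - u) = (m₁ : ℚ) * (w - 2 * r + u) := by
    have key : ((2 * (w - u) : ℚ) : F) = (((m₁:ℚ) * (w - 2*r + u) : ℚ) : F) := by
      have e1 : ((2 * (w - u) : ℚ) : F) = 2 * S.form (ξ + η) (η - ξ) := by
        rw [hcross]; push_cast; ring
      have e2 : (((m₁:ℚ) * (w - 2*r + u) : ℚ) : F) = (m₁:F) * S.form (η - ξ) (η - ξ) := by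
        rw [hNminus]; push_cast; ring
      rw [e1, e2]; exact hm₁
    exact_mod_cast key
  have hm₁pos : 0 < m₁ := by
    rcases lt_or_ge 0 m₁ with h | h
    · exact h
    · exfalso
      have h0 : (m₁ : ℚ) ≤ 0 := by exact_mod_cast h
      nlinarith
  obtain ⟨m₂, hm₂⟩ := S.pairing_int hadd hNp_ne hsub
  have hm₂q : 2 * (w - u) = (m₂ : ℚ) * (u + 2 * r + w) := by
    have key : ((2 * (w - u) : ℚ) : F) = (((m₂:ℚ) * (u + 2*r + w) : ℚ) : F) := by
      have e1 : ((2 * (w - u) : ℚ) : F) = 2 * S.form (η - ξ) (ξ + η) := by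
        rw [hcross']; push_cast; ring
      have e2 : (((m₂:ℚ) * (u + 2*r + w) : ℚ) : F) = (m₂:F) * S.form (ξ + η) (ξ + η) := by
        rw [hNplus]; push_cast; ring
      rw [e1, e2]; exact hm₂
    exact_mod_cast key
  have hm₂neg : m₂ < 0 := by
    rcases lt_or_ge m₂ 0 with h | h
    · exact h
    · exfalso
      have h0 : 0 ≤ (m₂ : ℚ) := by exact_mod_cast h
      nlinarith
  constructor
  · have := S.root_sub hsub hNm_ne hadd hm₁ hm₁pos
    exact S.mem_of_root_eq' (by module) this
  · have := S.root_add hadd hNp_ne hsub hm₂ hm₂neg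
    exact S.mem_of_root_eq' (by module) this

/-- No mixed-sign pairs: auxiliary False derivation. -/
theorem mixed_aux {ξ η : Module.Dual F ↥S.H} (hξ : ξ ∈ S.R) (hη : η ∈ S.R)
    {u w r : ℚ} (hu : S.form ξ ξ = (u : F)) (hw : S.form η η = (w : F))
    (hr : S.form ξ η = (r : F)) (hu0 : 0 < u) (hw0 : w < 0) (hr0 : 0 < r) : False := by
  have hmain : ∀ k : ℕ, (((2 ^ k : ℚ) : F) • ξ) ∈ S.R := by
    intro k
    suffices hsuf : (((2 ^ k : ℚ) : F) • ξ) ∈ S.R ∧ (((2 ^ k : ℚ) : F) • η) ∈ S.R from hsuf.1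
    induction k with
    | zero =>
      constructor
      · exact S.mem_of_root_eq' (by norm_num) hξ
      · exact S.mem_of_root_eq' (by norm_num) hη
    | succ n ih =>
      obtain ⟨h1, h2⟩ := ih
      have e1 : S.form (((2^n : ℚ):F) • ξ) (((2^n : ℚ):F) • ξ) = ((2^n * 2^n * u : ℚ) : F) := by
        rw [S.expand_smul, hu]; push_cast; ring
      have e2 : S.form (((2^n : ℚ):F) • η) (((2^n : ℚ):F) • η) = ((2^n * 2^n * w : ℚ) : F) := by
        rw [S.expand_smul, hw]; push_cast; ring
      have e3 : S.form (((2^n : ℚ):F) • ξ) (((2^n : ℚ):F) • η) = ((2^n * 2^n * r : ℚ) : F) := by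
        rw [S.expand_smul, hr]; push_cast; ring
      have h4 : (0:ℚ) < 2 ^ n * 2 ^ n := by positivity
      obtain ⟨d1, d2⟩ := S.double h1 h2 e1 e2 e3 (by nlinarith) (by nlinarith) (by nlinarith)
      constructor
      · refine S.mem_of_root_eq' ?_ d1
        rw [smul_smul]
        congr 1
        push_cast
        ring
      · refine S.mem_of_root_eq' ?_ d2
        rw [smul_smul]
        congr 1
        push_cast
        ring
  -- integrality for the original pair
  have hune : S.form ξ ξ ≠ 0 := by rw [hu]; exact_mod_cast hu0.ne'
  obtain ⟨a, ha⟩ := S.pairing_int hξ hune hη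
  have haq : 2 * r = (a : ℚ) * u := by
    have hsym : S.form η ξ = (r : F) := by rw [S.form_comm hη hξ, hr]
    have : ((2 * r : ℚ) : F) = (((a : ℚ) * u : ℚ) : F) := by push_cast; rw [← hsym, ← hu]; exact ha
    exact_mod_cast this
  have hapos : 0 < a := by
    rcases lt_or_ge 0 a with h | h
    · exact h
    · exfalso
      have : (a:ℚ) ≤ 0 := by exact_mod_cast h
      nlinarith
  set k : ℕ := a.natAbs with hkdef
  have hak : (a : ℤ) < 2 ^ k := by
    have h1 : a.natAbs < 2 ^ a.natAbs := Nat.lt_two_pow_self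
    have h2 : ((a.natAbs : ℤ)) < ((2 ^ a.natAbs : ℕ) : ℤ) := by exact_mod_cast h1
    have h3 : a = (a.natAbs : ℤ) := (Int.natAbs_of_nonneg (by omega)).symm
    rw [h3]
    simpa using h2
  have hξk : (((2 ^ k : ℚ) : F) • ξ) ∈ S.R := hmain k
  have hNk : S.form (((2^k : ℚ):F) • ξ) (((2^k : ℚ):F) • ξ) = ((2^k * 2^k * u : ℚ) : F) := by
    rw [S.expand_smul, hu]; push_cast; ring
  have hNk_ne : S.form (((2^k : ℚ):F) • ξ) (((2^k : ℚ):F) • ξ) ≠ 0 := by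
    rw [hNk]
    have : (0:ℚ) < 2^k * 2^k * u := by positivity
    exact_mod_cast this.ne'
  obtain ⟨mk, hmk⟩ := S.pairing_int hξk hNk_ne hη
  have hcrossk : S.form η (((2^k : ℚ):F) • ξ) = ((2^k * r : ℚ) : F) := by
    have hsym : S.form η ξ = (r : F) := by rw [S.form_comm hη hξ, hr]
    rw [map_smul, hsym, smul_eq_mul]
    push_cast
    ring
  have hmkq : 2 * (2^k * r) = (mk : ℚ) * (2^k * 2^k * u) := by
    have key : ((2 * (2^k * r) : ℚ) : F) = (((mk:ℚ) * (2^k * 2^k * u) : ℚ) : F) := by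
      have e1 : ((2 * (2^k * r) : ℚ) : F) = 2 * S.form η (((2^k : ℚ):F) • ξ) := by
        rw [hcrossk]; push_cast; ring
      have e2 : (((mk:ℚ) * (2^k * 2^k * u) : ℚ) : F)
          = (mk:F) * S.form (((2^k : ℚ):F) • ξ) (((2^k : ℚ):F) • ξ) := by
        rw [hNk]; push_cast; ring
      rw [e1, e2]; exact hmk
    exact_mod_cast key
  have hcancel : ((2:ℚ)^k) * u ≠ 0 := by positivity
  have hzero : ((a:ℚ) - (mk:ℚ) * 2^k) * (((2:ℚ)^k) * u) = 0 := by
    linear_combination hmkq - ((2:ℚ)^k) * haq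
  have hfac : (a:ℚ) - (mk:ℚ) * 2^k = 0 := by
    rcases mul_eq_zero.1 hzero with h | h
    · exact h
    · exact absurd h hcancel
  have haeqZ : a = mk * 2^k := by
    have : (a:ℚ) = (mk:ℚ) * 2^k := by linarith [hfac]
    exact_mod_cast this
  have hmkpos : 0 < mk := by
    rcases lt_or_ge 0 mk with h | h
    · exact h
    · exfalso
      have hb : (0:ℤ) < 2^k := by positivity
      nlinarith
  have hge : (2:ℤ)^k ≤ a := by
    calc (2:ℤ)^k = 1 * 2^k := by ring
    _ ≤ mk * 2^k := by
        have hb : (0:ℤ) < 2^k := by positivity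
        exact mul_le_mul_of_nonneg_right hmkpos hb.le
    _ = a := haeqZ.symm
  omega

/-- Theorem A: anisotropic roots of mixed sign are orthogonal. -/
theorem mixed_orth {ξ η : Module.Dual F ↥S.H} (hξ : ξ ∈ S.R) (hη : η ∈ S.R)
    {u w : ℚ} (hu : S.form ξ ξ = (u : F)) (hw : S.form η η = (w : F))
    (hu0 : 0 < u) (hw0 : w < 0) : S.form ξ η = 0 := by
  by_contra hne
  have hune : S.form ξ ξ ≠ 0 := by rw [hu]; exact_mod_cast hu0.ne'
  obtain ⟨a, ha⟩ := S.pairing_int hξ hune hη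
  -- ha : 2 * S.form η ξ = a * S.form ξ ξ
  have hsym : S.form η ξ = S.form ξ η := S.form_comm hη hξ
  have hrval : S.form ξ η = (((a:ℚ) * u / 2 : ℚ) : F) := by
    push_cast
    rw [← hu, ← hsym]
    linear_combination ha / 2
  have hane : a ≠ 0 := by
    intro h0
    rw [h0] at hrval
    simp at hrval
    exact hne hrval
  rcases lt_or_gt_of_ne hane with hlt | hgt
  · -- a < 0 : use -η
    have hη' : -η ∈ S.R := S.neg_root hη
    have hw' : S.form (-η) (-η) = (w : F) := by rw [S.form_neg_neg, hw]
    have hr' : S.form ξ (-η) = ((-((a:ℚ) * u / 2) : ℚ) : F) := by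
      rw [map_neg, hrval]
      push_cast
      ring
    have hrpos : 0 < -((a:ℚ) * u / 2) := by
      have : (a:ℚ) < 0 := by exact_mod_cast hlt
      nlinarith
    exact S.mixed_aux hξ hη' hu hw' hr' hu0 hw0 hrpos
  · have hrpos : 0 < (a:ℚ) * u / 2 := by
      have : (0:ℚ) < (a:ℚ) := by exact_mod_cast hgt
      nlinarith
    exact S.mixed_aux hξ hη hu hw hrval hu0 hw0 hrpos

end LEALAData
end Part3
section Part4
variable {F L : Type*} [Field F] [CharZero F] [LieRing L] [LieAlgebra F L]
variable (S : LEALAData F L)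
namespace LEALAData

/-- Theorem B: every root has nonnegative rational norm. -/
theorem norm_nonneg' {γ : Module.Dual F ↥S.H} (hγ : γ ∈ S.R) {q : ℚ}
    (hq : S.form γ γ = (q : F)) : 0 ≤ q := by
  by_contra hneg
  push_neg at hneg
  obtain ⟨α₀, hα₀, q₀, hq₀pos, hq₀⟩ := S.hpos
  set R1 : Set (Module.Dual F ↥S.H) :=
    {ξ | ξ ∈ S.R ∧ ∃ p : ℚ, 0 < p ∧ S.form ξ ξ = (p : F)} with hR1
  set R2 : Set (Module.Dual F ↥S.H) :=
    {ξ | ξ ∈ S.R ∧ ∃ p : ℚ, p < 0 ∧ S.form ξ ξ = (p : F)} with hR2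
  have hcover : {ξ | ξ ∈ S.R ∧ S.form ξ ξ ≠ 0} = R1 ∪ R2 := by
    ext ξ
    constructor
    · rintro ⟨hξR, hξne⟩
      obtain ⟨p, hp⟩ := S.hscale ξ hξR hξne
      have hpne : p ≠ 0 := by
        intro h0
        rw [h0] at hp
        simp at hp
        exact hξne hp
      rcases lt_or_gt_of_ne hpne with h | h
      · exact Or.inr ⟨hξR, p, h, hp⟩
      · exact Or.inl ⟨hξR, p, h, hp⟩
    · rintro (⟨hξR, p, hp0, hp⟩ | ⟨hξR, p, hp0, hp⟩) <;>
        refine ⟨hξR, ?_⟩ <;> rw [hp]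
      · exact_mod_cast hp0.ne'
      · exact_mod_cast hp0.ne
  have horth : ∀ ξ ∈ R1, ∀ η ∈ R2, S.form ξ η = 0 := by
    rintro ξ ⟨hξR, p, hp0, hp⟩ η ⟨hηR, p', hp'0, hp'⟩
    exact S.mixed_orth hξR hηR hp hp' hp0 hp'0
  rcases S.hA5 R1 R2 hcover horth with h | h
  · have : α₀ ∈ R1 := ⟨hα₀, q₀, hq₀pos, hq₀⟩
    rw [h] at this
    exact this
  · have : γ ∈ R2 := ⟨hγ, q, hneg, hq⟩
    rw [h] at this
    exact this

/-- helper for Theorem C : the case `⟨δ,α^∨⟩ = 1` leads to a contradiction. -/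
theorem iso_one {δ α : Module.Dual F ↥S.H} (hδ : δ ∈ S.R) (hδ0 : S.form δ δ = 0)
    (hα : α ∈ S.R) {u : ℚ} (hu : S.form α α = (u : F)) (hu0 : 0 < u)
    (ha : 2 * S.form δ α = S.form α α) : False := by
  have hune : S.form α α ≠ 0 := by rw [hu]; exact_mod_cast hu0.ne'
  have huF : (u : F) ≠ 0 := by exact_mod_cast hu0.ne'
  have hr : S.form δ α = ((u / 2 : ℚ) : F) := by
    push_cast
    rw [← hu]
    linear_combination ha / 2
  have hr' : S.form α δ = ((u / 2 : ℚ) : F) := by rw [S.form_comm hα hδ, hr]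
  -- δ + α is not a root
  have hnr1 : (δ + α) ∉ S.R := by
    intro hρ
    have hnorm : S.form (δ + α) (δ + α) = ((2 * u : ℚ) : F) := by
      rw [S.expand_add, hδ0, hu, hr, hr']
      push_cast
      ring
    have hne : S.form (δ + α) (δ + α) ≠ 0 := by
      rw [hnorm]
      have : (0:ℚ) < 2 * u := by linarith
      exact_mod_cast this.ne'
    obtain ⟨m, hm⟩ := S.pairing_int hρ hne hα
    -- form α (δ+α) = u/2 + u = 3u/2
    have hval : S.form α (δ + α) = ((3 * u / 2 : ℚ) : F) := by
      rw [map_add, hr', hu]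
      push_cast
      ring
    have hmq : 2 * (3 * u / 2) = (m : ℚ) * (2 * u) := by
      have key : ((2 * (3 * u / 2) : ℚ) : F) = (((m:ℚ) * (2 * u) : ℚ) : F) := by
        have e1 : ((2 * (3 * u / 2) : ℚ) : F) = 2 * S.form α (δ + α) := by
          rw [hval]; push_cast; ring
        have e2 : (((m:ℚ) * (2 * u) : ℚ) : F) = (m:F) * S.form (δ + α) (δ + α) := by
          rw [hnorm]; push_cast; ring
        rw [e1, e2]; exact hm
      exact_mod_cast key
    have h3 : (3 : ℚ) = 2 * (m:ℚ) := by
      have hcancel : (3:ℚ) * u = (2 * (m:ℚ)) * u := by linarith [hmq]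
      exact mul_right_cancel₀ hu0.ne' hcancel
    have : (3 : ℤ) = 2 * m := by exact_mod_cast h3
    omega
  -- 2δ - α is not a root
  have hnr2 : ((2 : F) • δ - α) ∉ S.R := by
    intro hρ
    have hnorm : S.form ((2:F) • δ - α) ((2:F) • δ - α) = ((-u : ℚ) : F) := by
      rw [S.expand_sub]
      simp only [map_smul, LinearMap.smul_apply, smul_eq_mul]
      rw [hδ0, hu, hr, hr']
      push_cast
      ring
    have := S.norm_nonneg' hρ hnorm
    linarith
  -- build the sl2 machinery
  obtain ⟨e, f, he, hf, hBef, hef⟩ := S.sl2 hα hune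
  have hδbot : S.Lrt δ ≠ ⊥ := by rw [S.hR] at hδ; exact hδ
  obtain ⟨v, hv, hv0⟩ := Submodule.exists_mem_ne_zero_of_ne_bot hδbot
  obtain ⟨v'', hv'', hBv''⟩ := S.exists_pair hv hv0
  set v' : L := (S.B v v'')⁻¹ • v'' with hv'def
  have hv' : v' ∈ S.Lrt (-δ) := Submodule.smul_mem _ _ hv''
  have hBvv' : S.B v v' = 1 := by
    rw [hv'def, LinearMap.map_smul, smul_eq_mul, inv_mul_cancel₀ hBv'']
  -- basic vanishing brackets
  have hev : ⁅e, v⁆ = 0 := by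
    refine S.not_root_zero ?_ (S.bracket_mem he hv)
    intro hmem
    exact hnr1 (S.mem_of_root_eq' (by abel) hmem)
  have hfv' : ⁅f, v'⁆ = 0 := by
    refine S.not_root_zero ?_ (S.bracket_mem hf hv')
    intro hmem
    have : δ + α ∈ S.R := by
      have := S.neg_root hmem
      exact S.mem_of_root_eq' (by abel) this
    exact hnr1 this
  -- the coroot bracket
  have htδ : ⁅v, v'⁆ = (S.t δ : L) := by
    rw [S.cart hδ hv hv', hBvv', one_smul]
  -- y and the bracket ⁅v, y⁆
  set y : L := ⁅e, v'⁆ with hydef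
  have hy : y ∈ S.Lrt (α + -δ) := S.bracket_mem he hv'
  have hvy : ⁅v, y⁆ = -(S.form α δ) • e := by
    have h1 : ⁅e, ⁅v, v'⁆⁆ = ⁅⁅e, v⁆, v'⁆ + ⁅v, ⁅e, v'⁆⁆ := leibniz_lie e v v'
    rw [hev, zero_lie, zero_add, htδ] at h1
    have h2 : ⁅e, (S.t δ : L)⁆ = -(S.form α δ) • e := by
      rw [← lie_skew, (S.hLrt α e).1 he (S.t δ), S.eval_t hα hδ]
      rw [neg_smul]
    rw [← h1, h2]
  -- z and its pairing with y
  set z : L := ⁅f, v⁆ with hzdef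
  have hz : z ∈ S.Lrt (-α + δ) := S.bracket_mem hf hv
  have hBzy : S.B z y = -1 := by
    have h1 : S.B ⁅f, v⁆ y = S.B f ⁅v, y⁆ := S.hBinv f v y
    rw [hvy] at h1
    rw [hzdef, h1, LinearMap.map_smul, smul_eq_mul, S.hBsym f e, hBef, hr', hu]
    push_cast
    field_simp
  have hz0 : z ≠ 0 := by
    intro h0
    rw [h0] at hBzy
    simp at hBzy
  have hzmem : z ∈ S.Lrt (δ - α) := S.mem_of_root_eq (by abel) hz
  have hεR : (δ - α) ∈ S.R := S.root_of_mem hzmem hz0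
  have hymem : y ∈ S.Lrt (-(δ - α)) := S.mem_of_root_eq (by abel) hy
  have hzy : ⁅z, y⁆ = -(S.t (δ - α) : L) := by
    rw [S.cart hεR hzmem hymem, hBzy, neg_smul, one_smul]
  have hez : ⁅e, z⁆ = v := by
    have h1 : ⁅e, ⁅f, v⁆⁆ = ⁅⁅e, f⁆, v⁆ + ⁅f, ⁅e, v⁆⁆ := leibniz_lie e f v
    rw [hev, lie_zero, add_zero, hef, smul_lie, (S.hLrt δ v).1 hv (S.t α),
      S.eval_t hδ hα] at h1
    rw [hzdef, h1, smul_smul, hr, hu]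
    have : (2 / (u:F)) * ((u/2 : ℚ) : F) = 1 := by
      push_cast
      field_simp
    rw [this, one_smul]
  -- the final Jacobi identity
  have hvz : ⁅v, z⁆ = 0 := by
    refine S.not_root_zero ?_ (S.bracket_mem hv hzmem)
    intro hmem
    refine hnr2 (S.mem_of_root_eq' ?_ hmem)
    module
  have hjac : ⁅v, ⁅z, y⁆⁆ = ⁅⁅v, z⁆, y⁆ + ⁅z, ⁅v, y⁆⁆ := leibniz_lie v z y
  rw [hvz, zero_lie, zero_add, hzy, hvy] at hjac
  -- LHS : ⁅v, -(t(δ-α))⁆ = (form δ (δ-α)) • v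
  have hLHS : ⁅v, -(S.t (δ - α) : L)⁆ = (S.form δ (δ - α)) • v := by
    rw [lie_neg, ← lie_skew, neg_neg, (S.hLrt δ v).1 hv (S.t (δ - α)), S.eval_t hδ hεR]
  have hRHS : ⁅z, -(S.form α δ) • e⁆ = (S.form α δ) • v := by
    have hze : ⁅z, e⁆ = -v := by rw [← lie_skew, hez]
    rw [lie_smul, hze, neg_smul, smul_neg, neg_neg]
  rw [hLHS, hRHS] at hjac
  -- form δ (δ - α) = -u/2, form α δ = u/2
  have hval : S.form δ (δ - α) = ((-(u/2) : ℚ) : F) := by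
    rw [map_sub, hδ0, hr]
    push_cast
    ring
  rw [hval, hr'] at hjac
  have hcoef : ((-(u/2) : ℚ) : F) - ((u/2 : ℚ) : F) ≠ 0 := by
    have : ((-(u/2) : ℚ) : F) - ((u/2 : ℚ) : F) = ((-u : ℚ) : F) := by push_cast; ring
    rw [this]
    have : (-u : ℚ) ≠ 0 := by linarith
    exact_mod_cast this
  have : (((-(u/2) : ℚ) : F) - ((u/2 : ℚ) : F)) • v = 0 := by
    rw [sub_smul, hjac, sub_self]
  rcases smul_eq_zero.1 this with h | h
  · exact hcoef h
  · exact hv0 h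

/-- Theorem C : isotropic roots are orthogonal to anisotropic roots. -/
theorem iso_aniso {δ α : Module.Dual F ↥S.H} (hδ : δ ∈ S.R) (hδ0 : S.form δ δ = 0)
    (hα : α ∈ S.R) (hαan : S.form α α ≠ 0) : S.form δ α = 0 := by
  by_contra hne
  obtain ⟨u, hu⟩ := S.hscale α hα hαan
  have hu0 : 0 < u := by
    have h1 : 0 ≤ u := S.norm_nonneg' hα hu
    rcases h1.lt_or_eq with h | h
    · exact h
    · exfalso; rw [← h] at hu; simp at hu; exact hαan hu
  obtain ⟨a, ha⟩ := S.pairing_int hα hαan hδ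
  have hane : a ≠ 0 := by
    intro h0
    rw [h0] at ha
    push_cast at ha
    refine hne ?_
    linear_combination ha / 2
  -- |a| ≤ 1 by Theorem B
  have hnot2 : ¬ (2 ≤ a) := by
    intro h2
    have hroot : δ - α ∈ S.R := S.root_sub hα hαan hδ ha (by omega)
    have hval : S.form δ α = (((a:ℚ) * u / 2 : ℚ) : F) := by
      push_cast
      rw [← hu]
      linear_combination ha / 2
    have hval' : S.form α δ = (((a:ℚ) * u / 2 : ℚ) : F) := by rw [S.form_comm hα hδ, hval]
    have hnorm : S.form (δ - α) (δ - α) = (((1 - (a:ℚ)) * u : ℚ) : F) := by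
      rw [S.expand_sub, hδ0, hu, hval, hval']
      push_cast
      ring
    have := S.norm_nonneg' hroot hnorm
    have haQ : (2:ℚ) ≤ (a:ℚ) := by exact_mod_cast h2
    nlinarith
  have hnotm2 : ¬ (a ≤ -2) := by
    intro h2
    have hroot : δ + α ∈ S.R := S.root_add hα hαan hδ ha (by omega)
    have hval : S.form δ α = (((a:ℚ) * u / 2 : ℚ) : F) := by
      push_cast
      rw [← hu]
      linear_combination ha / 2
    have hval' : S.form α δ = (((a:ℚ) * u / 2 : ℚ) : F) := by rw [S.form_comm hα hδ, hval]
    have hnorm : S.form (δ + α) (δ + α) = (((1 + (a:ℚ)) * u : ℚ) : F) := by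
      rw [S.expand_add, hδ0, hu, hval, hval']
      push_cast
      ring
    have := S.norm_nonneg' hroot hnorm
    have haQ : (a:ℚ) ≤ -2 := by exact_mod_cast h2
    nlinarith
  -- so a = 1 or a = -1
  rcases (by omega : a = 1 ∨ a = -1) with h1 | h1
  · rw [h1] at ha
    exact S.iso_one hδ hδ0 hα hu hu0 (by rw [ha]; push_cast; ring)
  · have hα' : -α ∈ S.R := S.neg_root hα
    have hu' : S.form (-α) (-α) = (u : F) := by rw [S.form_neg_neg, hu]
    have ha' : 2 * S.form δ (-α) = S.form (-α) (-α) := by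
      rw [S.form_neg_neg, map_neg]
      rw [h1] at ha
      push_cast at ha
      linear_combination -ha
    exact S.iso_one hδ hδ0 hα' hu' hu0 ha'

/-- Theorem C' : isotropic roots are mutually orthogonal. -/
theorem iso_iso {δ ε : Module.Dual F ↥S.H} (hδ : δ ∈ S.R) (hδ0 : S.form δ δ = 0)
    (hε : ε ∈ S.R) (hε0 : S.form ε ε = 0) : S.form δ ε = 0 := by
  by_contra hne
  have hsym : S.form ε δ = S.form δ ε := S.form_comm hε hδ
  -- δ + ε is not a root
  have hnr1 : (δ + ε) ∉ S.R := by
    intro hρ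
    have hnorm : S.form (δ + ε) (δ + ε) = 2 * S.form δ ε := by
      rw [S.expand_add, hδ0, hε0, hsym]
      ring
    have hν : S.form (δ + ε) (δ + ε) ≠ 0 := by
      rw [hnorm]
      intro h
      rcases mul_eq_zero.1 h with h | h
      · norm_num at h
      · exact hne h
    have := S.iso_aniso hδ hδ0 hρ hν
    rw [map_add, hδ0] at this
    rw [zero_add] at this
    exact hne this
  have hnr2 : (δ - ε) ∉ S.R := by
    intro hρ
    have hnorm : S.form (δ - ε) (δ - ε) = -(2 * S.form δ ε) := by
      rw [S.expand_sub, hδ0, hε0, hsym]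
      ring
    have hν : S.form (δ - ε) (δ - ε) ≠ 0 := by
      rw [hnorm]
      intro h
      rw [neg_eq_zero] at h
      rcases mul_eq_zero.1 h with h | h
      · norm_num at h
      · exact hne h
    have := S.iso_aniso hδ hδ0 hρ hν
    rw [map_sub, hδ0, zero_sub, neg_eq_zero] at this
    exact hne this
  -- Jacobi contradiction
  have hδbot : S.Lrt δ ≠ ⊥ := by rw [S.hR] at hδ; exact hδ
  obtain ⟨v, hv, hv0⟩ := Submodule.exists_mem_ne_zero_of_ne_bot hδbot
  obtain ⟨v'', hv'', hBv''⟩ := S.exists_pair hv hv0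
  set v' : L := (S.B v v'')⁻¹ • v'' with hv'def
  have hv' : v' ∈ S.Lrt (-δ) := Submodule.smul_mem _ _ hv''
  have hBvv' : S.B v v' = 1 := by
    rw [hv'def, LinearMap.map_smul, smul_eq_mul, inv_mul_cancel₀ hBv'']
  have htδ : ⁅v, v'⁆ = (S.t δ : L) := by rw [S.cart hδ hv hv', hBvv', one_smul]
  have hεbot : S.Lrt ε ≠ ⊥ := by rw [S.hR] at hε; exact hε
  obtain ⟨x, hx, hx0⟩ := Submodule.exists_mem_ne_zero_of_ne_bot hεbot
  have hxv : ⁅x, v⁆ = 0 := by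
    refine S.not_root_zero ?_ (S.bracket_mem hx hv)
    intro hmem
    exact hnr1 (S.mem_of_root_eq' (by abel) hmem)
  have hxv' : ⁅x, v'⁆ = 0 := by
    refine S.not_root_zero ?_ (S.bracket_mem hx hv')
    intro hmem
    have := S.neg_root hmem
    exact hnr2 (S.mem_of_root_eq' (by abel) this)
  have hjac : ⁅x, ⁅v, v'⁆⁆ = ⁅⁅x, v⁆, v'⁆ + ⁅v, ⁅x, v'⁆⁆ := leibniz_lie x v v'
  rw [hxv, hxv', zero_lie, lie_zero, add_zero, htδ] at hjac
  have hLHS : ⁅x, (S.t δ : L)⁆ = -(S.form ε δ) • x := by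
    rw [← lie_skew, (S.hLrt ε x).1 hx (S.t δ), S.eval_t hε hδ, neg_smul]
  rw [hLHS] at hjac
  have hne' : S.form ε δ ≠ 0 := by rw [hsym]; exact hne
  rcases smul_eq_zero.1 hjac with h | h
  · exact hne' (neg_eq_zero.1 h)
  · exact hx0 h

/-- Theorem D : the pairing integer of two anisotropic roots is at most 4 in absolute value. -/
theorem pairing_bound_aux {α β : Module.Dual F ↥S.H} (hα : α ∈ S.R) (hβ : β ∈ S.R)
    {u w : ℚ} (hu : S.form α α = (u : F)) (hw : S.form β β = (w : F))
    (hu0 : 0 < u) (hw0 : 0 < w) {m : ℤ} (hm : 2 * S.form β α = (m : F) * S.form α α)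
    (h5 : 5 ≤ m) : False := by
  have hune : S.form α α ≠ 0 := by rw [hu]; exact_mod_cast hu0.ne'
  have hwne : S.form β β ≠ 0 := by rw [hw]; exact_mod_cast hw0.ne'
  have hval : S.form β α = (((m:ℚ) * u / 2 : ℚ) : F) := by
    push_cast
    rw [← hu]
    linear_combination hm / 2
  have hval' : S.form α β = (((m:ℚ) * u / 2 : ℚ) : F) := by rw [S.form_comm hα hβ, hval]
  -- second pairing integer
  obtain ⟨b, hb⟩ := S.pairing_int hβ hwne hα
  have hbq : (m:ℚ) * u = (b:ℚ) * w := by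
    have key : (((m:ℚ) * u : ℚ) : F) = (((b:ℚ) * w : ℚ) : F) := by
      have e1 : (((m:ℚ) * u : ℚ) : F) = 2 * S.form α β := by rw [hval']; push_cast; ring
      have e2 : (((b:ℚ) * w : ℚ) : F) = (b:F) * S.form β β := by rw [hw]; push_cast; ring
      rw [e1, e2]; exact hb
    exact_mod_cast key
  have hb1 : 1 ≤ (b:ℚ) := by
    have hb0 : 0 < b := by
      rcases lt_or_ge 0 b with h | h
      · exact h
      · exfalso
        have : (b:ℚ) ≤ 0 := by exact_mod_cast h
        have hmQ : (5:ℚ) ≤ (m:ℚ) := by exact_mod_cast h5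
        nlinarith
    exact_mod_cast hb0
  -- the root β - 2α exists
  have hroot1 : β - α ∈ S.R := S.root_sub hα hune hβ hm (by omega)
  have hm2 : 2 * S.form (β - α) α = ((m - 2 : ℤ) : F) * S.form α α := by
    rw [map_sub, LinearMap.sub_apply]
    push_cast
    linear_combination hm
  have hroot2 : (β - α) - α ∈ S.R := S.root_sub hα hune hroot1 hm2 (by omega)
  have hnorm2 : S.form ((β - α) - α) ((β - α) - α) = ((w - 2*(m:ℚ)*u + 4*u : ℚ) : F) := by
    have expand : S.form ((β - α) - α) ((β - α) - α)
        = S.form β β - 4 * S.form β α + 4 * S.form α α := by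
      have h1 : S.form (β - α) α = S.form α (β - α) := S.form_comm hroot1 hα
      simp only [map_sub, LinearMap.sub_apply]
      have h2 : S.form β α = S.form α β := S.form_comm hβ hα
      linear_combination (2 : F) * h2
    rw [expand, hw, hval, hu]
    push_cast
    ring
  have hge := S.norm_nonneg' hroot2 hnorm2
  have hmQ : (5:ℚ) ≤ (m:ℚ) := by exact_mod_cast h5
  -- w ≤ m u from hbq, b ≥ 1 ; then 0 ≤ w - 2mu + 4u ≤ mu - 2mu + 4u = (4 - m) u < 0
  nlinarith [mul_pos hu0 hw0, mul_le_mul_of_nonneg_right hb1 hw0.le]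

theorem pairing_bound {α β : Module.Dual F ↥S.H} (hα : α ∈ S.R) (hβ : β ∈ S.R)
    {u w : ℚ} (hu : S.form α α = (u : F)) (hw : S.form β β = (w : F))
    (hu0 : 0 < u) (hw0 : 0 < w) {m : ℤ} (hm : 2 * S.form β α = (m : F) * S.form α α) :
    -4 ≤ m ∧ m ≤ 4 := by
  constructor
  · by_contra h
    push_neg at h
    have hβ' : -β ∈ S.R := S.neg_root hβ
    have hw' : S.form (-β) (-β) = (w : F) := by rw [S.form_neg_neg, hw]
    have hm' : 2 * S.form (-β) α = ((-m : ℤ) : F) * S.form α α := by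
      rw [map_neg, LinearMap.neg_apply]
      push_cast
      linear_combination -hm
    exact S.pairing_bound_aux hα hβ' hu hw' hu0 hw0 hm' (by omega)
  · by_contra h
    push_neg at h
    exact S.pairing_bound_aux hα hβ hu hw hu0 hw0 hm (by omega)

end LEALAData
end Part4
section Part5
variable {F L : Type*} [Field F] [CharZero F] [LieRing L] [LieAlgebra F L]
variable (S : LEALAData F L)
namespace LEALAData

/-- The image of the root system in the quotient is finite. -/
theorem main_finite {Vbar : Type*} [AddCommGroup Vbar] [Module ℚ Vbar]
    (π : Module.Dual F ↥S.H → Vbar)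
    (hπadd : ∀ v w : Module.Dual F ↥S.H, π (v + w) = π v + π w)
    (hπker : ∀ v : Module.Dual F ↥S.H,
      (∃ (n : ℕ) (q : Fin n → ℚ) (ζ : Fin n → Module.Dual F ↥S.H),
        (∀ i, ζ i ∈ S.R) ∧ v = ∑ i, (q i : F) • ζ i) →
      (π v = 0 ↔ ∀ u ∈ S.R, S.form v u = 0))
    (hfd : FiniteDimensional F ↥S.H) :
    (π '' S.R).Finite := by
  classical
  haveI := hfd
  haveI : FiniteDimensional F (Module.Dual F ↥S.H) := inferInstance
  -- kill a root whose form-values vanish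
  have hπ1 : ∀ γ ∈ S.R, (∀ u ∈ S.R, S.form γ u = 0) → π γ = 0 := by
    intro γ hγ hall
    refine (hπker γ ⟨1, fun _ => 1, fun _ => γ, fun _ => hγ, by simp⟩).2 hall
  -- two roots with identical form-values have the same image
  have hπsub : ∀ γ ∈ S.R, ∀ γ' ∈ S.R, (∀ u ∈ S.R, S.form γ u = S.form γ' u) →
      π γ = π γ' := by
    intro γ hγ γ' hγ' hall
    have hrep : ∃ (n : ℕ) (q : Fin n → ℚ) (ζ : Fin n → Module.Dual F ↥S.H),
        (∀ i, ζ i ∈ S.R) ∧ γ - γ' = ∑ i, (q i : F) • ζ i := by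
      refine ⟨2, ![1, -1], ![γ, γ'], ?_, ?_⟩
      · intro i
        fin_cases i <;> assumption
      · simp only [Fin.sum_univ_two, Matrix.cons_val_zero, Matrix.cons_val_one, Matrix.head_cons]
        push_cast
        module
    have hz : π (γ - γ') = 0 := by
      refine (hπker _ hrep).2 ?_
      intro u hu
      rw [map_sub, LinearMap.sub_apply, hall u hu, sub_self]
    have : π γ = π (γ - γ') + π γ' := by
      rw [← hπadd]
      congr 1
      abel
    rw [this, hz, zero_add]
  -- isotropic roots die in the quotient
  have hiso : ∀ γ ∈ S.R, S.form γ γ = 0 → π γ = 0 := by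
    intro γ hγ hγ0
    refine hπ1 γ hγ ?_
    intro u hu
    by_cases hu0 : S.form u u = 0
    · exact S.iso_iso hγ hγ0 hu hu0
    · exact S.iso_aniso hγ hγ0 hu hu0
  -- the set of anisotropic roots
  set P : Set (Module.Dual F ↥S.H) := {γ | γ ∈ S.R ∧ S.form γ γ ≠ 0} with hP
  set W : Submodule F (Module.Dual F ↥S.H) := Submodule.span F P with hW
  -- find a finite subset of P spanning W
  have hWfg : W.FG := IsNoetherian.noetherian W
  have hcomp := (Submodule.fg_iff_compact W).1 hWfg
  have hle : W ≤ ⨆ x : P, Submodule.span F {(x : Module.Dual F ↥S.H)} := by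
    rw [hW, Submodule.span_eq_iSup_of_singleton_spans, iSup_subtype]
  obtain ⟨sfin, hsfin⟩ := CompleteLattice.IsCompactElement.exists_finset_of_le_iSup _ hcomp
    (fun x : P => Submodule.span F {(x : Module.Dual F ↥S.H)}) hle
  set Tset : Set (Module.Dual F ↥S.H) :=
    (fun x : ↥P => (x : Module.Dual F ↥S.H)) '' ↑sfin with hTset
  have hWT : W ≤ Submodule.span F Tset := by
    refine le_trans hsfin ?_
    refine iSup_le fun i => iSup_le fun hi => ?_
    refine Submodule.span_mono ?_
    intro x hx
    rw [Set.mem_singleton_iff] at hx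
    subst hx
    exact ⟨i, hi, rfl⟩
  -- data for anisotropic roots: positive rational norms
  have hnorm : ∀ γ ∈ P, ∃ q : ℚ, 0 < q ∧ S.form γ γ = (q : F) := by
    rintro γ ⟨hγR, hγne⟩
    obtain ⟨q, hq⟩ := S.hscale γ hγR hγne
    refine ⟨q, ?_, hq⟩
    rcases (S.norm_nonneg' hγR hq).lt_or_eq with h | h
    · exact h
    · exfalso
      rw [← h] at hq
      simp at hq
      exact hγne hq
  -- the pattern of pairing integers for γ ∈ P against anisotropic test roots
  have hpat : ∀ γ ∈ P, ∀ γ' ∈ P, ∃ m : ℤ,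
      2 * S.form γ γ' = (m : F) * S.form γ' γ' ∧ -4 ≤ m ∧ m ≤ 4 := by
    intro γ hγ γ' hγ'
    obtain ⟨u, hu0, hu⟩ := hnorm γ' hγ'
    obtain ⟨w, hw0, hw⟩ := hnorm γ hγ
    obtain ⟨m, hm⟩ := S.pairing_int hγ'.1 hγ'.2 hγ.1
    obtain ⟨h1, h2⟩ := S.pairing_bound hγ'.1 hγ.1 hu hw hu0 hw0 hm
    exact ⟨m, hm, h1, h2⟩
  -- select representatives and patterns
  choose γsel hγselP hγselπ using
    (fun x : ↥(π '' P) => (Set.mem_image _ _ _).1 x.2)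
  choose pat hpat1 hpat2 hpat3 using hpat
  set Θ : ↥(π '' P) → (↥sfin → ↥(Finset.Icc (-4 : ℤ) 4)) := fun x i =>
    ⟨pat (γsel x) (hγselP x) ((i : ↥P) : Module.Dual F ↥S.H) (i : ↥P).2,
      Finset.mem_Icc.2 ⟨hpat2 _ _ _ _, hpat3 _ _ _ _⟩⟩ with hΘ
  have hinj : Function.Injective Θ := by
    intro x y hxy
    have hforms : ∀ i : ↥sfin,
        S.form (γsel x) ((i : ↥P) : Module.Dual F ↥S.H)
          = S.form (γsel y) ((i : ↥P) : Module.Dual F ↥S.H) := by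
      intro i
      have := congrFun hxy i
      simp only [hΘ, Subtype.mk_eq_mk] at this
      have e1 := hpat1 (γsel x) (hγselP x) ((i : ↥P) : Module.Dual F ↥S.H) (i : ↥P).2
      have e2 := hpat1 (γsel y) (hγselP y) ((i : ↥P) : Module.Dual F ↥S.H) (i : ↥P).2
      rw [this] at e1
      have heq : 2 * S.form (γsel x) ((i : ↥P) : Module.Dual F ↥S.H)
          = 2 * S.form (γsel y) ((i : ↥P) : Module.Dual F ↥S.H) := by rw [e1, e2]
      have h2 : (2 : F) ≠ 0 := two_ne_zero
      exact mul_left_cancel₀ h2 heq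
    -- extend to all of W by linearity
    have hEq : Set.EqOn (S.form (γsel x)) (S.form (γsel y)) Tset := by
      rintro v ⟨z, hz, rfl⟩
      exact hforms ⟨z, hz⟩
    have hspan : ∀ v ∈ Submodule.span F Tset,
        S.form (γsel x) v = S.form (γsel y) v := by
      intro v hv
      exact LinearMap.eqOn_span hEq hv
    -- all roots
    have hall : ∀ u ∈ S.R, S.form (γsel x) u = S.form (γsel y) u := by
      intro u hu
      by_cases hu0 : S.form u u = 0
      · have e1 : S.form u (γsel x) = 0 := S.iso_aniso hu hu0 (hγselP x).1 (hγselP x).2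
        have e2 : S.form u (γsel y) = 0 := S.iso_aniso hu hu0 (hγselP y).1 (hγselP y).2
        rw [S.form_comm (hγselP x).1 hu, S.form_comm (hγselP y).1 hu, e1, e2]
      · have huP : u ∈ P := ⟨hu, hu0⟩
        have huW : u ∈ W := Submodule.subset_span huP
        exact hspan u (hWT huW)
    have := hπsub (γsel x) (hγselP x).1 (γsel y) (hγselP y).1 hall
    have hxy' : (x : Vbar) = (y : Vbar) := by
      rw [← hγselπ x, ← hγselπ y, this]
    exact Subtype.ext hxy'
  haveI : Finite ↥(π '' P) := Finite.of_injective Θ hinj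
  have hPfin : (π '' P).Finite := Set.finite_coe_iff.1 inferInstance
  -- conclude
  have hsub : π '' S.R ⊆ (π '' P) ∪ {0} := by
    rintro x ⟨γ, hγ, rfl⟩
    by_cases h0 : S.form γ γ = 0
    · exact Or.inr (by simp [hiso γ hγ h0])
    · exact Or.inl ⟨γ, ⟨hγ, h0⟩, rfl⟩
  exact Set.Finite.subset (hPfin.union (Set.finite_singleton 0)) hsub

end LEALAData
end Part5
theorem proposition_3_7_part2
    {F L : Type*} [Field F] [CharZero F] [LieRing L] [LieAlgebra F L]
    (H : LieSubalgebra F L)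
    (habelian : ∀ x y : ↥H, ⁅x, y⁆ = 0)
    -- root spaces with respect to H
    (Lrt : Module.Dual F ↥H → Submodule F L)
    (hLrt : ∀ ξ (x : L), x ∈ Lrt ξ ↔ ∀ h : ↥H, ⁅(h : L), x⁆ = ξ h • x)
    -- root space decomposition L = ⊕_{ξ} L_ξ
    (hdecomp : ⨆ ξ, Lrt ξ = ⊤) (hindep : iSupIndep Lrt)
    -- the set of roots
    (R : Set (Module.Dual F ↥H))
    (hR : R = {ξ | Lrt ξ ≠ ⊥})
    -- a symmetric invariant bilinear form on L
    (B : LinearMap.BilinForm F L)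
    (hBsym : ∀ x y : L, B x y = B y x)
    (hBinv : ∀ x y z : L, B ⁅x, y⁆ z = B x ⁅y, z⁆)
    -- (A1) H is self-centralizing
    (hA1 : Lrt 0 = H.toSubmodule)
    -- (A2) B is nondegenerate
    (hA2 : B.Nondegenerate)
    -- (A3) every root is represented by some t_ξ ∈ H
    (t : Module.Dual F ↥H → ↥H)
    (hA3 : ∀ ξ ∈ R, ∀ h : ↥H, ξ h = B (t ξ) h)
    -- the induced form, extended bilinearly to the span of R
    (form : LinearMap.BilinForm F (Module.Dual F ↥H))
    (hform : ∀ ξ ∈ R, ∀ η ∈ R, form ξ η = B (t ξ : L) (t η : L))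
    -- (A4) ad x is locally nilpotent for x in an anisotropic root space
    (hA4 : ∀ α ∈ R, form α α ≠ 0 → ∀ x ∈ Lrt α, ∀ y : L,
      ∃ n : ℕ, ((LieAlgebra.ad F L x) ^ n) y = 0)
    -- (A5) R^× is irreducible
    (hA5 : ∀ R1 R2 : Set (Module.Dual F ↥H), {ξ | ξ ∈ R ∧ form ξ ξ ≠ 0} = R1 ∪ R2 →
      (∀ ξ ∈ R1, ∀ η ∈ R2, form ξ η = 0) → R1 = ∅ ∨ R2 = ∅)
    -- the form is scaled: (β,β) is rational for all β ∈ R^×, positive for some α ∈ R^×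
    (hscale : ∀ β ∈ R, form β β ≠ 0 → ∃ q : ℚ, form β β = (q : F))
    (hpos : ∃ α ∈ R, ∃ q : ℚ, 0 < q ∧ form α α = (q : F))
    -- V̄ = V/V⁰ : a ℚ-vector space together with the canonical projection π of the
    -- ℚ-span V of R modulo the radical V⁰ of the induced form
    (Vbar : Type*) [AddCommGroup Vbar] [Module ℚ Vbar]
    (π : Module.Dual F ↥H → Vbar)
    (hπadd : ∀ v w : Module.Dual F ↥H, π (v + w) = π v + π w)
    (hπsmul : ∀ (q : ℚ) (v : Module.Dual F ↥H), π ((q : F) • v) = q • π v)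
    (hπker : ∀ v : Module.Dual F ↥H,
      (∃ (n : ℕ) (q : Fin n → ℚ) (ζ : Fin n → Module.Dual F ↥H),
        (∀ i, ζ i ∈ R) ∧ v = ∑ i, (q i : F) • ζ i) →
      (π v = 0 ↔ ∀ u ∈ R, form v u = 0))
    (hπsurj : Submodule.span ℚ (π '' R) = ⊤)
    -- L is an EALA: H is finite-dimensional over F
    (hfd : FiniteDimensional F ↥H) :
    -- R̄ is finite, and consequently V̄ is finite-dimensional over ℚ
    (π '' R).Finite ∧ FiniteDimensional ℚ Vbar := by
  let S : LEALAData F L :=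
    ⟨H, Lrt, hLrt, hdecomp, R, hR, B, hBsym, hBinv, hA1, hA2, t, hA3, form, hform,
      hA4, hA5, hscale, hpos⟩
  have hfin : (π '' R).Finite := S.main_finite π hπadd hπker hfd
  refine ⟨hfin, ?_⟩
  have hsp : FiniteDimensional ℚ (Submodule.span ℚ (π '' R)) :=
    FiniteDimensional.span_of_finite ℚ hfin
  rw [hπsurj] at hsp
  exact Submodule.topEquiv.finiteDimensional
end
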